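/- arXiv:2504.18108 — 11 statements merged into one kernel-verified Lean document; each statement's English description precedes it below -/
import Mathlib

section
/- Let Σ = {a, b, a⁻¹, b⁻¹} be a four-letter alphabet with involution x ↦ x⁻¹, and let f : Σ × Σ → Λ satisfy: (i) f(x,y) = f(y,x) = f(y⁻¹,x⁻¹) and f(x,x⁻¹) = 0 for all x,y ∈ Σ; (ii) either 2f(a,b) = 2f(a,b⁻¹) > f(a,a) + f(b,b), or 2·max{f(a,b), f(a,b⁻¹)} = f(a,a) + f(b,b); (iii) f(a,a) > 0, f(b,b) > 0, and |f(a,a) − f(b,b)| < 2·min{f(a,b), f(a,b⁻¹)}. Then f(y⁻¹, z) ≤ f(x,y) + f(x,z) for all x, y, z ∈ Σ, and this inequality is strict if and only if y ≠ x⁻¹ and z ≠ x⁻¹. -/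
/-- The four-letter alphabet `Σ = {a, b, a⁻¹, b⁻¹}`: a letter is a pair
`(generator, sign)`, where `(false, true) = a`, `(false, false) = a⁻¹`,
`(true, true) = b`, `(true, false) = b⁻¹`. -/
abbrev Letter := Bool × Bool

/-- The involution `x ↦ x⁻¹` on the alphabet. -/
def Letter.inv (x : Letter) : Letter := (x.1, !x.2)

/-- Evaluation of a letter at a pair of group elements `a, b`. -/
def Letter.eval {G : Type*} [Group G] (a b : G) : Letter → G
  | (false, true) => a
  | (false, false) => a⁻¹
  | (true, true) => b
  | (true, false) => b⁻¹

/-- The letter `a`. -/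
def la : Letter := (false, true)
/-- The letter `b`. -/
def lb : Letter := (true, true)

private lemma half_lt {Λ : Type*} [AddCommGroup Λ] [LinearOrder Λ] [IsOrderedAddMonoid Λ] {a b : Λ}
    (h : a + a < b + b) : a < b := by
  by_contra hc
  exact absurd h (not_lt.2 (add_le_add (not_lt.1 hc) (not_lt.1 hc)))

private lemma aux2 {Λ : Type*} [AddCommGroup Λ] [LinearOrder Λ] [IsOrderedAddMonoid Λ] {A B P Q : Λ}
    (hA : 0 < A) (hB : 0 < B) (h : P ≤ Q)
    (hmax : Q + Q = A + B) (h1 : A - B < P + P) (h2 : B - A < P + P) :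
    0 < P ∧ 0 < Q ∧ Q < A + P ∧ P < A + Q ∧ Q < B + P ∧ P < B + Q ∧
      A < P + Q ∧ B < P + Q := by
  have h1' : A < (P + P) + B := sub_lt_iff_lt_add.1 h1
  have h2' : B < (P + P) + A := sub_lt_iff_lt_add.1 h2
  have hP0 : 0 < P := by
    by_contra hc
    have hpp : P + P ≤ 0 := add_nonpos (not_lt.1 hc) (not_lt.1 hc)
    have : A < B := by
      calc A < (P + P) + B := h1'
        _ ≤ 0 + B := add_le_add_left hpp B
        _ = B := zero_add B
    have : B < B := lt_trans (by
      calc B < (P + P) + A := h2'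
        _ ≤ 0 + A := add_le_add_left hpp A
        _ = A := zero_add A) this
    exact lt_irrefl _ this
  have hQ0 : 0 < Q := lt_of_lt_of_le hP0 h
  refine ⟨hP0, hQ0, ?_, ?_, ?_, ?_, ?_, ?_⟩
  · -- Q < A + P
    refine half_lt ?_
    calc Q + Q = A + B := hmax
      _ < A + ((P + P) + A) := add_lt_add_right h2' A
      _ = (A + P) + (A + P) := by abel
  · exact lt_of_le_of_lt h (lt_add_of_pos_left Q hA)
  · -- Q < B + P
    refine half_lt ?_
    calc Q + Q = A + B := hmax
      _ < ((P + P) + B) + B := add_lt_add_left h1' B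
      _ = (B + P) + (B + P) := by abel
  · exact lt_of_le_of_lt h (lt_add_of_pos_left Q hB)
  · -- A < P + Q
    refine half_lt ?_
    calc A + A < ((P + P) + B) + A := add_lt_add_left h1' A
      _ = (P + P) + (A + B) := by abel
      _ = (P + P) + (Q + Q) := by rw [hmax]
      _ = (P + Q) + (P + Q) := by abel
  · -- B < P + Q
    refine half_lt ?_
    calc B + B < ((P + P) + A) + B := add_lt_add_left h2' B
      _ = (P + P) + (A + B) := by abel
      _ = (P + P) + (Q + Q) := by rw [hmax]
      _ = (P + Q) + (P + Q) := by abel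

private lemma aux1 {Λ : Type*} [AddCommGroup Λ] [LinearOrder Λ] [IsOrderedAddMonoid Λ] {A B P Q : Λ}
    (hA : 0 < A) (hB : 0 < B)
    (hii : (P = Q ∧ A + B < P + P) ∨ max P Q + max P Q = A + B)
    (habs : |A - B| < min P Q + min P Q) :
    0 < P ∧ 0 < Q ∧ Q < A + P ∧ P < A + Q ∧ Q < B + P ∧ P < B + Q ∧
      A < P + Q ∧ B < P + Q := by
  rcases hii with ⟨heq, hlt⟩ | hmax
  · subst heq
    rw [min_self] at habs
    have hP0 : 0 < P := by
      by_contra hc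
      have hpp : P + P ≤ 0 := add_nonpos (not_lt.1 hc) (not_lt.1 hc)
      exact absurd (lt_of_lt_of_le habs hpp) (not_lt.2 (abs_nonneg _))
    have hAP : A < P + P := lt_trans (lt_add_of_pos_right A hB) hlt
    have hBP : B < P + P := lt_trans (lt_add_of_pos_left B hA) hlt
    exact ⟨hP0, hP0, lt_add_of_pos_left P hA, lt_add_of_pos_left P hA,
      lt_add_of_pos_left P hB, lt_add_of_pos_left P hB, hAP, hBP⟩
  · rcases le_total P Q with h | h
    · rw [max_eq_right h] at hmax
      rw [min_eq_left h] at habs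
      rcases abs_sub_lt_iff.1 habs with ⟨h1, h2⟩
      exact aux2 hA hB h hmax h1 h2
    · rw [max_eq_left h] at hmax
      rw [min_eq_right h] at habs
      rcases abs_sub_lt_iff.1 habs with ⟨h1, h2⟩
      obtain ⟨q0, p0, kp, kq, kp', kq', ka, kb⟩ := aux2 hA hB h hmax h1 h2
      exact ⟨p0, q0, kq, kp, kq', kp', (add_comm Q P) ▸ ka, (add_comm Q P) ▸ kb⟩

/-- Lemma `lem:technical`: if `f : Σ × Σ → Λ` satisfies (i)–(iii),
then `f(y⁻¹,z) ≤ f(x,y) + f(x,z)` for all `x,y,z ∈ Σ`, with strict inequality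
iff `y ≠ x⁻¹` and `z ≠ x⁻¹`. -/
theorem statement4 {Λ : Type*} [AddCommGroup Λ] [LinearOrder Λ] [IsOrderedAddMonoid Λ] [Nontrivial Λ]
    (f : Letter → Letter → Λ)
    (hsymm : ∀ x y : Letter, f x y = f y x)
    (hinvol : ∀ x y : Letter, f x y = f y.inv x.inv)
    (hzero : ∀ x : Letter, f x x.inv = 0)
    (hii : (f la lb = f la lb.inv ∧ f la la + f lb lb < f la lb + f la lb) ∨
      max (f la lb) (f la lb.inv) + max (f la lb) (f la lb.inv) = f la la + f lb lb)
    (hiii : 0 < f la la ∧ 0 < f lb lb ∧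
      |f la la - f lb lb| < min (f la lb) (f la lb.inv) + min (f la lb) (f la lb.inv)) :
    ∀ x y z : Letter,
      f y.inv z ≤ f x y + f x z ∧
      (f y.inv z < f x y + f x z ↔ y ≠ x.inv ∧ z ≠ x.inv) := by
  obtain ⟨hA, hB, habs⟩ := hiii
  simp only [la, lb, Letter.inv, Bool.not_true, Bool.not_false] at *
  obtain ⟨hP0, hQ0, k1, k2, k3, k4, k5, k6⟩ := aux1 hA hB hii habs
  -- table of values
  have e1 : f (false, false) (false, false) = f (false, true) (false, true) := by
    rw [hinvol (false, false) (false, false)]; rfl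
  have e2 : f (true, false) (true, false) = f (true, true) (true, true) := by
    rw [hinvol (true, false) (true, false)]; rfl
  have e3 : f (false, true) (false, false) = 0 := hzero (false, true)
  have e4 : f (false, false) (false, true) = 0 := by rw [hsymm]; exact e3
  have e5 : f (true, true) (true, false) = 0 := hzero (true, true)
  have e6 : f (true, false) (true, true) = 0 := by rw [hsymm]; exact e5
  have e7 : f (true, true) (false, true) = f (false, true) (true, true) := hsymm _ _
  have e8 : f (false, false) (true, false) = f (false, true) (true, true) := by
    rw [hinvol (false, false) (true, false)]; exact hsymm _ _
  have e9 : f (true, false) (false, false) = f (false, true) (true, true) := by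
    rw [hsymm]; exact e8
  have e10 : f (true, false) (false, true) = f (false, true) (true, false) := hsymm _ _
  have e11 : f (false, false) (true, true) = f (false, true) (true, false) := by
    rw [hinvol (false, false) (true, true)]; exact hsymm _ _
  have e12 : f (true, true) (false, false) = f (false, true) (true, false) := by
    rw [hsymm]; exact e11
  set A := f (false, true) (false, true) with hAdef
  set B := f (true, true) (true, true) with hBdef
  set P := f (false, true) (true, true) with hPdef
  set Q := f (false, true) (true, false) with hQdef
  -- all variants of the strict inequalities
  have k1' : Q < P + A := (add_comm A P) ▸ k1
  have k2' : P < Q + A := (add_comm A Q) ▸ k2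
  have k3' : Q < P + B := (add_comm B P) ▸ k3
  have k4' : P < Q + B := (add_comm B Q) ▸ k4
  have k5' : A < Q + P := (add_comm P Q) ▸ k5
  have k6' : B < Q + P := (add_comm P Q) ▸ k6
  have pA : (0 : Λ) < A + A := add_pos hA hA
  have pB : (0 : Λ) < B + B := add_pos hB hB
  have pP : (0 : Λ) < P + P := add_pos hP0 hP0
  have pQ : (0 : Λ) < Q + Q := add_pos hQ0 hQ0
  rintro ⟨x1, x2⟩ ⟨y1, y2⟩ ⟨z1, z2⟩
  cases x1 <;> cases x2 <;> cases y1 <;> cases y2 <;> cases z1 <;> cases z2 <;>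
    refine ⟨?_, ?_⟩ <;>
    simp only [Letter.inv, Bool.not_true, Bool.not_false, ne_eq, Prod.mk.injEq,
      e1, e2, e3, e4, e5, e6, e7, e8, e9, e10, e11, e12,
      add_zero, zero_add, Bool.true_eq_false, Bool.false_eq_true,
      not_false_eq_true, not_true_eq_false, and_true, true_and, and_false, false_and,
      and_self, iff_true, iff_false, not_lt, not_and] <;>
    first
      | assumption
      | exact le_refl _
      | exact le_of_lt (by assumption)
end

section
/- Let ‖·‖ be a pseudo-length on the free group F(a,b). If (a,b) is a ping-pong pair, then ‖y⁻¹z‖ < ‖xy‖ + ‖xz‖ for all x, y, z ∈ {a, b, a⁻¹, b⁻¹} (viewed as elements of F(a,b)) satisfying y ≠ x⁻¹ and z ≠ x⁻¹. -/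
/-- A pseudo-length on a group `G` with values in a totally ordered abelian group `Λ`:
nonnegativity (values in `Λ₊`) together with axioms (A0)–(A3). -/
def IsPseudoLength {Λ : Type*} [AddCommGroup Λ] [LinearOrder Λ] [IsOrderedAddMonoid Λ] {G : Type*} [Group G]
    (ℓ : G → Λ) : Prop :=
  (∀ g : G, 0 ≤ ℓ g) ∧
  (∀ g h : G, 0 < ℓ g → 0 < ℓ h → ∃ c : Λ, max 0 (ℓ (g * h) - ℓ g - ℓ h) = c + c) ∧
  (∀ g h : G, ℓ (g * h * g⁻¹) = ℓ h) ∧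
  (∀ g h : G, ℓ (g * h) = ℓ (g * h⁻¹) ∨ max (ℓ (g * h)) (ℓ (g * h⁻¹)) ≤ ℓ g + ℓ h) ∧
  (∀ g h : G, 0 < ℓ g → 0 < ℓ h →
    (ℓ (g * h) = ℓ (g * h⁻¹) ∧ ℓ g + ℓ h < ℓ (g * h)) ∨
      max (ℓ (g * h)) (ℓ (g * h⁻¹)) = ℓ g + ℓ h)

/-- `(g, h)` is a ping-pong pair with respect to the pseudo-length `ℓ`. -/
def IsPingPongPair {Λ : Type*} [AddCommGroup Λ] [LinearOrder Λ] [IsOrderedAddMonoid Λ] {G : Type*} [Group G]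
    (ℓ : G → Λ) (g h : G) : Prop :=
  0 < ℓ g ∧ 0 < ℓ h ∧ |ℓ g - ℓ h| < min (ℓ (g * h)) (ℓ (g * h⁻¹))
/-- Lemma `lem:yz`: if `(a,b)` is a ping-pong pair in `F(a,b)`, then
`‖y⁻¹z‖ < ‖xy‖ + ‖xz‖` for all letters `x,y,z ∈ {a,b,a⁻¹,b⁻¹}` with `y ≠ x⁻¹`, `z ≠ x⁻¹`.
Here `F(a,b) = FreeGroup (Fin 2)`, `a = of 0`, `b = of 1`. -/
theorem statement5 {Λ : Type*} [AddCommGroup Λ] [LinearOrder Λ] [IsOrderedAddMonoid Λ] [Nontrivial Λ]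
    (ℓ : FreeGroup (Fin 2) → Λ) (hℓ : IsPseudoLength ℓ)
    (hab : IsPingPongPair ℓ (FreeGroup.of 0) (FreeGroup.of 1)) :
    ∀ x y z : Letter, y ≠ x.inv → z ≠ x.inv →
      ℓ (Letter.eval (FreeGroup.of 0) (FreeGroup.of 1) y.inv
          * Letter.eval (FreeGroup.of 0) (FreeGroup.of 1) z)
        < ℓ (Letter.eval (FreeGroup.of 0) (FreeGroup.of 1) x
              * Letter.eval (FreeGroup.of 0) (FreeGroup.of 1) y)
          + ℓ (Letter.eval (FreeGroup.of 0) (FreeGroup.of 1) x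
              * Letter.eval (FreeGroup.of 0) (FreeGroup.of 1) z) := by
  
  obtain ⟨hnn, _, hconj, hA2, hA3⟩ := hℓ
  obtain ⟨hA, hB, hmin⟩ := hab
  -- ℓ 1 = 0
  have h1 : ℓ 1 = 0 := by
    rcases (hnn 1).lt_or_eq with h | h
    · rcases hA3 1 1 h h with ⟨_, hlt⟩ | hmax
      · simp only [mul_one] at hlt
        exact absurd h (add_lt_iff_neg_left.mp hlt).asymm
      · simp only [mul_one, inv_one, max_self] at hmax
        exact (left_eq_add.mp hmax)
    · exact h.symm
  -- inverse invariance
  have hinvle : ∀ g : FreeGroup (Fin 2), ℓ g⁻¹ ≤ ℓ g := by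
    intro g
    rcases hA2 1 g with h | h
    · simp only [one_mul] at h; exact h.ge
    · simp only [one_mul, h1, zero_add] at h; exact le_of_max_le_right h
  have hinv : ∀ g : FreeGroup (Fin 2), ℓ g⁻¹ = ℓ g := fun g =>
    le_antisymm (hinvle g) (by simpa using hinvle g⁻¹)
  -- cyclic invariance
  have hcyc : ∀ g h : FreeGroup (Fin 2), ℓ (g * h) = ℓ (h * g) := by
    intro g h
    have := hconj h (g * h)
    rw [show h * (g * h) * h⁻¹ = h * g by group] at this
    exact this.symm
  -- squares
  have hsq : ∀ g : FreeGroup (Fin 2), 0 < ℓ g → ℓ (g * g) = ℓ g + ℓ g := by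
    intro g hg
    rcases hA3 g g hg hg with ⟨heq, hlt⟩ | hmax
    · rw [mul_inv_cancel, h1] at heq
      rw [heq] at hlt
      exact absurd hlt (add_pos hg hg).asymm
    · rw [mul_inv_cancel, h1] at hmax
      rwa [max_eq_left (hnn _)] at hmax
  rw [lt_min_iff] at hmin
  obtain ⟨hpAB, hpBA⟩ := abs_sub_lt_iff.1 hmin.1
  obtain ⟨hqAB, hqBA⟩ := abs_sub_lt_iff.1 hmin.2
  have hPpos : 0 < ℓ (FreeGroup.of 0 * FreeGroup.of 1) :=
    lt_of_le_of_lt (abs_nonneg _) hmin.1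
  have hQpos : 0 < ℓ (FreeGroup.of 0 * (FreeGroup.of 1)⁻¹) :=
    lt_of_le_of_lt (abs_nonneg _) hmin.2
  set A := ℓ (FreeGroup.of 0 : FreeGroup (Fin 2)) with hAdef
  set B := ℓ (FreeGroup.of 1 : FreeGroup (Fin 2)) with hBdef
  set P := ℓ (FreeGroup.of 0 * FreeGroup.of 1 : FreeGroup (Fin 2)) with hPdef
  set Q := ℓ (FreeGroup.of 0 * (FreeGroup.of 1)⁻¹ : FreeGroup (Fin 2)) with hQdef
  -- the six key inequalities
  have key : Q < P + (A + A) ∧ P < Q + (A + A) ∧ Q < P + (B + B) ∧ P < Q + (B + B) ∧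
      A + A < P + Q ∧ B + B < P + Q := by
    rcases hA3 (FreeGroup.of 0) (FreeGroup.of 1) hA hB with ⟨hpq, hgt⟩ | hmax
    · have hpq' : P = Q := hpq
      have hgt2 : A + B < P := hgt
      have hgt' : A + B < Q := hpq' ▸ hgt2
      refine ⟨?_, ?_, ?_, ?_, ?_, ?_⟩
      · calc Q = P := hpq'.symm
          _ < P + (A + A) := lt_add_of_pos_right _ (add_pos hA hA)
      · calc P = Q := hpq'
          _ < Q + (A + A) := lt_add_of_pos_right _ (add_pos hA hA)
      · calc Q = P := hpq'.symm
          _ < P + (B + B) := lt_add_of_pos_right _ (add_pos hB hB)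
      · calc P = Q := hpq'
          _ < Q + (B + B) := lt_add_of_pos_right _ (add_pos hB hB)
      · calc A + A = (A - B) + (A + B) := by abel
          _ < P + Q := add_lt_add hpAB hgt'
      · calc B + B = (B - A) + (A + B) := by abel
          _ < P + Q := add_lt_add hpBA hgt'
    · have hmax : max P Q = A + B := hmax
      have hPle : P ≤ A + B := hmax ▸ le_max_left P Q
      have hQle : Q ≤ A + B := hmax ▸ le_max_right P Q
      have c56 : A + A < P + Q ∧ B + B < P + Q := by
        rcases max_choice P Q with h | h <;> rw [h] at hmax
        · constructor
          · calc A + A = (A - B) + (A + B) := by abel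
              _ < Q + (A + B) := add_lt_add_left hqAB _
              _ = P + Q := by rw [hmax]; exact add_comm _ _
          · calc B + B = (B - A) + (A + B) := by abel
              _ < Q + (A + B) := add_lt_add_left hqBA _
              _ = P + Q := by rw [hmax]; exact add_comm _ _
        · constructor
          · calc A + A = (A - B) + (A + B) := by abel
              _ < P + (A + B) := add_lt_add_left hpAB _
              _ = P + Q := by rw [hmax]
          · calc B + B = (B - A) + (A + B) := by abel
              _ < P + (A + B) := add_lt_add_left hpBA _
              _ = P + Q := by rw [hmax]
      refine ⟨?_, ?_, ?_, ?_, c56.1, c56.2⟩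
      · calc Q ≤ A + B := hQle
          _ = (B - A) + (A + A) := by abel
          _ < P + (A + A) := add_lt_add_left hpBA _
      · calc P ≤ A + B := hPle
          _ = (B - A) + (A + A) := by abel
          _ < Q + (A + A) := add_lt_add_left hqBA _
      · calc Q ≤ A + B := hQle
          _ = (A - B) + (B + B) := by abel
          _ < P + (B + B) := add_lt_add_left hpAB _
      · calc P ≤ A + B := hPle
          _ = (A - B) + (B + B) := by abel
          _ < Q + (B + B) := add_lt_add_left hqAB _
  obtain ⟨c1, c2, c3, c4, c5, c6⟩ := key
  have c1' : Q < (A + A) + P := by rw [add_comm (A + A) P]; exact c1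
  have c2' : P < (A + A) + Q := by rw [add_comm (A + A) Q]; exact c2
  have c3' : Q < (B + B) + P := by rw [add_comm (B + B) P]; exact c3
  have c4' : P < (B + B) + Q := by rw [add_comm (B + B) Q]; exact c4
  have c5' : A + A < Q + P := by rw [add_comm Q P]; exact c5
  have c6' : B + B < Q + P := by rw [add_comm Q P]; exact c6
  -- values of ℓ on all two-letter products
  have eaa : ℓ (FreeGroup.of 0 * FreeGroup.of 0) = A + A := hsq _ hA
  have ebb : ℓ (FreeGroup.of 1 * FreeGroup.of 1) = B + B := hsq _ hB
  have eAA : ℓ ((FreeGroup.of 0)⁻¹ * (FreeGroup.of 0)⁻¹) = A + A := by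
    rw [show (FreeGroup.of 0 : FreeGroup (Fin 2))⁻¹ * (FreeGroup.of 0)⁻¹
        = (FreeGroup.of 0 * FreeGroup.of 0)⁻¹ by group, hinv, eaa]
  have eBB : ℓ ((FreeGroup.of 1)⁻¹ * (FreeGroup.of 1)⁻¹) = B + B := by
    rw [show (FreeGroup.of 1 : FreeGroup (Fin 2))⁻¹ * (FreeGroup.of 1)⁻¹
        = (FreeGroup.of 1 * FreeGroup.of 1)⁻¹ by group, hinv, ebb]
  have eba : ℓ (FreeGroup.of 1 * FreeGroup.of 0) = P := (hcyc _ _).symm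
  have eBa : ℓ ((FreeGroup.of 1)⁻¹ * FreeGroup.of 0) = Q := (hcyc _ _).symm
  have eAb : ℓ ((FreeGroup.of 0)⁻¹ * FreeGroup.of 1) = Q := by
    rw [show (FreeGroup.of 0 : FreeGroup (Fin 2))⁻¹ * FreeGroup.of 1
        = ((FreeGroup.of 1)⁻¹ * FreeGroup.of 0)⁻¹ by group, hinv, eBa]
  have ebA : ℓ (FreeGroup.of 1 * (FreeGroup.of 0)⁻¹) = Q := by rw [hcyc, eAb]
  have eAB : ℓ ((FreeGroup.of 0)⁻¹ * (FreeGroup.of 1)⁻¹) = P := by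
    rw [show (FreeGroup.of 0 : FreeGroup (Fin 2))⁻¹ * (FreeGroup.of 1)⁻¹
        = (FreeGroup.of 1 * FreeGroup.of 0)⁻¹ by group, hinv, eba]
  have eBA : ℓ ((FreeGroup.of 1)⁻¹ * (FreeGroup.of 0)⁻¹) = P := by rw [hcyc, eAB]
  rintro ⟨xg, xs⟩ ⟨yg, ys⟩ ⟨zg, zs⟩ hy hz
  rcases xg <;> rcases xs <;> rcases yg <;> rcases ys <;> rcases zg <;> rcases zs <;>
    simp [Letter.inv] at hy hz
  all_goals
    simp only [Letter.inv, Bool.not_true, Bool.not_false, Letter.eval, inv_mul_cancel,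
      mul_inv_cancel, h1, eaa, ebb, eAA, eBB, ← hPdef, ← hQdef, eba, eBa, eAb, ebA, eAB, eBA]
    first
      | exact c1 | exact c2 | exact c3 | exact c4 | exact c5 | exact c6
      | exact c1' | exact c2' | exact c3' | exact c4' | exact c5' | exact c6'
      | exact add_pos (add_pos hA hA) (add_pos hA hA)
      | exact add_pos (add_pos hB hB) (add_pos hB hB)
      | exact add_pos hPpos hPpos
      | exact add_pos hQpos hQpos
end

section
/- Let ‖·‖ be a pseudo-length on a group G and let g, h ∈ G satisfy ‖g‖ ≥ ‖h‖ > 0 and ‖gh‖ ≥ ‖gh⁻¹‖ > 0. If ‖g‖ − ‖h‖ = ‖gh⁻¹‖, then ‖ghg⁻¹h⁻¹‖ ≤ 2‖g‖. -/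
/-- Lemma `lem:algorithm` (i): if `‖g‖ ≥ ‖h‖ > 0`,
`‖gh‖ ≥ ‖gh⁻¹‖ > 0` and `‖g‖ - ‖h‖ = ‖gh⁻¹‖`, then `‖[g,h]‖ ≤ 2‖g‖`. -/
theorem statement9 {Λ : Type*} [AddCommGroup Λ] [LinearOrder Λ] [IsOrderedAddMonoid Λ] [Nontrivial Λ]
    {G : Type*} [Group G] (ℓ : G → Λ) (hℓ : IsPseudoLength ℓ)
    (g h : G) (h1 : ℓ h ≤ ℓ g) (h2 : 0 < ℓ h)
    (h3 : ℓ (g * h⁻¹) ≤ ℓ (g * h)) (h4 : 0 < ℓ (g * h⁻¹))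
    (heq : ℓ g - ℓ h = ℓ (g * h⁻¹)) :
    ℓ (g * h * g⁻¹ * h⁻¹) ≤ ℓ g + ℓ g := by
  obtain ⟨hnn, _hA0, hA1, _hA2, hA3⟩ := hℓ
  have hg : 0 < ℓ g := lt_of_lt_of_le h2 h1
  -- ℓ 1 = 0
  have hone : ℓ (1 : G) = 0 := by
    by_contra hne
    have hpos : 0 < ℓ (1 : G) := (hnn 1).lt_of_ne (Ne.symm hne)
    rcases hA3 1 1 hpos hpos with ⟨_, hlt⟩ | hmax
    · rw [one_mul] at hlt
      exact absurd (add_lt_iff_neg_left.mp hlt) (not_lt.2 (hnn 1))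
    · simp only [one_mul, inv_one, max_self] at hmax
      exact hne (left_eq_add.mp hmax)
  -- ℓ (h²) ≤ 2 ℓ h
  have hsq : ℓ (h * h) ≤ ℓ h + ℓ h := by
    rcases hA3 h h h2 h2 with ⟨heq2, hlt⟩ | hmax
    · have hlt' : ℓ h + ℓ h < 0 := by
        rwa [heq2, mul_inv_cancel, hone] at hlt
      exact absurd hlt' (not_lt.2 (add_pos h2 h2).le)
    · exact le_of_le_of_eq (le_max_left _ _) hmax
  -- ℓ (g h) = ℓ g + ℓ h
  have hgh : ℓ (g * h) = ℓ g + ℓ h := by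
    rcases hA3 g h hg h2 with ⟨heq2, hlt⟩ | hmax
    · exfalso
      rw [heq2, ← heq, sub_eq_add_neg] at hlt
      have h' : ℓ h < -ℓ h := lt_of_add_lt_add_left hlt
      exact absurd (h'.trans (neg_lt_zero.mpr h2)) (not_lt.2 h2.le)
    · rw [max_eq_left h3] at hmax; exact hmax
  -- main case analysis on the pair (g, h g h⁻¹)
  have hconj : ℓ (h * g * h⁻¹) = ℓ g := hA1 h g
  have hconjpos : 0 < ℓ (h * g * h⁻¹) := hconj ▸ hg
  have e1 : g * (h * g * h⁻¹)⁻¹ = g * h * g⁻¹ * h⁻¹ := by group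
  have e2 : g * (h * g * h⁻¹) = g * h * (g * h⁻¹) := by group
  rcases hA3 g (h * g * h⁻¹) hg hconjpos with ⟨heq2, _hlt⟩ | hmax
  · -- "bad" case: ℓ(comm) = ℓ((gh)(gh⁻¹))
    rw [e1] at heq2
    rw [← heq2, e2]
    have hghpos : 0 < ℓ (g * h) := by rw [hgh]; exact add_pos hg h2
    have e3 : g * h * (g * h⁻¹)⁻¹ = g * (h * h) * g⁻¹ := by group
    rcases hA3 (g * h) (g * h⁻¹) hghpos h4 with ⟨heq3, _hlt3⟩ | hmax3
    · rw [e3, hA1 g (h * h)] at heq3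
      rw [heq3]
      exact hsq.trans (add_le_add h1 h1)
    · have hle : ℓ (g * h * (g * h⁻¹)) ≤ ℓ (g * h) + ℓ (g * h⁻¹) :=
        le_of_le_of_eq (le_max_left _ _) hmax3
      rw [hgh, ← heq] at hle
      have e4 : ℓ g + ℓ h + (ℓ g - ℓ h) = ℓ g + ℓ g := by abel
      exact hle.trans_eq e4
  · -- "good" case: max = 2ℓg
    rw [e1, hconj] at hmax
    exact le_of_le_of_eq (le_max_right _ _) hmax
end

section
/- Let ‖·‖ be a pseudo-length on a group G and let g, h ∈ G satisfy ‖g‖ ≥ ‖h‖ > 0 and ‖gh‖ ≥ ‖gh⁻¹‖ > 0. If ‖g‖ − ‖h‖ > ‖gh⁻¹‖, then (gh⁻¹, h) is a ping-pong pair. -/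
/-- Lemma `lem:algorithm` (ii): if `‖g‖ ≥ ‖h‖ > 0`,
`‖gh‖ ≥ ‖gh⁻¹‖ > 0` and `‖g‖ - ‖h‖ > ‖gh⁻¹‖`, then `(gh⁻¹, h)` is a ping-pong pair. -/
theorem statement10 {Λ : Type*} [AddCommGroup Λ] [LinearOrder Λ] [IsOrderedAddMonoid Λ] [Nontrivial Λ]
    {G : Type*} [Group G] (ℓ : G → Λ) (hℓ : IsPseudoLength ℓ)
    (g h : G) (h1 : ℓ h ≤ ℓ g) (h2 : 0 < ℓ h)
    (h3 : ℓ (g * h⁻¹) ≤ ℓ (g * h)) (h4 : 0 < ℓ (g * h⁻¹))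
    (hgt : ℓ (g * h⁻¹) < ℓ g - ℓ h) :
    IsPingPongPair ℓ (g * h⁻¹) h := by
  obtain ⟨hpos, hA0, hA1, hA2, hA3⟩ := hℓ
  refine ⟨h4, h2, ?_⟩
  have key := hA3 (g * h⁻¹) h h4 h2
  rw [inv_mul_cancel_right] at key
  rw [show g * h⁻¹ * h = g by group]
  have h6 : ℓ (g * h⁻¹) + ℓ h < ℓ g := by
    have := add_lt_add_left hgt (ℓ h)
    rwa [sub_add_cancel] at this
  rcases key with ⟨heq, hlt⟩ | hmax
  · rw [← heq, min_self, abs_sub_lt_iff]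
    constructor
    · rw [sub_lt_iff_lt_add]
      exact hgt.trans_le ((sub_le_self _ h2.le).trans (le_add_of_nonneg_right h2.le))
    · rw [sub_lt_iff_lt_add]
      exact h1.trans_lt (lt_add_of_pos_right _ h4)
  · exact absurd (hmax ▸ le_max_left (ℓ g) (ℓ (g * h⁻¹ * h⁻¹))) (not_le.2 h6)
end

section
/- Let Λ be a nontrivial subgroup of the additive group of real numbers and let ‖·‖ : F(a,b) → Λ₊ be a purely hyperbolic pseudo-length on the free group F(a,b). Then there exists an automorphism σ of F(a,b) such that (σ(a), σ(b)) is a ping-pong pair with respect to ‖·‖. -/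
set_option linter.unusedSectionVars false

namespace S11Proof

abbrev F2 := FreeGroup (Fin 2)
def A : F2 := FreeGroup.of 0
def B : F2 := FreeGroup.of 1

def endo (x y : F2) : F2 →* F2 := FreeGroup.lift ![x, y]

@[simp] lemma endo_A (x y : F2) : endo x y A = x := by
  simp [endo, A, FreeGroup.lift_apply_of]

@[simp] lemma endo_B (x y : F2) : endo x y B = y := by
  simp [endo, B, FreeGroup.lift_apply_of]

def mkAut (x y x' y' : F2) (h1 : endo x' y' x = A) (h2 : endo x' y' y = B)
    (h3 : endo x y x' = A) (h4 : endo x y y' = B) : MulAut F2 :=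
  MonoidHom.toMulEquiv (endo x y) (endo x' y')
    (FreeGroup.ext_hom _ _ (by
      rw [Fin.forall_fin_two]
      constructor
      · show endo x' y' (endo x y (FreeGroup.of 0)) = FreeGroup.of 0
        rw [show FreeGroup.of (0 : Fin 2) = A from rfl, endo_A, h1]
      · show endo x' y' (endo x y (FreeGroup.of 1)) = FreeGroup.of 1
        rw [show FreeGroup.of (1 : Fin 2) = B from rfl, endo_B, h2]))
    (FreeGroup.ext_hom _ _ (by
      rw [Fin.forall_fin_two]
      constructor
      · show endo x y (endo x' y' (FreeGroup.of 0)) = FreeGroup.of 0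
        rw [show FreeGroup.of (0 : Fin 2) = A from rfl, endo_A, h3]
      · show endo x y (endo x' y' (FreeGroup.of 1)) = FreeGroup.of 1
        rw [show FreeGroup.of (1 : Fin 2) = B from rfl, endo_B, h4]))

@[simp] lemma mkAut_A (x y x' y' : F2) (h1 h2 h3 h4) :
    (mkAut x y x' y' h1 h2 h3 h4) A = x := by
  show endo x y A = x; simp

@[simp] lemma mkAut_B (x y x' y' : F2) (h1 h2 h3 h4) :
    (mkAut x y x' y' h1 h2 h3 h4) B = y := by
  show endo x y B = y; simp

def swapA : MulAut F2 := mkAut B A B A (by simp) (by simp) (by simp) (by simp)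
def mulB : MulAut F2 := mkAut A (A*B) A (A⁻¹*B) (by simp) (by simp [map_mul]) (by simp) (by simp [map_mul])
def mulinvB : MulAut F2 := mkAut A (A*B⁻¹) A (B⁻¹*A) (by simp) (by simp [map_mul]) (by simp) (by simp [map_mul])

def cnt (i0 i1 : ℤ) : F2 →* Multiplicative ℤ :=
  FreeGroup.lift ![Multiplicative.ofAdd i0, Multiplicative.ofAdd i1]

lemma wne (w : F2) (i0 i1 : ℤ) (h : cnt i0 i1 w ≠ 1) : w ≠ 1 :=
  fun e => h (by rw [e, map_one])

lemma wA : A ≠ 1 := wne _ 1 0 (by simp [cnt, A, FreeGroup.lift_apply_of])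
lemma wB : B ≠ 1 := wne _ 0 1 (by simp [cnt, B, FreeGroup.lift_apply_of])
lemma wAB : A*B ≠ 1 := wne _ 1 1 (by
  simp [cnt, A, B, map_mul, FreeGroup.lift_apply_of, ← ofAdd_add])
lemma wBA : B*A ≠ 1 := wne _ 1 1 (by
  simp [cnt, A, B, map_mul, FreeGroup.lift_apply_of, ← ofAdd_add])
lemma wABB : A*B*B ≠ 1 := wne _ 1 1 (by
  simp [cnt, A, B, map_mul, FreeGroup.lift_apply_of, ← ofAdd_add])
lemma wABi : A*B⁻¹ ≠ 1 := wne _ 1 0 (by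
  simp [cnt, A, B, map_mul, map_inv, FreeGroup.lift_apply_of, ← ofAdd_add, ← ofAdd_neg])
lemma wBiA : B⁻¹*A ≠ 1 := wne _ 1 0 (by
  simp [cnt, A, B, map_mul, map_inv, FreeGroup.lift_apply_of, ← ofAdd_add, ← ofAdd_neg])
lemma wABiBi : A*B⁻¹*B⁻¹ ≠ 1 := wne _ 0 1 (by
  simp [cnt, A, B, map_mul, map_inv, FreeGroup.lift_apply_of, ← ofAdd_add, ← ofAdd_neg])

def pm : F2 →* Equiv.Perm (Fin 3) := FreeGroup.lift ![Equiv.swap 0 1, Equiv.swap 1 2]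

lemma wComm : A*B*A⁻¹*B⁻¹ ≠ 1 := fun e => by
  have h := congrArg pm e
  simp [pm, A, B, map_mul, map_inv, FreeGroup.lift_apply_of] at h
  exact absurd h (by decide)

lemma sig_ne (σ : MulAut F2) {x : F2} (hx : x ≠ 1) : σ x ≠ 1 := by
  intro e
  exact hx (σ.injective (by rw [e, map_one]))

lemma pA (σ : MulAut F2) : σ A ≠ 1 := sig_ne σ wA
lemma pB (σ : MulAut F2) : σ B ≠ 1 := sig_ne σ wB
lemma pAB (σ : MulAut F2) : σ A * σ B ≠ 1 := by
  have := sig_ne σ wAB; rwa [map_mul] at this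
lemma pBA (σ : MulAut F2) : σ B * σ A ≠ 1 := by
  have := sig_ne σ wBA; rwa [map_mul] at this
lemma pABB (σ : MulAut F2) : σ A * σ B * σ B ≠ 1 := by
  have := sig_ne σ wABB; rwa [map_mul, map_mul] at this
lemma pABi (σ : MulAut F2) : σ A * (σ B)⁻¹ ≠ 1 := by
  have := sig_ne σ wABi; rwa [map_mul, map_inv] at this
lemma pBiA (σ : MulAut F2) : (σ B)⁻¹ * σ A ≠ 1 := by
  have := sig_ne σ wBiA; rwa [map_mul, map_inv] at this
lemma pABiBi (σ : MulAut F2) : σ A * (σ B)⁻¹ * (σ B)⁻¹ ≠ 1 := by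
  have := sig_ne σ wABiBi; rwa [map_mul, map_mul, map_inv] at this
lemma pComm (σ : MulAut F2) : σ A * σ B * (σ A)⁻¹ * (σ B)⁻¹ ≠ 1 := by
  have := sig_ne σ wComm; rwa [map_mul, map_mul, map_mul, map_inv, map_inv] at this

def PP (L : F2 → ℝ) (σ : MulAut F2) : Prop :=
  |L (σ A) - L (σ B)| < min (L (σ A * σ B)) (L (σ A * (σ B)⁻¹))

section Core
variable {L : F2 → ℝ}
  (hnn : ∀ g, 0 ≤ L g)
  (hconj : ∀ g h, L (g*h*g⁻¹) = L h)
  (hA3 : ∀ g h : F2, 0 < L g → 0 < L h →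
    (L (g*h) = L (g*h⁻¹) ∧ L g + L h < L (g*h)) ∨
      max (L (g*h)) (L (g*h⁻¹)) = L g + L h)
  (hpos : ∀ g : F2, g ≠ 1 → 0 < L g)

include hnn hA3 in
lemma L_one : L 1 = 0 := by
  by_contra h
  have h1 : 0 < L 1 := lt_of_le_of_ne (hnn 1) (Ne.symm h)
  rcases hA3 1 1 h1 h1 with ⟨_, h3⟩ | h2
  · simp at h3; linarith
  · simp at h2; linarith

include hnn hA3 hpos in
lemma L_sq (g : F2) (hg : g ≠ 1) : L (g*g) = 2 * L g := by
  have hp := hpos g hg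
  rcases hA3 g g hp hp with ⟨e, lt⟩ | h2
  · rw [mul_inv_cancel, L_one hnn hA3] at e
    rw [e] at lt; linarith
  · rw [mul_inv_cancel, L_one hnn hA3] at h2
    rcases max_cases (L (g*g)) (0:ℝ) with ⟨h3, _⟩ | ⟨h3, _⟩ <;> rw [h3] at h2 <;> linarith

include hnn hA3 hpos in
lemma L_inv (g : F2) : L g⁻¹ = L g := by
  by_cases hg : g = 1
  · rw [hg, inv_one]
  · have h1 := hpos g hg
    have h2 := hpos g⁻¹ (inv_ne_one.mpr hg)
    rcases hA3 g⁻¹ g h2 h1 with ⟨_, lt⟩ | hm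
    · rw [inv_mul_cancel, L_one hnn hA3] at lt; linarith
    · rw [inv_mul_cancel, L_one hnn hA3] at hm
      have hs : L (g⁻¹*g⁻¹) = 2 * L g⁻¹ := L_sq hnn hA3 hpos g⁻¹ (inv_ne_one.mpr hg)
      rcases max_cases (0:ℝ) (L (g⁻¹*g⁻¹)) with ⟨h3, _⟩ | ⟨h3, _⟩ <;> rw [h3] at hm <;> linarith

include hconj in
lemma L_mul_comm (g h : F2) : L (g*h) = L (h*g) := by
  have := hconj g (h*g)
  rw [show g*(h*g)*g⁻¹ = g*h by group] at this
  exact this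

include hconj in
lemma L_conj' (g h : F2) : L (g⁻¹*h*g) = L h := by
  have := hconj g⁻¹ h
  rwa [inv_inv] at this

include hnn hconj hA3 hpos in
lemma KK' (g h : F2) (hg : g ≠ 1) (hh : h ≠ 1) (hgh : g*h ≠ 1) (hhg : h*g ≠ 1)
    (hghh : g*h*h ≠ 1) (hS : L (g*h) = L g + L h) :
    L (g*h*g⁻¹*h⁻¹) ≤ 2*(L g + L h) := by
  have hpg := hpos g hg
  have hph := hpos h hh
  have hq : L (h*g) = L g + L h := by rw [← L_mul_comm hconj, hS]
  have hpgh : 0 < L (g*h) := hpos _ hgh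
  have hphg : 0 < L (h*g) := hpos _ hhg
  rcases hA3 (g*h) (h*g) hpgh hphg with ⟨e, lt⟩ | hmax
  · exfalso
    rw [hS, hq] at lt
    have hT : L ((g*h)*(h*g)) = L (g*(g*h*h)) := by
      rw [show (g*h)*(h*g) = (g*h*h)*g by group]
      exact L_mul_comm hconj _ _
    rw [hT] at lt
    have h2 : L (g*h*h) ≤ L g + 2*L h := by
      rcases hA3 (g*h) h hpgh hph with ⟨e2, lt2⟩ | hm2
      · rw [mul_inv_cancel_right] at e2
        rw [hS, e2] at lt2
        linarith
      · rw [mul_inv_cancel_right, hS] at hm2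
        have := le_max_left (L (g*h*h)) (L g)
        rw [hm2] at this; linarith
    have hinv2 : L (g*(g*h*h)⁻¹) = 2*L h := by
      rw [show g*(g*h*h)⁻¹ = g*(h⁻¹*h⁻¹)*g⁻¹ by group, hconj,
        L_sq hnn hA3 hpos h⁻¹ (inv_ne_one.mpr hh), L_inv hnn hA3 hpos]
    rcases hA3 g (g*h*h) hpg (hpos _ hghh) with ⟨e3, _⟩ | hm3
    · rw [hinv2] at e3
      rw [e3] at lt; linarith
    · rw [hinv2] at hm3
      have hle := le_max_left (L (g*(g*h*h))) (2*L h)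
      rw [hm3] at hle
      linarith
  · have hle := le_max_right (L ((g*h)*(h*g))) (L ((g*h)*(h*g)⁻¹))
    rw [hmax, hS, hq] at hle
    rw [show (g*h)*(h*g)⁻¹ = g*h*g⁻¹*h⁻¹ by group] at hle
    linarith

include hnn hconj hA3 hpos in
lemma KK (g h : F2) (hg : g ≠ 1) (hh : h ≠ 1) (hgh : g*h ≠ 1) (hhg : h*g ≠ 1)
    (hghh : g*h*h ≠ 1) (hghi : g*h⁻¹ ≠ 1) (hhig : h⁻¹*g ≠ 1) (hghii : g*h⁻¹*h⁻¹ ≠ 1)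
    (hfail : min (L (g*h)) (L (g*h⁻¹)) ≤ |L g - L h|) :
    L (g*h*g⁻¹*h⁻¹) ≤ 2*(L g + L h) := by
  have hpg := hpos g hg
  have hph := hpos h hh
  have habs : |L g - L h| ≤ L g + L h := by
    rcases abs_cases (L g - L h) with ⟨h1, _⟩ | ⟨h1, _⟩ <;> rw [h1] <;> linarith
  rcases hA3 g h hpg hph with ⟨e, lt⟩ | hmax
  · exfalso
    rw [e, min_self] at hfail
    rw [e] at lt
    linarith
  · by_cases hcmp : L (g*h⁻¹) ≤ L (g*h)
    · have h1 : L (g*h) = L g + L h := by rw [← hmax, max_eq_left hcmp]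
      exact KK' hnn hconj hA3 hpos g h hg hh hgh hhg hghh h1
    · push_neg at hcmp
      have h1 : L (g*h⁻¹) = L g + L h := by rw [← hmax, max_eq_right (le_of_lt hcmp)]
      have h1' : L (g*h⁻¹) = L g + L h⁻¹ := by rw [L_inv hnn hA3 hpos]; exact h1
      have hK := KK' hnn hconj hA3 hpos g h⁻¹ hg (inv_ne_one.mpr hh) hghi hhig hghii h1'
      rw [inv_inv, L_inv hnn hA3 hpos] at hK
      have hrel : L (g*h⁻¹*g⁻¹*h) = L (g*h*g⁻¹*h⁻¹) := by
        rw [show g*h⁻¹*g⁻¹*h = h⁻¹*((g*h*g⁻¹*h⁻¹)⁻¹)*h by group,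
          L_conj' hconj, L_inv hnn hA3 hpos]
      rwa [hrel] at hK

include hnn hconj hA3 hpos in
lemma round (n : ℕ) : ∀ σ : MulAut F2, ∀ c : ℝ,
    L (σ A * σ B * (σ A)⁻¹ * (σ B)⁻¹) = c →
    L (σ A) ≤ L (σ B) → L (σ B) ≤ L (σ A) * n →
    (∃ σ', PP L σ') ∨
      ∃ σ' : MulAut F2, L (σ' A * σ' B * (σ' A)⁻¹ * (σ' B)⁻¹) = c ∧
        L (σ' A) = L (σ A) ∧ L (σ' B) < L (σ A) ∧ L (σ' B) ≤ L (σ B) - L (σ A) := by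
  induction n with
  | zero =>
    intro σ c _ _ hbound
    exfalso
    have := hpos _ (pB σ)
    simp at hbound
    linarith
  | succ n IH =>
    intro σ c hC hle hbound
    by_cases hpp : PP L σ
    · exact Or.inl ⟨σ, hpp⟩
    have hfail : min (L (σ A * σ B)) (L (σ A * (σ B)⁻¹)) ≤ |L (σ A) - L (σ B)| :=
      not_lt.1 hpp
    have hpg := hpos _ (pA σ)
    have hph := hpos _ (pB σ)
    have habs : |L (σ A) - L (σ B)| = L (σ B) - L (σ A) := by
      rw [abs_sub_comm, abs_of_nonneg (by linarith)]
    rw [habs] at hfail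
    rcases hA3 (σ A) (σ B) hpg hph with ⟨e, lt⟩ | hmax
    · exfalso
      rw [e, min_self] at hfail
      rw [e] at lt
      linarith
    by_cases hcmp : L (σ A * (σ B)⁻¹) ≤ L (σ A * σ B)
    · -- min is L (σ A * (σ B)⁻¹); use mulinvB
      have hmin : L (σ A * (σ B)⁻¹) ≤ L (σ B) - L (σ A) := by
        rwa [min_eq_right hcmp] at hfail
      set σ' : MulAut F2 := MulEquiv.trans mulinvB σ with hσ'
      have hA' : σ' A = σ A := by
        simp [hσ', MulEquiv.trans_apply, mulinvB]
      have hB' : σ' B = σ A * (σ B)⁻¹ := by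
        simp [hσ', MulEquiv.trans_apply, mulinvB, map_mul, map_inv]
      have hC' : L (σ' A * σ' B * (σ' A)⁻¹ * (σ' B)⁻¹) = c := by
        rw [hA', hB',
          show σ A*(σ A*(σ B)⁻¹)*(σ A)⁻¹*(σ A*(σ B)⁻¹)⁻¹
            = (σ A*(σ B)⁻¹)*((σ A*σ B*(σ A)⁻¹*(σ B)⁻¹)⁻¹)*(σ A*(σ B)⁻¹)⁻¹ by group,
          hconj, L_inv hnn hA3 hpos, hC]
      by_cases hlt : L (σ A * (σ B)⁻¹) < L (σ A)
      · refine Or.inr ⟨σ', hC', by rw [hA'], ?_, ?_⟩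
        · rw [hB']; exact hlt
        · rw [hB']; exact hmin
      · push_neg at hlt
        have hle' : L (σ' A) ≤ L (σ' B) := by rw [hA', hB']; exact hlt
        have hbound' : L (σ' B) ≤ L (σ' A) * n := by
          rw [hA', hB']
          push_cast at hbound ⊢
          nlinarith [hmin, hbound, hpg]
        rcases IH σ' c hC' hle' hbound' with done | ⟨σ'', hC'', hA'', hBlt, hBle⟩
        · exact Or.inl done
        · refine Or.inr ⟨σ'', hC'', by rw [hA'', hA'], ?_, ?_⟩
          · rw [hA'] at hBlt
            exact hBlt
          · rw [hA', hB'] at hBle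
            linarith [hmin, hpg, hBle]
    · -- min is L (σ A * σ B); use mulB
      push_neg at hcmp
      have hmin : L (σ A * σ B) ≤ L (σ B) - L (σ A) := by
        rwa [min_eq_left (le_of_lt hcmp)] at hfail
      set σ' : MulAut F2 := MulEquiv.trans mulB σ with hσ'
      have hA' : σ' A = σ A := by
        simp [hσ', MulEquiv.trans_apply, mulB]
      have hB' : σ' B = σ A * σ B := by
        simp [hσ', MulEquiv.trans_apply, mulB, map_mul]
      have hC' : L (σ' A * σ' B * (σ' A)⁻¹ * (σ' B)⁻¹) = c := by
        rw [hA', hB',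
          show σ A*(σ A*σ B)*(σ A)⁻¹*(σ A*σ B)⁻¹
            = σ A*(σ A*σ B*(σ A)⁻¹*(σ B)⁻¹)*(σ A)⁻¹ by group,
          hconj, hC]
      by_cases hlt : L (σ A * σ B) < L (σ A)
      · refine Or.inr ⟨σ', hC', by rw [hA'], ?_, ?_⟩
        · rw [hB']; exact hlt
        · rw [hB']; exact hmin
      · push_neg at hlt
        have hle' : L (σ' A) ≤ L (σ' B) := by rw [hA', hB']; exact hlt
        have hbound' : L (σ' B) ≤ L (σ' A) * n := by
          rw [hA', hB']
          push_cast at hbound ⊢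
          nlinarith [hmin, hbound, hpg]
        rcases IH σ' c hC' hle' hbound' with done | ⟨σ'', hC'', hA'', hBlt, hBle⟩
        · exact Or.inl done
        · refine Or.inr ⟨σ'', hC'', by rw [hA'', hA'], ?_, ?_⟩
          · rw [hA'] at hBlt
            exact hBlt
          · rw [hA', hB'] at hBle
            linarith [hmin, hpg, hBle]

include hnn hconj hA3 hpos in
lemma outer (N : ℕ) : ∀ σ : MulAut F2, ∀ c : ℝ,
    L (σ A * σ B * (σ A)⁻¹ * (σ B)⁻¹) = c →
    L (σ A) + L (σ B) ≤ c/4 * N → ∃ σ', PP L σ' := by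
  induction N with
  | zero =>
    intro σ c _ hsum
    exfalso
    have h1 := hpos _ (pA σ)
    have h2 := hpos _ (pB σ)
    simp at hsum
    linarith
  | succ N IH =>
    have step : ∀ σ : MulAut F2, ∀ c : ℝ,
        L (σ A * σ B * (σ A)⁻¹ * (σ B)⁻¹) = c →
        L (σ A) + L (σ B) ≤ c/4 * (N+1) →
        L (σ A) ≤ L (σ B) → ∃ σ', PP L σ' := by
      intro σ c hC hsum hle
      have hpg := hpos _ (pA σ)
      obtain ⟨n, hn⟩ := exists_nat_ge (L (σ B) / L (σ A))
      have hbound : L (σ B) ≤ L (σ A) * n := by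
        rw [div_le_iff₀ hpg] at hn
        linarith
      rcases round hnn hconj hA3 hpos n σ c hC hle hbound with done | ⟨σ', hC', hAeq, hBlt, hBle⟩
      · exact done
      by_cases hpp : PP L σ'
      · exact ⟨σ', hpp⟩
      have hfail : min (L (σ' A * σ' B)) (L (σ' A * (σ' B)⁻¹)) ≤ |L (σ' A) - L (σ' B)| :=
        not_lt.1 hpp
      have hK := KK hnn hconj hA3 hpos (σ' A) (σ' B) (pA σ') (pB σ') (pAB σ') (pBA σ')
        (pABB σ') (pABi σ') (pBiA σ') (pABiBi σ') hfail
      rw [hC'] at hK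
      have h4 : c/4 < L (σ A) := by
        rw [hAeq] at hK
        linarith
      have hsum' : L (σ' A) + L (σ' B) ≤ c/4 * N := by
        push_cast at hsum
        rw [hAeq]
        linarith
      exact IH σ' c hC' hsum'
    intro σ c hC hsum
    rcases le_total (L (σ A)) (L (σ B)) with hle | hle
    · exact step σ c hC (by push_cast; push_cast at hsum; linarith) hle
    · set σ₁ : MulAut F2 := MulEquiv.trans swapA σ with hσ₁
      have hA1 : σ₁ A = σ B := by simp [hσ₁, MulEquiv.trans_apply, swapA]
      have hB1 : σ₁ B = σ A := by simp [hσ₁, MulEquiv.trans_apply, swapA]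
      have hC1 : L (σ₁ A * σ₁ B * (σ₁ A)⁻¹ * (σ₁ B)⁻¹) = c := by
        rw [hA1, hB1,
          show σ B*σ A*(σ B)⁻¹*(σ A)⁻¹ = (σ A*σ B*(σ A)⁻¹*(σ B)⁻¹)⁻¹ by group,
          L_inv hnn hA3 hpos, hC]
      refine step σ₁ c hC1 ?_ ?_
      · rw [hA1, hB1]; push_cast; push_cast at hsum; linarith
      · rw [hA1, hB1]; exact hle

include hnn hconj hA3 hpos in
lemma key : ∃ σ : MulAut F2, PP L σ := by
  set c : ℝ := L (A*B*A⁻¹*B⁻¹) with hc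
  have hcpos : 0 < c := hpos _ wComm
  obtain ⟨N, hN⟩ := exists_nat_ge ((L A + L B) / (c/4))
  have hsum : L A + L B ≤ c/4 * N := by
    rw [div_le_iff₀ (by linarith)] at hN
    linarith
  have h1 : (1 : MulAut F2) A = A := rfl
  refine outer hnn hconj hA3 hpos N 1 c ?_ ?_
  · simp [hc]
  · simpa using hsum

end Core

end S11Proof

open S11Proof in
/-- consequence of Algorithm 1 / Proposition `prop:termination`:
for a purely hyperbolic pseudo-length on `F(a,b)` with values in a nontrivial
subgroup `Λ ≤ ℝ`, some automorphism of `F(a,b)` carries the basis `(a,b)` to a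
ping-pong pair. -/
theorem statement11 (Λ : AddSubgroup ℝ) (hΛ : Λ ≠ ⊥)
    (ℓ : FreeGroup (Fin 2) → ↥Λ) (hℓ : IsPseudoLength ℓ)
    (hhyp : ∀ g : FreeGroup (Fin 2), g ≠ 1 → 0 < ℓ g) :
    ∃ σ : MulAut (FreeGroup (Fin 2)),
      IsPingPongPair ℓ (σ (FreeGroup.of 0)) (σ (FreeGroup.of 1)) := by
  classical
  set L : F2 → ℝ := fun g => ((ℓ g : ℝ)) with hLdef
  have coe_lt : ∀ x y : ↥Λ, ((x:ℝ) < (y:ℝ)) ↔ x < y := fun x y => Subtype.coe_lt_coe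
  have coe_le : ∀ x y : ↥Λ, ((x:ℝ) ≤ (y:ℝ)) ↔ x ≤ y := fun x y => Subtype.coe_le_coe
  have coe_max : ∀ x y : ↥Λ, ((max x y : ↥Λ) : ℝ) = max (x:ℝ) (y:ℝ) := by
    intro x y
    rcases le_total x y with h | h
    · rw [max_eq_right h, max_eq_right ((coe_le x y).2 h)]
    · rw [max_eq_left h, max_eq_left ((coe_le y x).2 h)]
  have coe_min : ∀ x y : ↥Λ, ((min x y : ↥Λ) : ℝ) = min (x:ℝ) (y:ℝ) := by
    intro x y
    rcases le_total x y with h | h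
    · rw [min_eq_left h, min_eq_left ((coe_le x y).2 h)]
    · rw [min_eq_right h, min_eq_right ((coe_le y x).2 h)]
  have coe_abs : ∀ x : ↥Λ, ((|x| : ↥Λ) : ℝ) = |(x:ℝ)| := by
    intro x
    rcases le_total 0 x with h | h
    · rw [abs_of_nonneg h, abs_of_nonneg (by exact_mod_cast h)]
    · rw [abs_of_nonpos h, abs_of_nonpos (by exact_mod_cast h)]
      push_cast
      ring
  have hnn : ∀ g, 0 ≤ L g := fun g => by exact_mod_cast hℓ.1 g
  have hconj : ∀ g h : F2, L (g*h*g⁻¹) = L h := fun g h =>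
    congrArg Subtype.val (hℓ.2.2.1 g h)
  have hpos : ∀ g : F2, g ≠ 1 → 0 < L g := fun g hg => by
    exact_mod_cast hhyp g hg
  have hA3 : ∀ g h : F2, 0 < L g → 0 < L h →
      (L (g*h) = L (g*h⁻¹) ∧ L g + L h < L (g*h)) ∨
        max (L (g*h)) (L (g*h⁻¹)) = L g + L h := by
    intro g h hg hh
    have hg' : 0 < ℓ g := by exact_mod_cast hg
    have hh' : 0 < ℓ h := by exact_mod_cast hh
    rcases hℓ.2.2.2.2 g h hg' hh' with ⟨e, lt⟩ | hm
    · exact Or.inl ⟨congrArg Subtype.val e, by exact_mod_cast lt⟩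
    · right
      have := congrArg Subtype.val hm
      rw [coe_max] at this
      rw [show L g + L h = ((ℓ g + ℓ h : ↥Λ) : ℝ) by push_cast; rfl]
      exact this
  obtain ⟨σ, hPP⟩ := key hnn hconj hA3 hpos
  refine ⟨σ, ?_, ?_, ?_⟩
  · exact_mod_cast hpos _ (pA σ)
  · exact_mod_cast hpos _ (pB σ)
  · have h := hPP
    unfold PP at h
    rw [← coe_lt, coe_abs, coe_min]
    push_cast
    exact h
end

section
/- Let Λ be a nontrivial subgroup of the additive group of real numbers and let ‖·‖ : F(a,b) → Λ₊ be a purely hyperbolic pseudo-length on the free group F(a,b). Then there exist an automorphism σ of F(a,b), elements α, β, γ, δ ∈ Λ satisfying (C1) γ − α − β ∈ 2Λ and δ − α − β ∈ 2Λ, (C2) either γ = δ > α + β or max{γ, δ} = α + β, (C3) α > 0, β > 0, |α − β| < min{γ, δ}, and a pseudo-length L on F(a,b) with L(a) = α, L(b) = β, L(ab) = γ, L(ab⁻¹) = δ, such that ‖w‖ = L(σ(w)) for all w ∈ F(a,b). -/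
namespace S12
abbrev G := FreeGroup (Fin 2)
def ga : G := FreeGroup.of 0
def gb : G := FreeGroup.of 1
def C : G := ga * gb * ga⁻¹ * gb⁻¹

def mkAut (f g : G →* G)
    (h1 : ∀ i : Fin 2, g (f (FreeGroup.of i)) = FreeGroup.of i)
    (h2 : ∀ i : Fin 2, f (g (FreeGroup.of i)) = FreeGroup.of i) : MulAut G :=
  MonoidHom.toMulEquiv f g
    (FreeGroup.ext_hom _ _ (by simpa using h1))
    (FreeGroup.ext_hom _ _ (by simpa using h2))

lemma mkAut_apply (f g : G →* G) (h1 h2) (x : G) : mkAut f g h1 h2 x = f x := rfl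

def hSwap : G →* G := FreeGroup.lift ![gb, ga]
def hInv : G →* G := FreeGroup.lift ![ga, gb⁻¹]
def hMul : G →* G := FreeGroup.lift ![ga * gb⁻¹, gb]
def hMul' : G →* G := FreeGroup.lift ![ga * gb, gb]

def aSwap : MulAut G := mkAut hSwap hSwap
  (by intro i; fin_cases i <;> simp [hSwap, ga, gb]) (by intro i; fin_cases i <;> simp [hSwap, ga, gb])
def aInv : MulAut G := mkAut hInv hInv
  (by intro i; fin_cases i <;> simp [hInv, ga, gb]) (by intro i; fin_cases i <;> simp [hInv, ga, gb])
def aMul : MulAut G := mkAut hMul hMul'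
  (by intro i; fin_cases i <;> simp [hMul, hMul', ga, gb])
  (by intro i; fin_cases i <;> simp [hMul, hMul', ga, gb])

@[simp] lemma aSwap_a : aSwap ga = gb := by simp [aSwap, mkAut_apply, hSwap, ga]
@[simp] lemma aSwap_b : aSwap gb = ga := by simp [aSwap, mkAut_apply, hSwap, gb]
@[simp] lemma aInv_a : aInv ga = ga := by simp [aInv, mkAut_apply, hInv, ga]
@[simp] lemma aInv_b : aInv gb = gb⁻¹ := by simp [aInv, mkAut_apply, hInv, gb]
@[simp] lemma aMul_a : aMul ga = ga * gb⁻¹ := by simp [aMul, mkAut_apply, hMul, ga]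
@[simp] lemma aMul_b : aMul gb = gb := by simp [aMul, mkAut_apply, hMul, gb]

lemma aSwap_C : aSwap C = C⁻¹ := by
  simp only [C, map_mul, map_inv, aSwap_a, aSwap_b]; group
lemma aInv_C : aInv C = gb⁻¹ * C⁻¹ * gb := by
  simp only [C, map_mul, map_inv, aInv_a, aInv_b]; group
lemma aMul_C : aMul C = C := by
  simp only [C, map_mul, map_inv, aMul_a, aMul_b]; group

def φ : G →* Equiv.Perm (Fin 3) := FreeGroup.lift ![Equiv.swap 0 1, Equiv.swap 1 2]
def ψ : G →* Multiplicative (ℤ × ℤ) :=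
  FreeGroup.lift ![Multiplicative.ofAdd (1,0), Multiplicative.ofAdd (0,1)]

lemma hC : C ≠ (1 : G) := by
  intro h
  have h2 : φ C = 1 := by rw [h]; simp
  simp only [C, ga, gb, map_mul, map_inv, φ, FreeGroup.lift_apply_of, Matrix.cons_val_zero,
    Matrix.cons_val_one, Matrix.head_cons] at h2
  revert h2; decide

lemma psi_of (w : G) (h : w = 1) : ψ w = 1 := by rw [h]; simp

lemma hga : ga ≠ (1:G) := fun h => by
  have h2 := psi_of _ h
  simp only [ψ, ga, FreeGroup.lift_apply_of, Matrix.cons_val_zero] at h2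
  revert h2; decide

lemma hgb : gb ≠ (1:G) := fun h => by
  have h2 := psi_of _ h
  simp only [ψ, gb, FreeGroup.lift_apply_of, Matrix.cons_val_one, Matrix.head_cons] at h2
  revert h2; decide

lemma hgagb : ga * gb ≠ (1:G) := fun h => by
  have h2 := psi_of _ h
  simp only [ψ, ga, gb, map_mul, FreeGroup.lift_apply_of, Matrix.cons_val_zero,
    Matrix.cons_val_one, Matrix.head_cons] at h2
  revert h2; decide

lemma hgabinv : ga * gb⁻¹ ≠ (1:G) := fun h => by
  have h2 := psi_of _ h
  simp only [ψ, ga, gb, map_mul, map_inv, FreeGroup.lift_apply_of, Matrix.cons_val_zero,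
    Matrix.cons_val_one, Matrix.head_cons] at h2
  revert h2; decide

lemma hgbinvga : gb⁻¹ * ga ≠ (1:G) := fun h => by
  have h2 := psi_of _ h
  simp only [ψ, ga, gb, map_mul, map_inv, FreeGroup.lift_apply_of, Matrix.cons_val_zero,
    Matrix.cons_val_one, Matrix.head_cons] at h2
  revert h2; decide

section basic
variable {Λ : Type*} [AddCommGroup Λ] [LinearOrder Λ] [IsOrderedAddMonoid Λ] {G : Type*} [Group G]
  {ℓ : G → Λ} (hℓ : IsPseudoLength ℓ)
include hℓ

lemma pl_one : ℓ 1 = 0 := by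
  by_contra hne
  have hpos : 0 < ℓ 1 := lt_of_le_of_ne (hℓ.1 1) (Ne.symm hne)
  rcases hℓ.2.2.2.2 1 1 hpos hpos with ⟨-, hlt⟩ | hmax
  · rw [one_mul] at hlt
    exact absurd hlt (not_lt.2 (le_add_of_nonneg_left (hℓ.1 1)))
  · simp only [one_mul, inv_one, max_self] at hmax
    exact hne (left_eq_add.mp hmax)

lemma pl_inv (g : G) : ℓ g⁻¹ = ℓ g := by
  have key : ∀ x : G, ℓ x⁻¹ ≤ ℓ x := by
    intro x
    rcases hℓ.2.2.2.1 1 x with h | h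
    · rw [one_mul, one_mul] at h; exact h.ge
    · rw [one_mul, one_mul, pl_one hℓ, zero_add] at h
      exact le_trans (le_max_right _ _) h
  exact le_antisymm (key g) (by simpa using key g⁻¹)

lemma pl_conj (g h : G) : ℓ (g * h * g⁻¹) = ℓ h := hℓ.2.2.1 g h

lemma pl_comm (g h : G) : ℓ (g * h) = ℓ (h * g) := by
  have := pl_conj hℓ g⁻¹ (g * h)
  simpa [mul_assoc] using this.symm

lemma pl_conj' (g h : G) : ℓ (g⁻¹ * h * g) = ℓ h := by
  simpa using pl_conj hℓ g⁻¹ h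

lemma pl_sq {g : G} (hg : 0 < ℓ g) : ℓ (g * g) = ℓ g + ℓ g := by
  rcases hℓ.2.2.2.2 g g hg hg with ⟨heq, hlt⟩ | hmax
  · rw [heq, mul_inv_cancel, pl_one hℓ] at hlt
    exact absurd hlt (not_lt.2 (add_pos hg hg).le)
  · rw [mul_inv_cancel, pl_one hℓ, max_eq_left (hℓ.1 _)] at hmax
    exact hmax

-- ping-pong transfer lemmas
lemma pp_swap {g h : G} (hpp : IsPingPongPair ℓ (h) (g)) : IsPingPongPair ℓ g h := by
  obtain ⟨h1, h2, h3⟩ := hpp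
  refine ⟨h2, h1, ?_⟩
  have e1 : ℓ (h * g) = ℓ (g * h) := pl_comm hℓ h g
  have e2 : ℓ (h * g⁻¹) = ℓ (g * h⁻¹) := by
    rw [← pl_inv hℓ (h * g⁻¹)]; congr 1; group
  rw [e1, e2, abs_sub_comm] at h3
  exact h3

lemma pp_inv {g h : G} (hpp : IsPingPongPair ℓ g h⁻¹) : IsPingPongPair ℓ g h := by
  obtain ⟨h1, h2, h3⟩ := hpp
  rw [pl_inv hℓ] at h2
  refine ⟨h1, h2, ?_⟩
  rw [pl_inv hℓ h, inv_inv, min_comm] at h3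
  exact h3

end basic

section main
variable {Λ : AddSubgroup ℝ} (ℓ : G → ↥Λ)

lemma coe_mono : Monotone (fun x : ↥Λ => (x : ℝ)) := fun _ _ h => h

lemma coe_max' (x y : ↥Λ) : ((max x y : ↥Λ) : ℝ) = max (x:ℝ) (y:ℝ) :=
  (coe_mono).map_max

lemma coe_min' (x y : ↥Λ) : ((min x y : ↥Λ) : ℝ) = min (x:ℝ) (y:ℝ) :=
  (coe_mono).map_min

lemma coe_lt' (x y : ↥Λ) : x < y ↔ (x:ℝ) < (y:ℝ) := Iff.rfl

lemma coe_pos' (x : ↥Λ) : 0 < x ↔ 0 < (x:ℝ) := Iff.rfl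

variable (hℓ : IsPseudoLength ℓ) (hhyp : ∀ g : G, g ≠ 1 → 0 < ℓ g)

section realfacts
include hℓ

lemma rnn (w : G) : 0 ≤ ((ℓ w : ℝ)) := hℓ.1 w
lemma rone : ((ℓ 1 : ℝ)) = 0 := by rw [pl_one hℓ]; rfl
lemma rinv (w : G) : ((ℓ w⁻¹ : ℝ)) = ((ℓ w : ℝ)) := congrArg (fun x : ↥Λ => (x:ℝ)) (pl_inv hℓ w)
lemma rconj (g h : G) : ((ℓ (g * h * g⁻¹) : ℝ)) = ((ℓ h : ℝ)) := congrArg (fun x : ↥Λ => (x:ℝ)) (pl_conj hℓ g h)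
lemma rcomm (g h : G) : ((ℓ (g * h) : ℝ)) = ((ℓ (h * g) : ℝ)) := congrArg (fun x : ↥Λ => (x:ℝ)) (pl_comm hℓ g h)
lemma rsq {g : G} (hg : 0 < ((ℓ g : ℝ))) : ((ℓ (g * g) : ℝ)) = ((ℓ g : ℝ)) + ((ℓ g : ℝ)) := by
  rw [pl_sq hℓ hg]; push_cast; ring

lemma rA0 (g h : G) (hg : 0 < ((ℓ g : ℝ))) (hh : 0 < ((ℓ h : ℝ))) :
    ∃ c : ↥Λ, max 0 (((ℓ (g*h) : ℝ)) - ((ℓ g : ℝ)) - ((ℓ h : ℝ))) = (c:ℝ) + (c:ℝ) := by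
  obtain ⟨c, hc⟩ := hℓ.2.1 g h hg hh
  refine ⟨c, ?_⟩
  have := congrArg (fun x : ↥Λ => (x:ℝ)) hc
  simpa [coe_max'] using this

lemma rA3 (g h : G) (hg : 0 < ((ℓ g : ℝ))) (hh : 0 < ((ℓ h : ℝ))) :
    (((ℓ (g*h) : ℝ)) = ((ℓ (g*h⁻¹) : ℝ)) ∧ ((ℓ g : ℝ)) + ((ℓ h : ℝ)) < ((ℓ (g*h) : ℝ))) ∨
      max (((ℓ (g*h) : ℝ))) (((ℓ (g*h⁻¹) : ℝ))) = ((ℓ g : ℝ)) + ((ℓ h : ℝ)) := by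
  rcases hℓ.2.2.2.2 g h hg hh with ⟨h1, h2⟩ | h3
  · exact Or.inl ⟨congrArg (fun x : ↥Λ => (x:ℝ)) h1, by exact_mod_cast h2⟩
  · right
    have := congrArg (fun x : ↥Λ => (x:ℝ)) h3
    simpa [coe_max'] using this

include hhyp
omit hℓ in
lemma rpos (w : G) (hw : w ≠ 1) : 0 < ((ℓ w : ℝ)) := hhyp w hw

end realfacts
end main

section parity
variable {Λ : AddSubgroup ℝ} (ℓ : G → ↥Λ) (hℓ : IsPseudoLength ℓ)
include hℓ

/-- Key parity lemma: `ℓ(gh) − ℓ(gh⁻¹) ∈ 2Λ` whenever all four lengths are positive. -/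
lemma parity (g h : G) (hg : 0 < ((ℓ g : ℝ))) (hh : 0 < ((ℓ h : ℝ)))
    (hγ : 0 < ((ℓ (g * h) : ℝ))) (hδ : 0 < ((ℓ (g * h⁻¹) : ℝ))) :
    ∃ c : ↥Λ, ((ℓ (g * h) : ℝ)) - ((ℓ (g * h⁻¹) : ℝ)) = (c:ℝ) + (c:ℝ) := by
  set α := ((ℓ g : ℝ)) with hα
  set β := ((ℓ h : ℝ)) with hβ
  set γ := ((ℓ (g * h) : ℝ)) with hγd
  set δ := ((ℓ (g * h⁻¹) : ℝ)) with hδd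
  -- lengths of auxiliary elements
  have hv : ((ℓ (h * g⁻¹) : ℝ)) = δ := by
    rw [← rinv ℓ hℓ (h * g⁻¹)]; rw [hδd]; congr 1; group
  have hhh : ((ℓ (h * h) : ℝ)) = β + β := rsq ℓ hℓ hh
  have key1 : ((ℓ ((g * h) * (h * g⁻¹)) : ℝ)) = β + β := by
    have e : (g * h) * (h * g⁻¹) = g * (h * h) * g⁻¹ := by group
    rw [e, rconj ℓ hℓ, hhh]
  have hvpos : 0 < ((ℓ (h * g⁻¹) : ℝ)) := by rw [hv]; exact hδ
  -- A0 on (g*h, h*g⁻¹)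
  obtain ⟨c0, hc0⟩ := rA0 ℓ hℓ (g * h) (h * g⁻¹) hγ hvpos
  rw [key1, hv] at hc0
  rcases lt_or_ge (γ + δ) (β + β) with hlt | hle
  · -- 2β > γ + δ : A0 excess positive
    rw [max_eq_right (by linarith)] at hc0
    exact ⟨ℓ h - c0 - ℓ (g * h⁻¹), by push_cast; simp only [← hα, ← hβ, ← hγd, ← hδd]; linarith⟩
  · -- 2β ≤ γ + δ
    rcases rA3 ℓ hℓ (g * h) (h * g⁻¹) hγ hvpos with ⟨heq, hlt2⟩ | hmax
    · rw [key1, hv] at hlt2; linarith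
    · rw [key1, hv] at hmax
      set T := ((ℓ ((g * h) * (h * g⁻¹)⁻¹) : ℝ)) with hT
      rcases le_or_gt T (β + β) with hTle | hTgt
      · -- max = 2β = γ + δ
        rw [max_eq_left hTle] at hmax
        exact ⟨ℓ h - ℓ (g * h⁻¹), by push_cast; simp only [← hβ, ← hδd]; linarith⟩
      · -- T = γ + δ
        rw [max_eq_right hTgt.le] at hmax
        -- rewrite T as length of g * (h*g*h⁻¹)
        have eT : (g * h) * (h * g⁻¹)⁻¹ = g * (h * g * h⁻¹) := by group
        have hTg : ((ℓ (g * (h * g * h⁻¹)) : ℝ)) = T := by rw [hT, eT]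
        have hconjg : ((ℓ (h * g * h⁻¹) : ℝ)) = α := rconj ℓ hℓ h g
        have hconjpos : 0 < ((ℓ (h * g * h⁻¹) : ℝ)) := by rw [hconjg]; exact hg
        obtain ⟨c1, hc1⟩ := rA0 ℓ hℓ g (h * g * h⁻¹) hg hconjpos
        rw [hTg, hconjg] at hc1
        rcases lt_or_ge (α + α) T with hTα | hTα
        · -- T − 2α > 0
          rw [max_eq_right (by linarith)] at hc1
          exact ⟨ℓ g + c1 - ℓ (g * h⁻¹), by push_cast; simp only [← hα, ← hδd]; linarith⟩
        · -- T ≤ 2α : symmetric argument with g,h swapped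
          have hγ' : ((ℓ (h * g) : ℝ)) = γ := (rcomm ℓ hℓ g h).symm
          have hδ' : 0 < ((ℓ (g * h⁻¹) : ℝ)) := hδ
          have hγpos' : 0 < ((ℓ (h * g) : ℝ)) := by rw [hγ']; exact hγ
          have key2 : ((ℓ ((h * g) * (g * h⁻¹)) : ℝ)) = α + α := by
            have e : (h * g) * (g * h⁻¹) = h * (g * g) * h⁻¹ := by group
            rw [e, rconj ℓ hℓ, rsq ℓ hℓ hg]
          obtain ⟨c2, hc2⟩ := rA0 ℓ hℓ (h * g) (g * h⁻¹) hγpos' hδ'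
          rw [key2, hγ'] at hc2
          rcases lt_or_ge (γ + δ) (α + α) with hlt3 | hle3
          · rw [max_eq_right (by linarith)] at hc2
            exact ⟨ℓ g - c2 - ℓ (g * h⁻¹), by push_cast; simp only [← hα, ← hδd]; linarith⟩
          · -- 2α ≤ γ+δ = T ≤ 2α, so γ+δ = 2α
            have : γ + δ = α + α := le_antisymm (hmax ▸ hTα) hle3
            exact ⟨ℓ g - ℓ (g * h⁻¹), by push_cast; simp only [← hα, ← hδd]; linarith⟩
end parity

section step
variable {Λ : AddSubgroup ℝ} (ℓ : G → ↥Λ)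

lemma coe_abs' (x : ↥Λ) : ((|x| : ↥Λ) : ℝ) = |(x:ℝ)| := by
  rcases le_total 0 x with h | h
  · rw [abs_of_nonneg h, abs_of_nonneg (by exact_mod_cast h : (0:ℝ) ≤ (x:ℝ))]
  · rw [abs_of_nonpos h, abs_of_nonpos (by exact_mod_cast h : (x:ℝ) ≤ 0)]
    push_cast; ring

/-- minimum of the two generator lengths -/
def mA (ρ : MulAut G) : ℝ := min ((ℓ (ρ ga) : ℝ)) ((ℓ (ρ gb) : ℝ))
/-- maximum of the two generator lengths -/
def MA (ρ : MulAut G) : ℝ := max ((ℓ (ρ ga) : ℝ)) ((ℓ (ρ gb) : ℝ))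

variable (hℓ : IsPseudoLength ℓ) (hhyp : ∀ g : G, g ≠ 1 → 0 < ℓ g)
include hℓ hhyp

lemma core (ρ : MulAut G)
    (hfail : ¬ IsPingPongPair ℓ (ρ ga) (ρ gb))
    (hxy : ((ℓ (ρ gb) : ℝ)) ≤ ((ℓ (ρ ga) : ℝ)))
    (hδγ : ((ℓ (ρ ga * (ρ gb)⁻¹) : ℝ)) ≤ ((ℓ (ρ ga * ρ gb) : ℝ))) :
    ∃ ρ' : MulAut G,
      ((ℓ (ρ' C) : ℝ)) = ((ℓ (ρ C) : ℝ)) ∧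
      0 < mA ℓ ρ' ∧ mA ℓ ρ' ≤ mA ℓ ρ ∧ MA ℓ ρ' + mA ℓ ρ' ≤ MA ℓ ρ ∧
      (mA ℓ ρ' < mA ℓ ρ → MA ℓ ρ' = mA ℓ ρ) ∧
      ((ℓ (ρ C) : ℝ)) ≤ 2 * MA ℓ ρ := by
  have hmapne : ∀ w : G, w ≠ 1 → ρ w ≠ 1 := by
    intro w hw hc
    exact hw (by rwa [EmbeddingLike.map_eq_one_iff] at hc)
  set p := ρ ga with hp
  set q := ρ gb with hq
  have hp1 : p ≠ 1 := hmapne ga hga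
  have hq1 : q ≠ 1 := hmapne gb hgb
  have hx : 0 < ((ℓ p : ℝ)) := hhyp p hp1
  have hy : 0 < ((ℓ q : ℝ)) := hhyp q hq1
  have hpq : p * q = ρ (ga * gb) := by rw [map_mul]
  have hpqi : p * q⁻¹ = ρ (ga * gb⁻¹) := by rw [map_mul, map_inv]
  have hγpos : 0 < ((ℓ (p * q) : ℝ)) := by rw [hpq]; exact hhyp _ (hmapne _ hgagb)
  have hδpos : 0 < ((ℓ (p * q⁻¹) : ℝ)) := by rw [hpqi]; exact hhyp _ (hmapne _ hgabinv)
  -- failure gives δ ≤ x - y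
  have hminle : min (ℓ (p * q)) (ℓ (p * q⁻¹)) ≤ |ℓ p - ℓ q| := by
    by_contra hcon
    exact hfail ⟨hx, hy, not_le.1 hcon⟩
  have hminleR : min ((ℓ (p * q) : ℝ)) ((ℓ (p * q⁻¹) : ℝ)) ≤ |((ℓ p : ℝ)) - ((ℓ q : ℝ))| := by
    have h2 := coe_mono hminle
    simp only [coe_min', coe_abs'] at h2
    push_cast at h2
    exact h2
  have habs : |((ℓ p : ℝ)) - ((ℓ q : ℝ))| = ((ℓ p : ℝ)) - ((ℓ q : ℝ)) :=
    abs_of_nonneg (by linarith)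
  have hδle : ((ℓ (p * q⁻¹) : ℝ)) ≤ ((ℓ p : ℝ)) - ((ℓ q : ℝ)) := by
    rw [habs] at hminleR
    calc ((ℓ (p * q⁻¹) : ℝ)) = min ((ℓ (p * q) : ℝ)) ((ℓ (p * q⁻¹) : ℝ)) :=
          (min_eq_right hδγ).symm
    _ ≤ _ := hminleR
  -- γ = x + y
  have hγeq : ((ℓ (p * q) : ℝ)) = ((ℓ p : ℝ)) + ((ℓ q : ℝ)) := by
    rcases rA3 ℓ hℓ p q hx hy with ⟨heq, hlt⟩ | hmax
    · rw [heq] at hlt; linarith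
    · rw [max_eq_left hδγ] at hmax; exact hmax
  -- values of the new pair
  have hnew_a : (ρ * aMul) ga = p * q⁻¹ := by
    rw [MulAut.mul_apply, aMul_a, map_mul, map_inv]
  have hnew_b : (ρ * aMul) gb = q := by rw [MulAut.mul_apply, aMul_b]
  have hkC : ((ℓ ((ρ * aMul) C) : ℝ)) = ((ℓ (ρ C) : ℝ)) := by
    rw [MulAut.mul_apply, aMul_C]
  have hmAo : mA ℓ ρ = ((ℓ q : ℝ)) := min_eq_right hxy
  have hMAo : MA ℓ ρ = ((ℓ p : ℝ)) := max_eq_left hxy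
  have hmAn : mA ℓ (ρ * aMul) = min ((ℓ (p * q⁻¹) : ℝ)) ((ℓ q : ℝ)) := by
    rw [mA, hnew_a, hnew_b]
  have hMAn : MA ℓ (ρ * aMul) = max ((ℓ (p * q⁻¹) : ℝ)) ((ℓ q : ℝ)) := by
    rw [MA, hnew_a, hnew_b]
  -- κ bound
  have hκ : ((ℓ (ρ C) : ℝ)) ≤ 2 * ((ℓ p : ℝ)) := by
    have hsq : ((ℓ (p * p) : ℝ)) = ((ℓ p : ℝ)) + ((ℓ p : ℝ)) := rsq ℓ hℓ hx
    have euv : (p * q) * (q⁻¹ * p) = p * p := by group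
    have euv' : (p * q) * (q⁻¹ * p)⁻¹ = p * q * p⁻¹ * q := by group
    have hv2 : ((ℓ (q⁻¹ * p) : ℝ)) = ((ℓ (p * q⁻¹) : ℝ)) := rcomm ℓ hℓ q⁻¹ p
    have hv2pos : 0 < ((ℓ (q⁻¹ * p) : ℝ)) := by rw [hv2]; exact hδpos
    have hEle : ((ℓ (p * q * p⁻¹ * q) : ℝ)) ≤ ((ℓ p : ℝ)) + ((ℓ p : ℝ)) := by
      rcases rA3 ℓ hℓ (p * q) (q⁻¹ * p) hγpos hv2pos with ⟨heq, -⟩ | hmax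
      · rw [euv, euv', hsq] at heq; rw [← heq]
      · rw [euv, euv', hsq, hv2] at hmax
        have h1 : ((ℓ (p * q * p⁻¹ * q) : ℝ)) ≤
            max (((ℓ p : ℝ)) + ((ℓ p : ℝ))) ((ℓ (p * q * p⁻¹ * q) : ℝ)) := le_max_right _ _
        rw [hmax] at h1
        linarith
    have hwconj : ((ℓ (p * q * p⁻¹) : ℝ)) = ((ℓ q : ℝ)) := rconj ℓ hℓ p q
    have hwpos : 0 < ((ℓ (p * q * p⁻¹) : ℝ)) := by rw [hwconj]; exact hy
    have hqinv : ((ℓ (q⁻¹) : ℝ)) = ((ℓ q : ℝ)) := rinv ℓ hℓ q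
    have hqinvpos : 0 < ((ℓ (q⁻¹) : ℝ)) := by rw [hqinv]; exact hy
    have eC : p * q * p⁻¹ * q⁻¹ = ρ C := by
      simp only [C, map_mul, map_inv]; rfl
    have eE2 : (p * q * p⁻¹) * (q⁻¹)⁻¹ = p * q * p⁻¹ * q := by rw [inv_inv]
    rcases rA3 ℓ hℓ (p * q * p⁻¹) q⁻¹ hwpos hqinvpos with ⟨heq, -⟩ | hmax
    · rw [eE2, show (p * q * p⁻¹) * q⁻¹ = ρ C from eC] at heq
      rw [heq]; linarith
    · rw [eE2, hwconj, hqinv, show (p * q * p⁻¹) * q⁻¹ = ρ C from eC] at hmax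
      have h1 : ((ℓ (ρ C) : ℝ)) ≤ max ((ℓ (ρ C) : ℝ)) ((ℓ (p * q * p⁻¹ * q) : ℝ)) :=
        le_max_left _ _
      rw [hmax] at h1
      linarith
  refine ⟨ρ * aMul, hkC, ?_, ?_, ?_, ?_, ?_⟩
  · rw [hmAn]; exact lt_min hδpos hy
  · rw [hmAn, hmAo]; exact min_le_right _ _
  · rw [hmAn, hMAn, hMAo, max_add_min]; linarith
  · intro hlt
    rw [hmAn, hmAo] at hlt
    have hδy : ((ℓ (p * q⁻¹) : ℝ)) < ((ℓ q : ℝ)) := by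
      by_contra hge
      rw [min_eq_right (not_lt.1 hge)] at hlt
      exact lt_irrefl _ hlt
    rw [hMAn, hmAo, max_eq_right hδy.le]
  · rw [hMAo]; exact hκ

end step

section step2
variable {Λ : AddSubgroup ℝ} (ℓ : G → ↥Λ) (hℓ : IsPseudoLength ℓ)
include hℓ

lemma rconj'' (g h : G) : ((ℓ (g⁻¹ * h * g) : ℝ)) = ((ℓ h : ℝ)) :=
  congrArg (fun x : ↥Λ => (x:ℝ)) (pl_conj' hℓ g h)

lemma kSwap (ρ : MulAut G) : ((ℓ ((ρ * aSwap) C) : ℝ)) = ((ℓ (ρ C) : ℝ)) := by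
  rw [MulAut.mul_apply, aSwap_C, map_inv, rinv ℓ hℓ]

lemma kInv (ρ : MulAut G) : ((ℓ ((ρ * aInv) C) : ℝ)) = ((ℓ (ρ C) : ℝ)) := by
  rw [MulAut.mul_apply, aInv_C, map_mul, map_mul, map_inv, map_inv,
    rconj'' ℓ hℓ, rinv ℓ hℓ]

lemma mSwap (ρ : MulAut G) : mA ℓ (ρ * aSwap) = mA ℓ ρ := by
  simp only [mA, MulAut.mul_apply, aSwap_a, aSwap_b]; exact min_comm _ _

lemma MSwap (ρ : MulAut G) : MA ℓ (ρ * aSwap) = MA ℓ ρ := by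
  simp only [MA, MulAut.mul_apply, aSwap_a, aSwap_b]; exact max_comm _ _

lemma mInv (ρ : MulAut G) : mA ℓ (ρ * aInv) = mA ℓ ρ := by
  simp only [mA, MulAut.mul_apply, aInv_a, aInv_b, map_inv, rinv ℓ hℓ]

lemma MInv (ρ : MulAut G) : MA ℓ (ρ * aInv) = MA ℓ ρ := by
  simp only [MA, MulAut.mul_apply, aInv_a, aInv_b, map_inv, rinv ℓ hℓ]

lemma failSwap (ρ : MulAut G) (h : ¬ IsPingPongPair ℓ (ρ ga) (ρ gb)) :
    ¬ IsPingPongPair ℓ ((ρ * aSwap) ga) ((ρ * aSwap) gb) := by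
  intro hpp
  rw [MulAut.mul_apply, MulAut.mul_apply, aSwap_a, aSwap_b] at hpp
  exact h (pp_swap hℓ hpp)

lemma failInv (ρ : MulAut G) (h : ¬ IsPingPongPair ℓ (ρ ga) (ρ gb)) :
    ¬ IsPingPongPair ℓ ((ρ * aInv) ga) ((ρ * aInv) gb) := by
  intro hpp
  rw [MulAut.mul_apply, MulAut.mul_apply, aInv_a, aInv_b, map_inv] at hpp
  exact h (pp_inv hℓ hpp)

variable (hhyp : ∀ g : G, g ≠ 1 → 0 < ℓ g)
include hhyp

lemma step (ρ : MulAut G) (hfail : ¬ IsPingPongPair ℓ (ρ ga) (ρ gb)) :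
    ∃ ρ' : MulAut G,
      ((ℓ (ρ' C) : ℝ)) = ((ℓ (ρ C) : ℝ)) ∧
      0 < mA ℓ ρ' ∧ mA ℓ ρ' ≤ mA ℓ ρ ∧ MA ℓ ρ' + mA ℓ ρ' ≤ MA ℓ ρ ∧
      (mA ℓ ρ' < mA ℓ ρ → MA ℓ ρ' = mA ℓ ρ) ∧
      ((ℓ (ρ C) : ℝ)) ≤ 2 * MA ℓ ρ := by
  rcases le_total ((ℓ (ρ gb) : ℝ)) ((ℓ (ρ ga) : ℝ)) with hxy | hxy
  · -- x ≥ y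
    rcases le_total ((ℓ (ρ ga * (ρ gb)⁻¹) : ℝ)) ((ℓ (ρ ga * ρ gb) : ℝ)) with hd | hd
    · exact core ℓ hℓ hhyp ρ hfail hxy hd
    · -- invert second generator
      set ρ₁ := ρ * aInv with hρ₁
      have e_a : ρ₁ ga = ρ ga := by rw [hρ₁, MulAut.mul_apply, aInv_a]
      have e_b : ρ₁ gb = (ρ gb)⁻¹ := by rw [hρ₁, MulAut.mul_apply, aInv_b, map_inv]
      have hxy₁ : ((ℓ (ρ₁ gb) : ℝ)) ≤ ((ℓ (ρ₁ ga) : ℝ)) := by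
        rw [e_a, e_b, rinv ℓ hℓ]; exact hxy
      have hd₁ : ((ℓ (ρ₁ ga * (ρ₁ gb)⁻¹) : ℝ)) ≤ ((ℓ (ρ₁ ga * ρ₁ gb) : ℝ)) := by
        rw [e_a, e_b, inv_inv]; exact hd
      obtain ⟨ρ', hk, c1, c2, c3, c4, c5⟩ :=
        core ℓ hℓ hhyp ρ₁ (failInv ℓ hℓ ρ hfail) hxy₁ hd₁
      rw [kInv ℓ hℓ ρ] at hk c5
      rw [mInv ℓ hℓ ρ] at c2 c4
      rw [MInv ℓ hℓ ρ] at c3 c5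
      exact ⟨ρ', hk, c1, c2, c3, c4, c5⟩
  · -- swap generators
    set ρ₂ := ρ * aSwap with hρ₂
    have e_a : ρ₂ ga = ρ gb := by rw [hρ₂, MulAut.mul_apply, aSwap_a]
    have e_b : ρ₂ gb = ρ ga := by rw [hρ₂, MulAut.mul_apply, aSwap_b]
    have hfail₂ := failSwap ℓ hℓ ρ hfail
    have hxy₂ : ((ℓ (ρ₂ gb) : ℝ)) ≤ ((ℓ (ρ₂ ga) : ℝ)) := by rw [e_a, e_b]; exact hxy
    rcases le_total ((ℓ (ρ₂ ga * (ρ₂ gb)⁻¹) : ℝ)) ((ℓ (ρ₂ ga * ρ₂ gb) : ℝ)) with hd | hd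
    · obtain ⟨ρ', hk, c1, c2, c3, c4, c5⟩ := core ℓ hℓ hhyp ρ₂ hfail₂ hxy₂ hd
      rw [kSwap ℓ hℓ ρ] at hk c5
      rw [mSwap ℓ hℓ ρ] at c2 c4
      rw [MSwap ℓ hℓ ρ] at c3 c5
      exact ⟨ρ', hk, c1, c2, c3, c4, c5⟩
    · set ρ₃ := ρ₂ * aInv with hρ₃
      have e3_a : ρ₃ ga = ρ₂ ga := by rw [hρ₃, MulAut.mul_apply, aInv_a]
      have e3_b : ρ₃ gb = (ρ₂ gb)⁻¹ := by rw [hρ₃, MulAut.mul_apply, aInv_b, map_inv]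
      have hxy₃ : ((ℓ (ρ₃ gb) : ℝ)) ≤ ((ℓ (ρ₃ ga) : ℝ)) := by
        rw [e3_a, e3_b, rinv ℓ hℓ]; exact hxy₂
      have hd₃ : ((ℓ (ρ₃ ga * (ρ₃ gb)⁻¹) : ℝ)) ≤ ((ℓ (ρ₃ ga * ρ₃ gb) : ℝ)) := by
        rw [e3_a, e3_b, inv_inv]; exact hd
      obtain ⟨ρ', hk, c1, c2, c3, c4, c5⟩ :=
        core ℓ hℓ hhyp ρ₃ (failInv ℓ hℓ ρ₂ hfail₂) hxy₃ hd₃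
      rw [kInv ℓ hℓ ρ₂, kSwap ℓ hℓ ρ] at hk c5
      rw [mInv ℓ hℓ ρ₂, mSwap ℓ hℓ ρ] at c2 c4
      rw [MInv ℓ hℓ ρ₂, MSwap ℓ hℓ ρ] at c3 c5
      exact ⟨ρ', hk, c1, c2, c3, c4, c5⟩

end step2

section chain
variable {Λ : AddSubgroup ℝ} (ℓ : G → ↥Λ) (hℓ : IsPseudoLength ℓ)
  (hhyp : ∀ g : G, g ≠ 1 → 0 < ℓ g)
include hℓ hhyp

lemma exists_pp : ∃ ρ : MulAut G, IsPingPongPair ℓ (ρ ga) (ρ gb) := by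
  by_contra hall
  push_neg at hall
  have hst : ∀ ρ : MulAut G, ∃ ρ' : MulAut G,
      ((ℓ (ρ' C) : ℝ)) = ((ℓ (ρ C) : ℝ)) ∧
      0 < mA ℓ ρ' ∧ mA ℓ ρ' ≤ mA ℓ ρ ∧ MA ℓ ρ' + mA ℓ ρ' ≤ MA ℓ ρ ∧
      (mA ℓ ρ' < mA ℓ ρ → MA ℓ ρ' = mA ℓ ρ) ∧
      ((ℓ (ρ C) : ℝ)) ≤ 2 * MA ℓ ρ := fun ρ => step ℓ hℓ hhyp ρ (hall ρ)
  choose nxt hn using hst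
  set f : ℕ → MulAut G := fun n => nxt^[n] 1 with hf
  have hsucc : ∀ n, f (n+1) = nxt (f n) := fun n => Function.iterate_succ_apply' nxt n 1
  have hf0 : f 0 = 1 := rfl
  have hκc : ∀ n, ((ℓ (f n C) : ℝ)) = ((ℓ C : ℝ)) := by
    intro n
    induction n with
    | zero => rw [hf0, MulAut.one_apply]
    | succ n ih => rw [hsucc n, (hn (f n)).1]; exact ih
  have hκpos : 0 < ((ℓ C : ℝ)) := hhyp C hC
  have hm : ∀ n, 0 < mA ℓ (f n) := by
    intro n
    cases n with
    | zero =>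
      rw [hf0]
      have e1 : (1 : MulAut G) ga = ga := MulAut.one_apply _ _
      have e2 : (1 : MulAut G) gb = gb := MulAut.one_apply _ _
      rw [mA, e1, e2]
      exact lt_min (hhyp _ hga) (hhyp _ hgb)
    | succ n => rw [hsucc n]; exact (hn (f n)).2.1
  have hmono : ∀ n, mA ℓ (f (n+1)) ≤ mA ℓ (f n) := fun n => by
    rw [hsucc n]; exact (hn (f n)).2.2.1
  have hsum : ∀ n, MA ℓ (f (n+1)) + mA ℓ (f (n+1)) ≤ MA ℓ (f n) := fun n => by
    rw [hsucc n]; exact (hn (f n)).2.2.2.1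
  have hdec : ∀ n, mA ℓ (f (n+1)) < mA ℓ (f n) → MA ℓ (f (n+1)) = mA ℓ (f n) := fun n => by
    rw [hsucc n]; exact (hn (f n)).2.2.2.2.1
  have hκb : ∀ n, ((ℓ C : ℝ)) ≤ 2 * MA ℓ (f n) := fun n => by
    rw [← hκc n]; exact (hn (f n)).2.2.2.2.2
  have hmM : ∀ n, mA ℓ (f n) ≤ MA ℓ (f n) := fun n => min_le_max
  have claimA : ∀ n : ℕ, MA ℓ (f n) + (n:ℝ) * mA ℓ (f n) ≤ MA ℓ (f 0) := by
    intro n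
    induction n with
    | zero => simp
    | succ n ih =>
      have h1 := hsum n
      have h2 := hmono n
      have h4 : (n:ℝ) * mA ℓ (f (n+1)) ≤ (n:ℝ) * mA ℓ (f n) :=
        mul_le_mul_of_nonneg_left h2 (by positivity)
      push_cast
      linarith
  have hbound : ∀ n : ℕ, (n:ℝ) * mA ℓ (f n) ≤ MA ℓ (f 0) := by
    intro n
    have h1 := claimA n
    have h2 := hm n
    have h3 := hmM n
    linarith
  obtain ⟨n₀', hn₀'⟩ := exists_nat_gt (4 * MA ℓ (f 0) / ((ℓ C : ℝ)))
  set n₀ := n₀' + 1 with hn₀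
  have hn₀pos : 0 < (n₀:ℝ) := by positivity
  have hgt : 4 * MA ℓ (f 0) / ((ℓ C : ℝ)) < (n₀:ℝ) := by
    have : (n₀':ℝ) < (n₀:ℝ) := by rw [hn₀]; push_cast; linarith
    linarith
  have hm₀ : mA ℓ (f n₀) < ((ℓ C : ℝ)) / 4 := by
    rw [div_lt_iff₀ hκpos] at hgt
    have hb := hbound n₀
    have h7 : (n₀:ℝ) * (4 * mA ℓ (f n₀)) < (n₀:ℝ) * ((ℓ C : ℝ)) := by nlinarith
    have h8 := lt_of_mul_lt_mul_left h7 hn₀pos.le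
    linarith
  have hanti : Antitone (fun n => mA ℓ (f n)) := antitone_nat_of_succ_le hmono
  by_cases hstag : ∀ k, n₀ ≤ k → mA ℓ (f (k+1)) = mA ℓ (f k)
  · have hconst : ∀ j : ℕ, mA ℓ (f (n₀ + j)) = mA ℓ (f n₀) := by
      intro j
      induction j with
      | zero => rfl
      | succ j ih =>
        rw [show n₀ + (j+1) = (n₀ + j) + 1 from rfl, hstag (n₀+j) (Nat.le_add_right _ _), ih]
    obtain ⟨N, hN⟩ := exists_nat_gt (MA ℓ (f 0) / mA ℓ (f n₀))
    have hb := hbound (n₀ + N)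
    rw [hconst N] at hb
    have hmpos := hm n₀
    rw [div_lt_iff₀ hmpos] at hN
    have h9 : (N:ℝ) * mA ℓ (f n₀) ≤ ((n₀ + N : ℕ):ℝ) * mA ℓ (f n₀) := by
      apply mul_le_mul_of_nonneg_right _ hmpos.le
      push_cast; linarith
    linarith
  · push_neg at hstag
    obtain ⟨k, hk₀, hkne⟩ := hstag
    have hklt : mA ℓ (f (k+1)) < mA ℓ (f k) := lt_of_le_of_ne (hmono k) hkne
    have hM1 := hdec k hklt
    have hb := hκb (k+1)
    rw [hM1] at hb
    have h8 : mA ℓ (f k) ≤ mA ℓ (f n₀) := hanti hk₀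
    linarith

end chain

section final
variable {Λ : AddSubgroup ℝ} (ℓ : G → ↥Λ) (hℓ : IsPseudoLength ℓ)
include hℓ

lemma c1pair (g h : G) (hg : 0 < ℓ g) (hh : 0 < ℓ h)
    (hγ : 0 < ℓ (g * h)) (hδ : 0 < ℓ (g * h⁻¹)) :
    (∃ c : ↥Λ, ℓ (g * h) - ℓ g - ℓ h = c + c) ∧
      (∃ c : ↥Λ, ℓ (g * h⁻¹) - ℓ g - ℓ h = c + c) := by
  have hgR : 0 < ((ℓ g : ℝ)) := hg
  have hhR : 0 < ((ℓ h : ℝ)) := hh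
  have hγR : 0 < ((ℓ (g * h) : ℝ)) := hγ
  have hδR : 0 < ((ℓ (g * h⁻¹) : ℝ)) := hδ
  obtain ⟨cp, hcp⟩ := parity ℓ hℓ g h hgR hhR hγR hδR
  rcases hℓ.2.2.2.2 g h hg hh with ⟨heq, hlt⟩ | hmax
  · obtain ⟨c, hc⟩ := hℓ.2.1 g h hg hh
    have hltR : ((ℓ g : ℝ)) + ((ℓ h : ℝ)) < ((ℓ (g * h) : ℝ)) := by exact_mod_cast hlt
    rw [max_eq_right (by rw [← Subtype.coe_le_coe]; push_cast; linarith)] at hc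
    exact ⟨⟨c, hc⟩, ⟨c, by rw [← heq]; exact hc⟩⟩
  · rcases le_total (ℓ (g * h⁻¹)) (ℓ (g * h)) with hdg | hdg
    · have hγeq : ℓ (g * h) = ℓ g + ℓ h := by rw [max_eq_left hdg] at hmax; exact hmax
      have hγeqR : ((ℓ (g * h) : ℝ)) = ((ℓ g : ℝ)) + ((ℓ h : ℝ)) := by exact_mod_cast hγeq
      constructor
      · exact ⟨0, by apply Subtype.ext; push_cast; linarith⟩
      · exact ⟨-cp, by apply Subtype.ext; push_cast; linarith⟩
    · have hδeq : ℓ (g * h⁻¹) = ℓ g + ℓ h := by rw [max_eq_right hdg] at hmax; exact hmax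
      have hδeqR : ((ℓ (g * h⁻¹) : ℝ)) = ((ℓ g : ℝ)) + ((ℓ h : ℝ)) := by exact_mod_cast hδeq
      constructor
      · exact ⟨cp, by apply Subtype.ext; push_cast; linarith⟩
      · exact ⟨0, by apply Subtype.ext; push_cast; linarith⟩

lemma pl_comp (ρ : MulAut G) : IsPseudoLength (fun w => ℓ (ρ w)) := by
  refine ⟨fun g => hℓ.1 _, ?_, ?_, ?_, ?_⟩
  · intro g h hg hh
    have := hℓ.2.1 (ρ g) (ρ h) hg hh
    simpa only [map_mul] using this
  · intro g h
    simp only [map_mul, map_inv]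
    exact hℓ.2.2.1 (ρ g) (ρ h)
  · intro g h
    simp only [map_mul, map_inv]
    exact hℓ.2.2.2.1 (ρ g) (ρ h)
  · intro g h hg hh
    have := hℓ.2.2.2.2 (ρ g) (ρ h) hg hh
    simpa only [map_mul, map_inv] using this

end final

end S12

/-- Theorem `thm:description_of_orbits`: for a purely hyperbolic
pseudo-length `‖·‖` on `F(a,b)` with values in a nontrivial subgroup `Λ ≤ ℝ`, there
are an automorphism `σ`, elements `α,β,γ,δ ∈ Λ` satisfying (C1)–(C3), and a
pseudo-length `L` with `L(a) = α`, `L(b) = β`, `L(ab) = γ`, `L(ab⁻¹) = δ`, such that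
`‖w‖ = L(σ(w))` for all `w`. -/
theorem statement12 (Λ : AddSubgroup ℝ) (hΛ : Λ ≠ ⊥)
    (ℓ : FreeGroup (Fin 2) → ↥Λ) (hℓ : IsPseudoLength ℓ)
    (hhyp : ∀ g : FreeGroup (Fin 2), g ≠ 1 → 0 < ℓ g) :
    ∃ (σ : MulAut (FreeGroup (Fin 2))) (α β γ δ : ↥Λ)
      (L : FreeGroup (Fin 2) → ↥Λ),
      (∃ c : ↥Λ, γ - α - β = c + c) ∧ (∃ c : ↥Λ, δ - α - β = c + c) ∧
      ((γ = δ ∧ α + β < γ) ∨ max γ δ = α + β) ∧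
      (0 < α ∧ 0 < β ∧ |α - β| < min γ δ) ∧
      IsPseudoLength L ∧
      L (FreeGroup.of 0) = α ∧ L (FreeGroup.of 1) = β ∧
      L (FreeGroup.of 0 * FreeGroup.of 1) = γ ∧
      L (FreeGroup.of 0 * (FreeGroup.of 1)⁻¹) = δ ∧
      ∀ w : FreeGroup (Fin 2), ℓ w = L (σ w) := by
  obtain ⟨ρ, hpp⟩ := S12.exists_pp ℓ hℓ hhyp
  obtain ⟨hα, hβ, habs⟩ := hpp
  have hminpos : 0 < min (ℓ (ρ S12.ga * ρ S12.gb)) (ℓ (ρ S12.ga * (ρ S12.gb)⁻¹)) :=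
    lt_of_le_of_lt (abs_nonneg _) habs
  have hγpos : 0 < ℓ (ρ S12.ga * ρ S12.gb) := (lt_min_iff.1 hminpos).1
  have hδpos : 0 < ℓ (ρ S12.ga * (ρ S12.gb)⁻¹) := (lt_min_iff.1 hminpos).2
  obtain ⟨hc1γ, hc1δ⟩ := S12.c1pair ℓ hℓ (ρ S12.ga) (ρ S12.gb) hα hβ hγpos hδpos
  refine ⟨ρ⁻¹, ℓ (ρ S12.ga), ℓ (ρ S12.gb), ℓ (ρ S12.ga * ρ S12.gb),
    ℓ (ρ S12.ga * (ρ S12.gb)⁻¹), fun w => ℓ (ρ w),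
    hc1γ, hc1δ, hℓ.2.2.2.2 (ρ S12.ga) (ρ S12.gb) hα hβ, ⟨hα, hβ, habs⟩,
    S12.pl_comp ℓ hℓ ρ, rfl, rfl, ?_, ?_, ?_⟩
  · show ℓ (ρ (FreeGroup.of 0 * FreeGroup.of 1)) = _
    rw [map_mul]; rfl
  · show ℓ (ρ (FreeGroup.of 0 * (FreeGroup.of 1)⁻¹)) = _
    rw [map_mul, map_inv]; rfl
  · intro w
    show ℓ w = ℓ (ρ (ρ⁻¹ w))
    rw [MulAut.apply_inv_self]
end

section
/- Let ‖·‖ be a pseudo-length on a group G and let (g,h) be a ping-pong pair. Then ‖gh‖ − ‖g‖ − ‖h‖ ∈ 2Λ and ‖gh⁻¹‖ − ‖g‖ − ‖h‖ ∈ 2Λ. -/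
theorem pl_one {Λ : Type*} [AddCommGroup Λ] [LinearOrder Λ] [IsOrderedAddMonoid Λ] {G : Type*} [Group G]
    {ℓ : G → Λ} (hℓ : IsPseudoLength ℓ) : ℓ (1 : G) = 0 := by
  rcases (hℓ.1 (1:G)).eq_or_lt with h1 | h1
  · exact h1.symm
  · rcases hℓ.2.2.2.2 1 1 h1 h1 with ⟨_, hlt⟩ | hmax
    · simp only [one_mul, mul_one] at hlt
      exact absurd hlt (not_lt.mpr (le_add_of_nonneg_left h1.le))
    · simp only [one_mul, mul_one, inv_one, max_self] at hmax
      exact absurd (left_eq_add.mp hmax) h1.ne'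

theorem pl_inv {Λ : Type*} [AddCommGroup Λ] [LinearOrder Λ] [IsOrderedAddMonoid Λ] {G : Type*} [Group G]
    {ℓ : G → Λ} (hℓ : IsPseudoLength ℓ) (x : G) : ℓ x⁻¹ = ℓ x := by
  have hone := pl_one hℓ
  have h1 : ℓ x⁻¹ ≤ ℓ x := by
    rcases hℓ.2.2.2.1 1 x with he | hle
    · simp only [one_mul] at he; rw [← he]
    · simp only [one_mul, hone, zero_add, max_le_iff] at hle; exact hle.2
  have h2 : ℓ x ≤ ℓ x⁻¹ := by
    rcases hℓ.2.2.2.1 1 x⁻¹ with he | hle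
    · simp only [one_mul, inv_inv] at he; rw [he]
    · simp only [one_mul, inv_inv, hone, zero_add, max_le_iff] at hle; exact hle.2
  exact le_antisymm h1 h2

theorem pl_comm {Λ : Type*} [AddCommGroup Λ] [LinearOrder Λ] [IsOrderedAddMonoid Λ] {G : Type*} [Group G]
    {ℓ : G → Λ} (hℓ : IsPseudoLength ℓ) (x y : G) : ℓ (x * y) = ℓ (y * x) := by
  have := hℓ.2.2.1 x (y * x)
  rw [← this]; congr 1; group

/-- Key lemma: if `ℓ (g*h) = ℓ g + ℓ h` and the ping-pong inequalities hold for `g*h⁻¹`,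
then `ℓ (g*h⁻¹) - ℓ g - ℓ h ∈ 2Λ`. -/
theorem pl_key {Λ : Type*} [AddCommGroup Λ] [LinearOrder Λ] [IsOrderedAddMonoid Λ] {G : Type*} [Group G]
    {ℓ : G → Λ} (hℓ : IsPseudoLength ℓ) (g h : G) (hg : 0 < ℓ g) (hh : 0 < ℓ h)
    (h1 : ℓ g < ℓ (g * h⁻¹) + ℓ h) (h2 : ℓ h < ℓ (g * h⁻¹) + ℓ g)
    (hsum : ℓ (g * h) = ℓ g + ℓ h) :
    ∃ c : Λ, ℓ (g * h⁻¹) - ℓ g - ℓ h = c + c := by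
  have hinv := pl_inv hℓ
  have hcomm := pl_comm hℓ
  have hone := pl_one hℓ
  obtain ⟨nonneg, A0, A1, A2, A3⟩ := hℓ
  have hb : ℓ (h * g⁻¹) = ℓ (g * h⁻¹) := by
    rw [hcomm h g⁻¹, ← hinv (g⁻¹ * h)]
    rw [show (g⁻¹ * h)⁻¹ = h⁻¹ * g by group, hcomm]
  have hsq : ℓ (h * h) = ℓ h + ℓ h := by
    rcases A3 h h hh hh with ⟨he, hlt⟩ | hmax
    · rw [mul_inv_cancel, hone] at he
      rw [he] at hlt
      exact absurd hlt (not_lt.mpr (add_pos hh hh).le)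
    · rw [mul_inv_cancel, hone, max_eq_left (nonneg (h*h))] at hmax
      exact hmax
  have e1 : ℓ ((g * h) * (h * g⁻¹)) = ℓ h + ℓ h := by
    rw [show (g * h) * (h * g⁻¹) = g * (h * h) * g⁻¹ by group, A1, hsq]
  have e2 : (g * h) * (h * g⁻¹)⁻¹ = (g * h) * (g * h⁻¹) := by group
  have hghpos : 0 < ℓ (g * h) := by rw [hsum]; exact add_pos hg hh
  have hgh'pos : 0 < ℓ (g * h⁻¹) := by
    rcases le_total (ℓ g) (ℓ h) with hle | hle
    · exact (lt_add_iff_pos_left _).mp (h2.trans_le (add_le_add_right hle _))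
    · exact (lt_add_iff_pos_left _).mp (h1.trans_le (add_le_add_right hle _))
  have hX : ℓ ((g * h) * (g * h⁻¹)) = ℓ (g * h) + ℓ (g * h⁻¹) := by
    rcases A3 (g * h) (h * g⁻¹) hghpos (by rw [hb]; exact hgh'pos) with ⟨he, hlt⟩ | hmax
    · rw [e1, hb, hsum] at hlt
      have k1 : ℓ h + ℓ h < (ℓ (g * h⁻¹) + ℓ g) + ℓ h := add_lt_add_left h2 _
      have k2 : (ℓ (g * h⁻¹) + ℓ g) + ℓ h = ℓ g + ℓ h + ℓ (g * h⁻¹) := by abel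
      exact absurd ((k1.trans_eq k2).trans hlt) (lt_irrefl _)
    · rw [e1, e2, hb] at hmax
      rcases le_total (ℓ h + ℓ h) (ℓ ((g * h) * (g * h⁻¹))) with hcc | hcc
      · rw [max_eq_right hcc] at hmax; rw [hmax]
      · rw [max_eq_left hcc, hsum] at hmax
        have k1 : ℓ h + ℓ h = (ℓ g + ℓ (g * h⁻¹)) + ℓ h := by rw [hmax]; abel
        have k2 : ℓ h = ℓ g + ℓ (g * h⁻¹) := add_right_cancel k1
        have k3 : ℓ (g * h⁻¹) + ℓ g = ℓ h := by rw [k2]; abel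
        exact absurd h2 (by rw [k3]; exact lt_irrefl _)
  have hconj : ℓ (h * g * h⁻¹) = ℓ g := A1 h g
  obtain ⟨c, hc⟩ := A0 g (h * g * h⁻¹) hg (by rw [hconj]; exact hg)
  rw [show g * (h * g * h⁻¹) = (g * h) * (g * h⁻¹) by group, hX, hconj, hsum] at hc
  have e3 : ℓ g + ℓ h + ℓ (g * h⁻¹) - ℓ g - ℓ g = (ℓ (g * h⁻¹) + ℓ h) - ℓ g := by abel
  rw [e3, max_eq_right (sub_nonneg.mpr h1.le)] at hc
  refine ⟨c - ℓ h, ?_⟩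
  have e4 : ℓ (g * h⁻¹) - ℓ g - ℓ h = (ℓ (g * h⁻¹) + ℓ h - ℓ g) - ℓ h - ℓ h := by abel
  rw [e4, hc]; abel

/-- for a ping-pong pair `(g,h)`,
`‖gh‖ - ‖g‖ - ‖h‖ ∈ 2Λ` and `‖gh⁻¹‖ - ‖g‖ - ‖h‖ ∈ 2Λ`. -/
theorem statement15 {Λ : Type*} [AddCommGroup Λ] [LinearOrder Λ] [IsOrderedAddMonoid Λ] [Nontrivial Λ]
    {G : Type*} [Group G] (ℓ : G → Λ) (hℓ : IsPseudoLength ℓ)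
    (g h : G) (hgh : IsPingPongPair ℓ g h) :
    (∃ c : Λ, ℓ (g * h) - ℓ g - ℓ h = c + c) ∧
    (∃ c : Λ, ℓ (g * h⁻¹) - ℓ g - ℓ h = c + c) := by
  obtain ⟨hg, hh, habs⟩ := hgh
  have hinv := pl_inv hℓ
  have habs' : |ℓ h - ℓ g| < min (ℓ (g * h)) (ℓ (g * h⁻¹)) := by
    rw [abs_sub_comm]; exact habs
  have h1 : ℓ g - ℓ h < ℓ (g * h) :=
    lt_of_le_of_lt (le_abs_self _) (habs.trans_le (min_le_left _ _))
  have h2 : ℓ h - ℓ g < ℓ (g * h) :=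
    lt_of_le_of_lt (le_abs_self _) (habs'.trans_le (min_le_left _ _))
  have h3 : ℓ g - ℓ h < ℓ (g * h⁻¹) :=
    lt_of_le_of_lt (le_abs_self _) (habs.trans_le (min_le_right _ _))
  have h4 : ℓ h - ℓ g < ℓ (g * h⁻¹) :=
    lt_of_le_of_lt (le_abs_self _) (habs'.trans_le (min_le_right _ _))
  rcases hℓ.2.2.2.2 g h hg hh with ⟨he, hlt⟩ | hmax
  · obtain ⟨c, hc⟩ := hℓ.2.1 g h hg hh
    have hpos : 0 ≤ ℓ (g * h) - ℓ g - ℓ h := by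
      rw [sub_sub]; exact (sub_nonneg.mpr hlt.le)
    rw [max_eq_right hpos] at hc
    exact ⟨⟨c, hc⟩, ⟨c, by rw [← he]; exact hc⟩⟩
  · rcases le_total (ℓ (g * h⁻¹)) (ℓ (g * h)) with hle | hle
    · rw [max_eq_left hle] at hmax
      refine ⟨⟨0, by rw [hmax]; abel⟩, ?_⟩
      exact pl_key hℓ g h hg hh (sub_lt_iff_lt_add.mp h3) (sub_lt_iff_lt_add.mp h4) hmax
    · rw [max_eq_right hle] at hmax
      refine ⟨?_, ⟨0, by rw [hmax]; abel⟩⟩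
      have key := pl_key hℓ g h⁻¹ hg (by rw [hinv]; exact hh)
        (by rw [inv_inv, hinv]; exact sub_lt_iff_lt_add.mp h1)
        (by rw [inv_inv, hinv]; exact sub_lt_iff_lt_add.mp h2)
        (by rw [hinv]; exact hmax)
      rw [inv_inv, hinv] at key
      exact key
end

section
/- Let ‖·‖ be a pseudo-length on a group G and let a, b ∈ G be such that (a,b) is a ping-pong pair. Then ‖aba⁻¹b‖ = ‖ab‖ + ‖a⁻¹b‖ and ‖aba⁻¹b⁻¹‖ = ‖ab‖ + ‖ab⁻¹‖. -/
/-- from Case 1 of the proof of Theorem `th:main`: for a ping-pong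
pair `(a,b)`, `‖aba⁻¹b‖ = ‖ab‖ + ‖a⁻¹b‖` and `‖aba⁻¹b⁻¹‖ = ‖ab‖ + ‖ab⁻¹‖`. -/
theorem statement16 {Λ : Type*} [AddCommGroup Λ] [LinearOrder Λ] [IsOrderedAddMonoid Λ] [Nontrivial Λ]
    {G : Type*} [Group G] (ℓ : G → Λ) (hℓ : IsPseudoLength ℓ)
    (a b : G) (hab : IsPingPongPair ℓ a b) :
    ℓ (a * b * a⁻¹ * b) = ℓ (a * b) + ℓ (a⁻¹ * b) ∧
    ℓ (a * b * a⁻¹ * b⁻¹) = ℓ (a * b) + ℓ (a * b⁻¹) := by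
  obtain ⟨hnn, _hA0, hA1, hA2, hA3⟩ := hℓ
  obtain ⟨ha, hb, hpp⟩ := hab
  -- ℓ 1 = 0
  have h1 : ℓ 1 = 0 := by
    rcases le_or_gt (ℓ 1) 0 with h | h
    · exact le_antisymm h (hnn 1)
    · rcases hA3 1 1 h h with ⟨_, hlt⟩ | hmax
      · simp only [one_mul, mul_one] at hlt
        exact absurd ((lt_add_of_pos_right (ℓ 1) h).trans hlt) (lt_irrefl _)
      · simp only [one_mul, mul_one, inv_one, max_self] at hmax
        have h0 : ℓ 1 = 0 := left_eq_add.mp hmax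
        exact h0
  -- conjugation / cyclic invariance
  have hconj : ∀ x y : G, ℓ (x * y) = ℓ (y * x) := by
    intro x y
    rw [show x * y = x * (y * x) * x⁻¹ from by group]
    exact hA1 x (y * x)
  -- squares
  have hsq : ∀ g : G, 0 < ℓ g → ℓ (g * g) = ℓ g + ℓ g := by
    intro g hg
    rcases hA3 g g hg hg with ⟨heq, hlt⟩ | hmax
    · rw [mul_inv_cancel, h1] at heq
      rw [heq] at hlt
      exact absurd hlt (asymm (add_pos hg hg))
    · rw [mul_inv_cancel, h1, max_eq_left (hnn _)] at hmax
      exact hmax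
  -- inverse invariance
  have hinv_le : ∀ g : G, 0 < ℓ g → ℓ g ≤ ℓ g⁻¹ := by
    intro g hg
    rcases hA2 g g⁻¹ with h | h
    · rw [mul_inv_cancel, h1, inv_inv, hsq g hg] at h
      exact absurd h (ne_of_lt (add_pos hg hg))
    · have h2 : ℓ (g * g⁻¹⁻¹) ≤ ℓ g + ℓ g⁻¹ := le_trans (le_max_right _ _) h
      rw [inv_inv, hsq g hg] at h2
      exact le_of_add_le_add_left h2
  have hinv : ∀ g : G, ℓ g⁻¹ = ℓ g := by
    intro g
    rcases lt_or_ge 0 (ℓ g) with hg | hg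
    · have h2 := hinv_le g hg
      have hg' : 0 < ℓ g⁻¹ := lt_of_lt_of_le hg h2
      have h3 := hinv_le g⁻¹ hg'
      rw [inv_inv] at h3
      exact le_antisymm h3 h2
    · have hg0 : ℓ g = 0 := le_antisymm hg (hnn g)
      rcases lt_or_ge 0 (ℓ g⁻¹) with hg' | hg'
      · have h3 := hinv_le g⁻¹ hg'
        rw [inv_inv, hg0] at h3
        exact absurd (lt_of_lt_of_le hg' h3) (lt_irrefl 0)
      · rw [hg0]; exact le_antisymm hg' (hnn g⁻¹)
  -- basic quantities
  have hp : 0 < ℓ (a * b) :=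
    lt_of_le_of_lt (abs_nonneg _) (lt_of_lt_of_le hpp (min_le_left _ _))
  have hq : 0 < ℓ (a * b⁻¹) :=
    lt_of_le_of_lt (abs_nonneg _) (lt_of_lt_of_le hpp (min_le_right _ _))
  have hq' : ℓ (a⁻¹ * b) = ℓ (a * b⁻¹) := by
    rw [hconj a⁻¹ b, show b * a⁻¹ = (a * b⁻¹)⁻¹ from by group, hinv]
  have hmin1 : ℓ a - ℓ b < min (ℓ (a * b)) (ℓ (a * b⁻¹)) :=
    lt_of_le_of_lt (le_abs_self _) hpp
  have hmin2 : ℓ b - ℓ a < min (ℓ (a * b)) (ℓ (a * b⁻¹)) := by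
    refine lt_of_le_of_lt ?_ hpp
    rw [abs_sub_comm]; exact le_abs_self _
  have hmam : min (ℓ (a * b)) (ℓ (a * b⁻¹)) + max (ℓ (a * b)) (ℓ (a * b⁻¹))
      = ℓ (a * b) + ℓ (a * b⁻¹) := min_add_max _ _
  -- 2ℓa < p + q and 2ℓb < p + q
  have h2a : ℓ a + ℓ a < ℓ (a * b) + ℓ (a * b⁻¹) := by
    rcases hA3 a b ha hb with ⟨heq, hlt⟩ | hmax
    · calc ℓ a + ℓ a < (ℓ a + ℓ a) + (ℓ b + ℓ b) :=
            lt_add_of_pos_right _ (add_pos hb hb)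
        _ = (ℓ a + ℓ b) + (ℓ a + ℓ b) := by abel
        _ < ℓ (a * b) + ℓ (a * b) := add_lt_add hlt hlt
        _ = ℓ (a * b) + ℓ (a * b⁻¹) := by rw [← heq]
    · calc ℓ a + ℓ a = (ℓ a - ℓ b) + (ℓ a + ℓ b) := by abel
        _ = (ℓ a - ℓ b) + max (ℓ (a * b)) (ℓ (a * b⁻¹)) := by rw [hmax]
        _ < min (ℓ (a * b)) (ℓ (a * b⁻¹)) + max (ℓ (a * b)) (ℓ (a * b⁻¹)) :=
            add_lt_add_left hmin1 _
        _ = ℓ (a * b) + ℓ (a * b⁻¹) := hmam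
  have h2b : ℓ b + ℓ b < ℓ (a * b) + ℓ (a * b⁻¹) := by
    rcases hA3 a b ha hb with ⟨heq, hlt⟩ | hmax
    · calc ℓ b + ℓ b < (ℓ a + ℓ a) + (ℓ b + ℓ b) :=
            lt_add_of_pos_left _ (add_pos ha ha)
        _ = (ℓ a + ℓ b) + (ℓ a + ℓ b) := by abel
        _ < ℓ (a * b) + ℓ (a * b) := add_lt_add hlt hlt
        _ = ℓ (a * b) + ℓ (a * b⁻¹) := by rw [← heq]
    · calc ℓ b + ℓ b = (ℓ b - ℓ a) + (ℓ a + ℓ b) := by abel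
        _ = (ℓ b - ℓ a) + max (ℓ (a * b)) (ℓ (a * b⁻¹)) := by rw [hmax]
        _ < min (ℓ (a * b)) (ℓ (a * b⁻¹)) + max (ℓ (a * b)) (ℓ (a * b⁻¹)) :=
            add_lt_add_left hmin2 _
        _ = ℓ (a * b) + ℓ (a * b⁻¹) := hmam
  -- first identity via A3 applied to (ab, a⁻¹b)
  have hq'' : 0 < ℓ (a⁻¹ * b) := by rw [hq']; exact hq
  have e1 : (a * b) * (a⁻¹ * b) = a * b * a⁻¹ * b := by group
  have e2 : (a * b) * (a⁻¹ * b)⁻¹ = a * a := by group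
  have goal1 : ℓ (a * b * a⁻¹ * b) = ℓ (a * b) + ℓ (a⁻¹ * b) := by
    rcases hA3 (a * b) (a⁻¹ * b) hp hq'' with ⟨heq, hlt⟩ | hmax
    · rw [e1, e2, hsq a ha] at heq
      rw [e1, heq, hq'] at hlt
      exact absurd h2a (asymm hlt)
    · rw [e1, e2, hsq a ha] at hmax
      rcases max_cases (ℓ (a * b * a⁻¹ * b)) (ℓ a + ℓ a) with ⟨h, _⟩ | ⟨h, _⟩
      · rw [h] at hmax
        rw [hmax, hq']
      · rw [h, hq'] at hmax
        exact absurd hmax (ne_of_lt h2a)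
  -- second identity via A3 applied to (aba⁻¹, b)
  have hb' : 0 < ℓ (a * b * a⁻¹) := by rw [hA1 a b]; exact hb
  have goal2 : ℓ (a * b * a⁻¹ * b⁻¹) = ℓ (a * b) + ℓ (a * b⁻¹) := by
    rcases hA3 (a * b * a⁻¹) b hb' hb with ⟨heq, _⟩ | hmax
    · rw [← heq, goal1, hq']
    · rw [hA1 a b] at hmax
      have h3 : ℓ (a * b * a⁻¹ * b) ≤ max (ℓ (a * b * a⁻¹ * b)) (ℓ (a * b * a⁻¹ * b⁻¹)) :=
        le_max_left _ _
      rw [hmax, goal1, hq'] at h3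
      exact absurd (lt_of_le_of_lt h3 h2b) (lt_irrefl _)
  exact ⟨goal1, goal2⟩
end

section
/- Let α, β, γ, δ ∈ Λ satisfy γ − α − β ∈ 2Λ and δ − α − β ∈ 2Λ, and let f and φ be as defined. Then φ(w) ∈ 2Λ for every reduced word w over Σ. -/
/-- Sum of `f` over adjacent pairs of a list. -/
def pairSum {Λ : Type*} [AddCommMonoid Λ] (f : Letter → Letter → Λ) : List Letter → Λ
  | [] => 0
  | [_] => 0
  | x :: y :: t => f x y + pairSum f (y :: t)

/-- `φ(x₁…xₙ) = (Σ_{i=1}^{n-1} f(xᵢ,xᵢ₊₁)) + f(xₙ,x₁)`, with `φ(1) = 0`. -/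
def phi {Λ : Type*} [AddCommMonoid Λ] (f : Letter → Letter → Λ) : List Letter → Λ
  | [] => 0
  | x :: xs => pairSum f (x :: (xs ++ [x]))
/-- The function `f : Σ × Σ → Λ` determined by `f(a,a) = 2α`, `f(b,b) = 2β`,
`f(a,b) = γ`, `f(a,b⁻¹) = δ`, `f(x,y) = f(y,x) = f(y⁻¹,x⁻¹)`, `f(x,x⁻¹) = 0`. -/
def fTable {Λ : Type*} [AddCommGroup Λ] [LinearOrder Λ] [IsOrderedAddMonoid Λ] (α β γ δ : Λ) (x y : Letter) : Λ :=
  if x.1 = y.1 then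
    (if x.2 = y.2 then (if x.1 = false then α + α else β + β) else 0)
  else
    (if x.2 = y.2 then γ else δ)

/-- `f(x,y)` is a double plus `α+β` times the indicator that the generators differ. -/
lemma fTable_decomp {Λ : Type*} [AddCommGroup Λ] [LinearOrder Λ] [IsOrderedAddMonoid Λ]
    (α β γ δ : Λ) (hC1a : ∃ c : Λ, γ - α - β = c + c) (hC1b : ∃ c : Λ, δ - α - β = c + c)
    (x y : Letter) :
    ∃ c : Λ, fTable α β γ δ x y = c + c + (if x.1 = y.1 then 0 else α + β) := by
  obtain ⟨c1, h1⟩ := hC1a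
  obtain ⟨c2, h2⟩ := hC1b
  have h1' : γ = c1 + c1 + (α + β) := by rw [← h1]; abel
  have h2' : δ = c2 + c2 + (α + β) := by rw [← h2]; abel
  refine ⟨if x.1 = y.1 then (if x.2 = y.2 then (if x.1 then β else α) else 0)
    else (if x.2 = y.2 then c1 else c2), ?_⟩
  obtain ⟨xg, xs⟩ := x
  obtain ⟨yg, ys⟩ := y
  cases xg <;> cases yg <;> cases xs <;> cases ys <;>
    simp [fTable] <;> first | exact h1' | exact h2'

lemma pairSum_key {Λ : Type*} [AddCommGroup Λ] [LinearOrder Λ] [IsOrderedAddMonoid Λ]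
    (α β γ δ : Λ) (hC1a : ∃ c : Λ, γ - α - β = c + c) (hC1b : ∃ c : Λ, δ - α - β = c + c) :
    ∀ (l : List Letter) (x z : Letter),
      ∃ c : Λ, pairSum (fTable α β γ δ) (x :: l ++ [z]) =
        c + c + (if x.1 = z.1 then 0 else α + β) := by
  intro l
  induction l with
  | nil =>
    intro x z
    obtain ⟨c, hc⟩ := fTable_decomp α β γ δ hC1a hC1b x z
    exact ⟨c, by simpa [pairSum] using hc⟩
  | cons y t ih =>
    intro x z
    obtain ⟨c1, hc1⟩ := fTable_decomp α β γ δ hC1a hC1b x y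
    obtain ⟨c2, hc2⟩ := ih y z
    have hs : pairSum (fTable α β γ δ) (x :: (y :: t) ++ [z]) =
        fTable α β γ δ x y + pairSum (fTable α β γ δ) (y :: t ++ [z]) := rfl
    rw [hs, hc1, hc2]
    by_cases hxy : x.1 = y.1 <;> by_cases hyz : y.1 = z.1
    · exact ⟨c1 + c2, by rw [if_pos hxy, if_pos hyz, if_pos (hxy.trans hyz)]; abel⟩
    · refine ⟨c1 + c2, ?_⟩
      rw [if_pos hxy, if_neg hyz, if_neg (fun h => hyz (hxy ▸ h))]
      abel
    · refine ⟨c1 + c2, ?_⟩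
      rw [if_neg hxy, if_pos hyz, if_neg (fun h => hxy (hyz ▸ h))]
      abel
    · refine ⟨c1 + c2 + α + β, ?_⟩
      have hxz : x.1 = z.1 := by
        cases hx : x.1 <;> cases hz : z.1 <;> cases hy : y.1 <;>
          simp_all
      rw [if_neg hxy, if_neg hyz, if_pos hxz]
      abel

/-- from the proof of Proposition `prop:existence`: if
`γ - α - β ∈ 2Λ` and `δ - α - β ∈ 2Λ`, then `φ(w) ∈ 2Λ` for every reduced word `w`
over `Σ`. -/
theorem statement17 {Λ : Type*} [AddCommGroup Λ] [LinearOrder Λ] [IsOrderedAddMonoid Λ] [Nontrivial Λ]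
    (α β γ δ : Λ)
    (hC1a : ∃ c : Λ, γ - α - β = c + c) (hC1b : ∃ c : Λ, δ - α - β = c + c) :
    ∀ w : List Letter, w.Chain' (fun u v => v ≠ u.inv) →
      ∃ c : Λ, phi (fTable α β γ δ) w = c + c := by
  intro w _
  cases w with
  | nil => exact ⟨0, by simp [phi]⟩
  | cons x xs =>
    obtain ⟨c, hc⟩ := pairSum_key α β γ δ hC1a hC1b xs x x
    refine ⟨c, ?_⟩
    simpa [phi] using hc
end

section
/- Let Σ = {a, b, a⁻¹, b⁻¹} be a four-letter alphabet with involution x ↦ x⁻¹, and let f : Σ × Σ → Λ satisfy conditions (i)–(iii): (i) f(x,y) = f(y,x) = f(y⁻¹,x⁻¹) and f(x,x⁻¹) = 0 for all x,y ∈ Σ; (ii) either 2f(a,b) = 2f(a,b⁻¹) > f(a,a) + f(b,b), or 2·max{f(a,b), f(a,b⁻¹)} = f(a,a) + f(b,b); (iii) f(a,a) > 0, f(b,b) > 0, and |f(a,a) − f(b,b)| < 2·min{f(a,b), f(a,b⁻¹)}. Define φ on words over Σ by φ(x₁…xₙ) := (Σ_{i=1}^{n−1} f(xᵢ, xᵢ₊₁))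 + f(xₙ, x₁) and φ(1) := 0. Then if a word w' is obtained from a word w over Σ by deleting an adjacent pair of letters x⁻¹x (a free reduction step), one has φ(w') ≤ φ(w). -/
lemma Letter.inv_inv (x : Letter) : x.inv.inv = x := by
  obtain ⟨a, b⟩ := x; simp [Letter.inv]

lemma halveLt {Λ : Type*} [AddCommGroup Λ] [LinearOrder Λ] [IsOrderedAddMonoid Λ] {u v : Λ}
    (h : u + u < v + v) : u < v :=
  lt_of_not_ge fun hle => absurd h (not_lt.mpr (add_le_add hle hle))

/-- The six basic inequalities, in the case `2 max{P,Q} = A + B` (with `P ≤ Q`). -/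
lemma sixFacts {Λ : Type*} [AddCommGroup Λ] [LinearOrder Λ] [IsOrderedAddMonoid Λ] {A B P Q : Λ}
    (hA : 0 < A) (hB : 0 < B)
    (h1 : B - A < P + P) (h2 : A - B < P + P) (hPQ : P ≤ Q) (heq : Q + Q = A + B) :
    A ≤ P + Q ∧ B ≤ P + Q ∧ P ≤ A + Q ∧ P ≤ B + Q ∧ Q ≤ A + P ∧ Q ≤ B + P := by
  refine ⟨?_, ?_, ?_, ?_, ?_, ?_⟩
  · refine (halveLt ?_).le
    calc A + A = (A + B) + (A - B) := by abel
      _ < (Q + Q) + (P + P) := add_lt_add_of_le_of_lt heq.ge h2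
      _ = (P + Q) + (P + Q) := by abel
  · refine (halveLt ?_).le
    calc B + B = (A + B) + (B - A) := by abel
      _ < (Q + Q) + (P + P) := add_lt_add_of_le_of_lt heq.ge h1
      _ = (P + Q) + (P + Q) := by abel
  · exact hPQ.trans (le_add_of_nonneg_left hA.le)
  · exact hPQ.trans (le_add_of_nonneg_left hB.le)
  · refine (halveLt ?_).le
    calc Q + Q = (A + A) + (B - A) := by rw [heq]; abel
      _ < (A + A) + (P + P) := add_lt_add_right h1 _
      _ = (A + P) + (A + P) := by abel
  · refine (halveLt ?_).le
    calc Q + Q = (B + B) + (A - B) := by rw [heq]; abel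
      _ < (B + B) + (P + P) := add_lt_add_right h2 _
      _ = (B + P) + (B + P) := by abel

/-- Replacing the last letter `s` of a cyclic tail by `x⁻¹` costs at most `f x s`. -/
lemma auxTail {Λ : Type*} [AddCommGroup Λ] [LinearOrder Λ] [IsOrderedAddMonoid Λ] (f : Letter → Letter → Λ)
    (key : ∀ p s x : Letter, f p s ≤ f p x.inv + f x s) :
    ∀ (t : List Letter) (q s x : Letter),
      pairSum f (q :: (t ++ [s])) ≤ f x s + pairSum f (q :: (t ++ [x.inv])) := by
  intro t
  induction t with
  | nil =>
    intro q s x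
    simp only [List.nil_append, pairSum, add_zero]
    exact (key q s x).trans_eq (add_comm _ _)
  | cons c t' ih =>
    intro q s x
    simp only [List.cons_append, pairSum]
    have h := ih c s x
    calc f q c + pairSum f (c :: (t' ++ [s]))
        ≤ f q c + (f x s + pairSum f (c :: (t' ++ [x.inv]))) := add_le_add_right h _
      _ = f x s + (f q c + pairSum f (c :: (t' ++ [x.inv]))) := add_left_comm _ _ _

/-- Inserting `x⁻¹ x` in the middle of a word does not decrease the pair sum. -/
lemma auxMid {Λ : Type*} [AddCommGroup Λ] [LinearOrder Λ] [IsOrderedAddMonoid Λ] (f : Letter → Letter → Λ)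
    (key : ∀ p s x : Letter, f p s ≤ f p x.inv + f x s)
    (hz : ∀ x : Letter, f x.inv x = 0) :
    ∀ (m : List Letter) (q : Letter) (r : List Letter) (x : Letter), r ≠ [] →
      pairSum f ((q :: m) ++ r) ≤ pairSum f ((q :: m) ++ (x.inv :: x :: r)) := by
  intro m
  induction m with
  | nil =>
    intro q r x hr
    match r, hr with
    | s :: r', _ =>
      simp only [List.cons_append, List.nil_append, pairSum, hz x, zero_add]
      have h := add_le_add_left (key q s x) (pairSum f (s :: r'))
      exact h.trans_eq (add_assoc _ _ _)
  | cons c m' ih =>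
    intro q r x hr
    simp only [List.cons_append, pairSum]
    exact add_le_add_right (ih c r x hr) _

/-- from the proof of Proposition `prop:existence`: if `f` satisfies
(i)–(iii), then deleting an adjacent pair `x⁻¹x` from a word over `Σ` (a free
reduction step) does not increase `φ`. -/
theorem statement18 {Λ : Type*} [AddCommGroup Λ] [LinearOrder Λ] [IsOrderedAddMonoid Λ] [Nontrivial Λ]
    (f : Letter → Letter → Λ)
    (hsymm : ∀ x y : Letter, f x y = f y x)
    (hinvol : ∀ x y : Letter, f x y = f y.inv x.inv)
    (hzero : ∀ x : Letter, f x x.inv = 0)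
    (hii : (f la lb = f la lb.inv ∧ f la la + f lb lb < f la lb + f la lb) ∨
      max (f la lb) (f la lb.inv) + max (f la lb) (f la lb.inv) = f la la + f lb lb)
    (hiii : 0 < f la la ∧ 0 < f lb lb ∧
      |f la la - f lb lb| < min (f la lb) (f la lb.inv) + min (f la lb) (f la lb.inv)) :
    ∀ (u v : List Letter) (x : Letter),
      phi f (u ++ v) ≤ phi f (u ++ [x.inv, x] ++ v) := by
  obtain ⟨hA, hB, hAB⟩ := hiii
  have habs := abs_lt.mp hAB
  have hmin : 0 < min (f la lb) (f la lb.inv) := by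
    by_contra hc
    push_neg at hc
    exact absurd (lt_of_le_of_lt (abs_nonneg _) hAB) (not_lt.mpr (add_nonpos hc hc))
  have hP : 0 < f la lb := lt_of_lt_of_le hmin (min_le_left _ _)
  have hQ : 0 < f la lb.inv := lt_of_lt_of_le hmin (min_le_right _ _)
  have facts : f la la ≤ f la lb + f la lb.inv ∧ f lb lb ≤ f la lb + f la lb.inv ∧
      f la lb ≤ f la la + f la lb.inv ∧ f la lb ≤ f lb lb + f la lb.inv ∧
      f la lb.inv ≤ f la la + f la lb ∧ f la lb.inv ≤ f lb lb + f la lb := by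
    rcases hii with ⟨hpq, hlt⟩ | heq
    · rw [← hpq]
      have h1 : f la la + 0 < f la la + f lb lb := add_lt_add_right hB _
      have h2 : 0 + f lb lb < f la la + f lb lb := add_lt_add_left hA _
      rw [add_zero] at h1
      rw [zero_add] at h2
      exact ⟨(h1.trans hlt).le, (h2.trans hlt).le,
        le_add_of_nonneg_left hA.le, le_add_of_nonneg_left hB.le,
        le_add_of_nonneg_left hA.le, le_add_of_nonneg_left hB.le⟩
    · rcases le_total (f la lb) (f la lb.inv) with h | h
      · rw [min_eq_left h] at habs
        rw [max_eq_right h] at heq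
        have h1 : f lb lb - f la la < f la lb + f la lb := by
          have h' := neg_lt.mp habs.1
          rwa [neg_sub] at h'
        exact sixFacts hA hB h1 habs.2 h heq
      · rw [min_eq_right h] at habs
        rw [max_eq_left h] at heq
        have h1 : f lb lb - f la la < f la lb.inv + f la lb.inv := by
          have h' := neg_lt.mp habs.1
          rwa [neg_sub] at h'
        obtain ⟨g1, g2, g3, g4, g5, g6⟩ := sixFacts hA hB h1 habs.2 h heq
        exact ⟨g1.trans_eq (add_comm _ _), g2.trans_eq (add_comm _ _), g5, g6, g3, g4⟩
  obtain ⟨f1, f2, f3, f4, f5, f6⟩ := facts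
  -- the key "triangle" inequality
  have key : ∀ p s x : Letter, f p s ≤ f p x.inv + f x s := by
    -- the full table of values of f
    have t1 : f (false, false) (false, false) = f la la := (hinvol la la).symm
    have t2 : f (true, false) (true, false) = f lb lb := (hinvol lb lb).symm
    have t3 : f (false, true) (false, false) = 0 := hzero la
    have t4 : f (false, false) (false, true) = 0 := hzero ((false, false) : Letter)
    have t5 : f (true, true) (true, false) = 0 := hzero lb
    have t6 : f (true, false) (true, true) = 0 := hzero ((true, false) : Letter)
    have t7 : f (true, true) (false, true) = f la lb := hsymm lb la
    have t8 : f (false, false) (true, false) = f la lb :=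
      (hinvol lb la).symm.trans (hsymm lb la)
    have t9 : f (true, false) (false, false) = f la lb :=
      (hsymm ((true, false) : Letter) ((false, false) : Letter)).trans t8
    have t10 : f (true, false) (false, true) = f la lb.inv := hsymm lb.inv la
    have t11 : f (false, false) (true, true) = f la lb.inv :=
      (hinvol ((false, false) : Letter) ((true, true) : Letter)).trans t10
    have t12 : f (true, true) (false, false) = f la lb.inv :=
      (hsymm ((true, true) : Letter) ((false, false) : Letter)).trans t11
    have f1' := f1.trans_eq (add_comm _ _)
    have f2' := f2.trans_eq (add_comm _ _)
    have f3' := f3.trans_eq (add_comm _ _)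
    have f4' := f4.trans_eq (add_comm _ _)
    have f5' := f5.trans_eq (add_comm _ _)
    have f6' := f6.trans_eq (add_comm _ _)
    rintro ⟨pb, ps⟩ ⟨sb, ss⟩ ⟨xb, xs⟩
    cases pb <;> cases ps <;> cases sb <;> cases ss <;> cases xb <;> cases xs <;>
      simp only [Letter.inv, Bool.not_true, Bool.not_false, t1, t2, t3, t4, t5, t6,
        t7, t8, t9, t10, t11, t12, zero_add, add_zero] <;>
      first
        | rfl
        | exact le_refl _
        | assumption
        | exact add_nonneg hA.le hA.le
        | exact add_nonneg hB.le hB.le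
        | exact add_nonneg hP.le hP.le
        | exact add_nonneg hQ.le hQ.le
  have hz : ∀ x : Letter, f x.inv x = 0 := fun x => by
    have h := hzero x.inv
    rwa [Letter.inv_inv] at h
  intro u v x
  cases u with
  | nil =>
    cases v with
    | nil =>
      simp [phi, pairSum, hz x, hzero x]
    | cons s t =>
      show phi f (s :: t) ≤ phi f (x.inv :: x :: s :: t)
      show pairSum f (s :: (t ++ [s])) ≤
        pairSum f (x.inv :: ((x :: s :: t) ++ [x.inv]))
      simp only [List.cons_append, pairSum, hz x, zero_add]
      exact auxTail f key t s s x
  | cons p u' =>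
    show phi f (p :: (u' ++ v)) ≤ phi f (p :: (u' ++ [x.inv, x] ++ v))
    show pairSum f (p :: ((u' ++ v) ++ [p])) ≤
      pairSum f (p :: ((u' ++ [x.inv, x] ++ v) ++ [p]))
    have e1 : p :: ((u' ++ v) ++ [p]) = (p :: u') ++ (v ++ [p]) := by
      simp [List.append_assoc]
    have e2 : p :: ((u' ++ [x.inv, x] ++ v) ++ [p])
        = (p :: u') ++ (x.inv :: x :: (v ++ [p])) := by
      simp [List.append_assoc]
    rw [e1, e2]
    exact auxMid f key hz u' p (v ++ [p]) x (by simp)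
end

section
/- Let α, β, γ, δ ∈ Λ satisfy: (C1) γ − α − β ∈ 2Λ and δ − α − β ∈ 2Λ; (C2) either γ = δ > α + β, or max{γ, δ} = α + β; (C3) α > 0, β > 0, |α − β| < min{γ, δ}; and let f and φ be as defined. Let g', h', w be nonempty words over Σ such that g', h', W₊ := g'wh'w⁻¹ and W₋ := g'wh'⁻¹w⁻¹ are all cyclically reduced (where w⁻¹ and h'⁻¹ denote the formal inverse words). Then φ(W₊) = φ(W₋) > φ(g') + φ(h') and φ(W₊) − φ(g') − φ(h') ∈ 4Λ, where 4Λ := {4λ : λ ∈ Λ}. -/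
/-- A word over `Σ` is cyclically reduced: no cancellation between adjacent letters,
nor between the last and first letters. -/
def CyclicallyReduced (w : List Letter) : Prop :=
  w.Chain' (fun u v => v ≠ u.inv) ∧ ∀ h : w ≠ [], w.getLast h ≠ (w.head h).inv

/-- The formal inverse `w⁻¹ = xₙ⁻¹…x₁⁻¹` of a word `w = x₁…xₙ`. -/
def wordInv (w : List Letter) : List Letter := (w.reverse).map Letter.inv

namespace S19

@[simp] lemma inv_inv (x : Letter) : x.inv.inv = x := by
  cases x with | mk a b => simp [Letter.inv]

lemma inv_inj {x y : Letter} (h : x.inv = y.inv) : x = y := by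
  have := congrArg Letter.inv h; simpa using this

variable {Λ : Type*} [AddCommGroup Λ] [LinearOrder Λ] [IsOrderedAddMonoid Λ]

lemma pairSum_append (f : Letter → Letter → Λ) :
    ∀ (l₁ l₂ : List Letter) (h₁ : l₁ ≠ []) (h₂ : l₂ ≠ []),
      pairSum f (l₁ ++ l₂) =
        pairSum f l₁ + f (l₁.getLast h₁) (l₂.head h₂) + pairSum f l₂ := by
  intro l₁
  induction l₁ with
  | nil => intro l₂ h₁ h₂; exact absurd rfl h₁
  | cons x t ih =>
    intro l₂ h₁ h₂
    cases t with
    | nil =>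
      cases l₂ with
      | nil => exact absurd rfl h₂
      | cons z zs => simp [pairSum]
    | cons y s =>
      have hih := ih l₂ (by simp) h₂
      simp only [List.cons_append, pairSum, List.append_eq] at hih ⊢
      rw [hih, List.getLast_cons (by simp : (y :: s : List Letter) ≠ [])]
      abel

lemma phi_eq (f : Letter → Letter → Λ) (l : List Letter) (h : l ≠ []) :
    phi f l = pairSum f l + f (l.getLast h) (l.head h) := by
  cases l with
  | nil => exact absurd rfl h
  | cons x xs =>
    show pairSum f ((x :: xs) ++ [x]) = _
    rw [pairSum_append f (x :: xs) [x] (by simp) (by simp)]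
    simp [pairSum]

lemma wordInv_cons (x : Letter) (xs : List Letter) :
    wordInv (x :: xs) = wordInv xs ++ [x.inv] := by simp [wordInv]

lemma wordInv_ne_nil {w : List Letter} (h : w ≠ []) : wordInv w ≠ [] := by
  cases w with
  | nil => exact absurd rfl h
  | cons x xs => rw [wordInv_cons]; simp

lemma getLast_wordInv (w : List Letter) (h : w ≠ []) :
    (wordInv w).getLast (wordInv_ne_nil h) = (w.head h).inv := by
  cases w with
  | nil => exact absurd rfl h
  | cons x xs =>
    have : wordInv (x :: xs) = wordInv xs ++ [x.inv] := wordInv_cons x xs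
    rw [List.getLast_congr _ _ this, List.getLast_concat]
    all_goals simp

lemma head_congr {l₁ l₂ : List Letter} (h : l₁ = l₂) (h₁ : l₁ ≠ []) :
    l₁.head h₁ = l₂.head (h ▸ h₁) := by subst h; rfl

lemma head_wordInv : ∀ (w : List Letter) (h : w ≠ []),
    (wordInv w).head (wordInv_ne_nil h) = (w.getLast h).inv := by
  intro w
  induction w with
  | nil => intro h; exact absurd rfl h
  | cons x xs ih =>
    intro h
    cases xs with
    | nil => simp [wordInv]
    | cons y s =>
      have hne : wordInv (y :: s) ≠ [] := wordInv_ne_nil (by simp)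
      have h2 : (wordInv (x :: y :: s)).head (wordInv_ne_nil h)
          = (wordInv (y :: s)).head hne := by
        rw [head_congr (wordInv_cons x (y :: s))]
        exact List.head_append_of_ne_nil hne
      rw [h2, ih (by simp), List.getLast_cons (by simp : (y :: s : List Letter) ≠ [])]

lemma pairSum_wordInv (f : Letter → Letter → Λ)
    (hf : ∀ x y, f x y = f y.inv x.inv) :
    ∀ w : List Letter, pairSum f (wordInv w) = pairSum f w := by
  intro w
  induction w with
  | nil => rfl
  | cons x xs ih =>
    cases xs with
    | nil => simp [wordInv, pairSum]
    | cons y s =>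
      have hne : wordInv (y :: s) ≠ [] := wordInv_ne_nil (by simp)
      rw [wordInv_cons, pairSum_append f _ [x.inv] hne (by simp),
        getLast_wordInv (y :: s) (by simp), ih]
      show pairSum f (y :: s) + f ((y :: s).head (by simp)).inv x.inv
          + pairSum f [x.inv] = pairSum f (x :: y :: s)
      show _ = f x y + pairSum f (y :: s)
      rw [List.head_cons, ← hf x y, pairSum]
      abel


/-- weight of a letter: `α` for `a`-letters, `β` for `b`-letters. -/
def chiL (α β : Λ) (x : Letter) : Λ := if x.1 then β else α

lemma fTable_inv (α β γ δ : Λ) (x y : Letter) :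
    fTable α β γ δ x y = fTable α β γ δ y.inv x.inv := by
  rcases x with ⟨x1, x2⟩; rcases y with ⟨y1, y2⟩
  cases x1 <;> cases x2 <;> cases y1 <;> cases y2 <;> simp [fTable, Letter.inv]

lemma pos_of_add_self {c : Λ} (h : 0 < c + c) : 0 < c := by
  by_contra h'
  push_neg at h'
  exact absurd h (not_lt.2 (add_nonpos h' h'))

lemma pos_of_nsmul {e : Λ} (n : ℕ) (h : 0 < n • e) : 0 < e := by
  by_contra h2
  push_neg at h2
  exact absurd h (not_lt.2 (nsmul_nonpos h2 n))

lemma fTable_pos {α β γ δ : Λ} (ha : 0 < α) (hb : 0 < β)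
    (hg : 0 < γ) (hd : 0 < δ)
    (x y : Letter) (h : y ≠ x.inv) : 0 < fTable α β γ δ x y := by
  rcases x with ⟨x1, x2⟩; rcases y with ⟨y1, y2⟩
  cases x1 <;> cases x2 <;> cases y1 <;> cases y2 <;>
    simp_all [fTable, Letter.inv] <;>
    first
      | assumption
      | exact add_pos ha ha
      | exact add_pos hb hb

lemma pairSum_nonneg {f : Letter → Letter → Λ}
    (hf : ∀ x y, y ≠ x.inv → 0 < f x y) :
    ∀ w : List Letter, w.Chain' (fun u v => v ≠ u.inv) → 0 ≤ pairSum f w := by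
  intro w
  induction w with
  | nil => intro _; exact le_refl 0
  | cons x xs ih =>
    intro hc
    cases xs with
    | nil => exact le_refl 0
    | cons y s =>
      replace hc := List.isChain_cons_cons.mp hc
      have h1 := hf x y hc.1
      have h2 := ih hc.2
      show 0 ≤ f x y + pairSum f (y :: s)
      exact add_nonneg h1.le h2

lemma fTable_decomp {α β γ δ : Λ} (cγ cδ : Λ)
    (hγ : γ = α + β + (cγ + cγ)) (hδ : δ = α + β + (cδ + cδ)) (x y : Letter) :
    ∃ c : Λ, fTable α β γ δ x y = chiL α β x + chiL α β y + c + c := by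
  rcases x with ⟨x1, x2⟩; rcases y with ⟨y1, y2⟩
  cases x1 <;> cases x2 <;> cases y1 <;> cases y2 <;>
    simp [fTable, chiL, Letter.inv] <;>
    first
      | (refine ⟨0, ?_⟩; abel1)
      | (refine ⟨-α, ?_⟩; abel1)
      | (refine ⟨-β, ?_⟩; abel1)
      | (refine ⟨cγ, ?_⟩; rw [hγ]; abel1)
      | (refine ⟨cδ, ?_⟩; rw [hδ]; abel1)

lemma pairSum_half (f : Letter → Letter → Λ) (χ : Letter → Λ)
    (hf : ∀ x y, ∃ c : Λ, f x y = χ x + χ y + c + c) :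
    ∀ (w : List Letter) (h : w ≠ []),
      ∃ c : Λ, pairSum f w + χ (w.head h) + χ (w.getLast h) = c + c := by
  intro w
  induction w with
  | nil => intro h; exact absurd rfl h
  | cons x xs ih =>
    intro h
    cases xs with
    | nil => exact ⟨χ x, by simp [pairSum]⟩
    | cons y s =>
      obtain ⟨c1, h1⟩ := hf x y
      obtain ⟨c2, h2⟩ := ih (by simp)
      refine ⟨χ x + c1 + c2, ?_⟩
      rw [List.getLast_cons (by simp : (y :: s : List Letter) ≠ [])]
      show f x y + pairSum f (y :: s) + χ x + χ ((y :: s).getLast (by simp)) = _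
      rw [List.head_cons] at h2
      have h2' : pairSum f (y :: s) = c2 + c2 - χ y - χ ((y :: s).getLast (by simp)) := by
        rw [← h2]; abel
      rw [h1, h2']
      abel

lemma corner (α β γ δ : Λ) (x y u : Letter)
    (h1 : u ≠ x.inv) (h2 : u ≠ y) (h3 : x ≠ y.inv) :
    ∃ q : Λ, (q = γ + δ - α - α - β - β ∨ q = γ - δ ∨ q = δ - γ) ∧
      fTable α β γ δ x u + fTable α β γ δ u.inv y - fTable α β γ δ x y
        = chiL α β u + chiL α β u + q := by
  rcases x with ⟨x1, x2⟩; rcases y with ⟨y1, y2⟩; rcases u with ⟨u1, u2⟩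
  cases x1 <;> cases x2 <;> cases y1 <;> cases y2 <;> cases u1 <;> cases u2 <;>
    simp_all [fTable, chiL, Letter.inv] <;>
    first
      | (refine ⟨γ + δ - α - α - β - β, Or.inl rfl, ?_⟩; abel1)
      | (refine ⟨γ - δ, Or.inr (Or.inl rfl), ?_⟩; abel1)
      | (refine ⟨δ - γ, Or.inr (Or.inr rfl), ?_⟩; abel1)
      | (left; abel1)
      | (right; left; abel1)
      | (right; right; abel1)

lemma chiL_inv (α β : Λ) (x : Letter) : chiL α β x.inv = chiL α β x := by
  rcases x with ⟨x1, x2⟩; simp [chiL, Letter.inv]; rfl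

lemma chiL_or (α β : Λ) (x : Letter) : chiL α β x = α ∨ chiL α β x = β := by
  rcases x with ⟨x1, x2⟩
  cases x1
  · left; simp [chiL]
  · right; simp [chiL]

lemma chain'_junction {R : Letter → Letter → Prop} {l₁ l₂ : List Letter}
    (h : List.Chain' R (l₁ ++ l₂)) (h₁ : l₁ ≠ []) (h₂ : l₂ ≠ []) :
    R (l₁.getLast h₁) (l₂.head h₂) := by
  replace h := List.isChain_append.mp h
  refine h.2.2 _ ?_ _ ?_
  · rw [List.getLast?_eq_getLast h₁]; rfl
  · rw [List.head?_eq_head h₂]; rfl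

lemma q_sum {α β γ δ cγ cδ q q' : Λ}
    (hγ : γ = α + β + (cγ + cγ)) (hδ : δ = α + β + (cδ + cδ))
    (hq : q = γ + δ - α - α - β - β ∨ q = γ - δ ∨ q = δ - γ)
    (hq' : q' = γ + δ - α - α - β - β ∨ q' = γ - δ ∨ q' = δ - γ) :
    ∃ e : Λ, q + q' = e + e + e + e := by
  rcases hq with hq | hq | hq <;> rcases hq' with hq' | hq' | hq' <;>
    rw [hq, hq', hγ, hδ] <;>
    [ exact ⟨cγ + cδ, by abel⟩; exact ⟨cγ, by abel⟩; exact ⟨cδ, by abel⟩;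
      exact ⟨cγ, by abel⟩; exact ⟨cγ - cδ, by abel⟩; exact ⟨0, by abel⟩;
      exact ⟨cδ, by abel⟩; exact ⟨0, by abel⟩; exact ⟨cδ - cγ, by abel⟩ ]


set_option maxHeartbeats 4000000 in
lemma pospair {α β γ δ p p' q q' : Λ}
    (ha : 0 < α) (hb : 0 < β)
    (hga : 0 < γ - α + β) (hgb : 0 < γ + α - β)
    (hda : 0 < δ - α + β) (hdb : 0 < δ + α - β)
    (hC2 : (γ = δ ∧ α + β < γ) ∨ max γ δ = α + β)
    (hp : p = α ∨ p = β) (hp' : p' = α ∨ p' = β)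
    (hq : q = γ + δ - α - α - β - β ∨ q = γ - δ ∨ q = δ - γ)
    (hq' : q' = γ + δ - α - α - β - β ∨ q' = γ - δ ∨ q' = δ - γ) :
    0 < p + p + q + (p' + p' + q') := by
  rcases hC2 with ⟨hgd, hab⟩ | hmax
  · have hab' : 0 < γ - α - β := by rw [sub_sub]; exact sub_pos.2 hab
    rcases hp with hp | hp <;> rcases hp' with hp' | hp' <;>
      rcases hq with hq | hq | hq <;> rcases hq' with hq' | hq' | hq' <;>
      rw [hp, hp', hq, hq', ← hgd]
    · -- A p=a p'=a q=X q'=X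
      have H : (0:Λ) < (4 • (α)) + (4 • (γ - α - β)) := (add_pos (nsmul_pos ha (by norm_num : (4:ℕ) ≠ 0)) (nsmul_pos hab' (by norm_num : (4:ℕ) ≠ 0)))
      exact H.trans_eq (by abel)
    · -- A p=a p'=a q=X q'=Y
      have H : (0:Λ) < (2 • (γ + α - β)) := (nsmul_pos hgb (by norm_num : (2:ℕ) ≠ 0))
      exact H.trans_eq (by abel)
    · -- A p=a p'=a q=X q'=Z
      have H : (0:Λ) < (2 • (γ + α - β)) := (nsmul_pos hgb (by norm_num : (2:ℕ) ≠ 0))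
      exact H.trans_eq (by abel)
    · -- A p=a p'=a q=Y q'=X
      have H : (0:Λ) < (2 • (γ + α - β)) := (nsmul_pos hgb (by norm_num : (2:ℕ) ≠ 0))
      exact H.trans_eq (by abel)
    · -- A p=a p'=a q=Y q'=Y
      have H : (0:Λ) < (4 • (α)) := (nsmul_pos ha (by norm_num : (4:ℕ) ≠ 0))
      exact H.trans_eq (by abel)
    · -- A p=a p'=a q=Y q'=Z
      have H : (0:Λ) < (4 • (α)) := (nsmul_pos ha (by norm_num : (4:ℕ) ≠ 0))
      exact H.trans_eq (by abel)
    · -- A p=a p'=a q=Z q'=X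
      have H : (0:Λ) < (2 • (γ + α - β)) := (nsmul_pos hgb (by norm_num : (2:ℕ) ≠ 0))
      exact H.trans_eq (by abel)
    · -- A p=a p'=a q=Z q'=Y
      have H : (0:Λ) < (4 • (α)) := (nsmul_pos ha (by norm_num : (4:ℕ) ≠ 0))
      exact H.trans_eq (by abel)
    · -- A p=a p'=a q=Z q'=Z
      have H : (0:Λ) < (4 • (α)) := (nsmul_pos ha (by norm_num : (4:ℕ) ≠ 0))
      exact H.trans_eq (by abel)
    · -- A p=a p'=b q=X q'=X
      have H : (0:Λ) < (2 • (α)) + (2 • (β)) + (4 • (γ - α - β)) := (add_pos (add_pos (nsmul_pos ha (by norm_num : (2:ℕ) ≠ 0)) (nsmul_pos hb (by norm_num : (2:ℕ) ≠ 0))) (nsmul_pos hab' (by norm_num : (4:ℕ) ≠ 0)))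
      exact H.trans_eq (by abel)
    · -- A p=a p'=b q=X q'=Y
      have H : (0:Λ) < (γ - α + β) + (γ + α - β) := (add_pos hga hgb)
      exact H.trans_eq (by abel)
    · -- A p=a p'=b q=X q'=Z
      have H : (0:Λ) < (γ - α + β) + (γ + α - β) := (add_pos hga hgb)
      exact H.trans_eq (by abel)
    · -- A p=a p'=b q=Y q'=X
      have H : (0:Λ) < (γ - α + β) + (γ + α - β) := (add_pos hga hgb)
      exact H.trans_eq (by abel)
    · -- A p=a p'=b q=Y q'=Y
      have H : (0:Λ) < (2 • (α)) + (2 • (β)) := (add_pos (nsmul_pos ha (by norm_num : (2:ℕ) ≠ 0)) (nsmul_pos hb (by norm_num : (2:ℕ) ≠ 0)))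
      exact H.trans_eq (by abel)
    · -- A p=a p'=b q=Y q'=Z
      have H : (0:Λ) < (2 • (α)) + (2 • (β)) := (add_pos (nsmul_pos ha (by norm_num : (2:ℕ) ≠ 0)) (nsmul_pos hb (by norm_num : (2:ℕ) ≠ 0)))
      exact H.trans_eq (by abel)
    · -- A p=a p'=b q=Z q'=X
      have H : (0:Λ) < (γ - α + β) + (γ + α - β) := (add_pos hga hgb)
      exact H.trans_eq (by abel)
    · -- A p=a p'=b q=Z q'=Y
      have H : (0:Λ) < (2 • (α)) + (2 • (β)) := (add_pos (nsmul_pos ha (by norm_num : (2:ℕ) ≠ 0)) (nsmul_pos hb (by norm_num : (2:ℕ) ≠ 0)))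
      exact H.trans_eq (by abel)
    · -- A p=a p'=b q=Z q'=Z
      have H : (0:Λ) < (2 • (α)) + (2 • (β)) := (add_pos (nsmul_pos ha (by norm_num : (2:ℕ) ≠ 0)) (nsmul_pos hb (by norm_num : (2:ℕ) ≠ 0)))
      exact H.trans_eq (by abel)
    · -- A p=b p'=a q=X q'=X
      have H : (0:Λ) < (2 • (α)) + (2 • (β)) + (4 • (γ - α - β)) := (add_pos (add_pos (nsmul_pos ha (by norm_num : (2:ℕ) ≠ 0)) (nsmul_pos hb (by norm_num : (2:ℕ) ≠ 0))) (nsmul_pos hab' (by norm_num : (4:ℕ) ≠ 0)))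
      exact H.trans_eq (by abel)
    · -- A p=b p'=a q=X q'=Y
      have H : (0:Λ) < (γ - α + β) + (γ + α - β) := (add_pos hga hgb)
      exact H.trans_eq (by abel)
    · -- A p=b p'=a q=X q'=Z
      have H : (0:Λ) < (γ - α + β) + (γ + α - β) := (add_pos hga hgb)
      exact H.trans_eq (by abel)
    · -- A p=b p'=a q=Y q'=X
      have H : (0:Λ) < (γ - α + β) + (γ + α - β) := (add_pos hga hgb)
      exact H.trans_eq (by abel)
    · -- A p=b p'=a q=Y q'=Y
      have H : (0:Λ) < (2 • (α)) + (2 • (β)) := (add_pos (nsmul_pos ha (by norm_num : (2:ℕ) ≠ 0)) (nsmul_pos hb (by norm_num : (2:ℕ) ≠ 0)))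
      exact H.trans_eq (by abel)
    · -- A p=b p'=a q=Y q'=Z
      have H : (0:Λ) < (2 • (α)) + (2 • (β)) := (add_pos (nsmul_pos ha (by norm_num : (2:ℕ) ≠ 0)) (nsmul_pos hb (by norm_num : (2:ℕ) ≠ 0)))
      exact H.trans_eq (by abel)
    · -- A p=b p'=a q=Z q'=X
      have H : (0:Λ) < (γ - α + β) + (γ + α - β) := (add_pos hga hgb)
      exact H.trans_eq (by abel)
    · -- A p=b p'=a q=Z q'=Y
      have H : (0:Λ) < (2 • (α)) + (2 • (β)) := (add_pos (nsmul_pos ha (by norm_num : (2:ℕ) ≠ 0)) (nsmul_pos hb (by norm_num : (2:ℕ) ≠ 0)))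
      exact H.trans_eq (by abel)
    · -- A p=b p'=a q=Z q'=Z
      have H : (0:Λ) < (2 • (α)) + (2 • (β)) := (add_pos (nsmul_pos ha (by norm_num : (2:ℕ) ≠ 0)) (nsmul_pos hb (by norm_num : (2:ℕ) ≠ 0)))
      exact H.trans_eq (by abel)
    · -- A p=b p'=b q=X q'=X
      have H : (0:Λ) < (4 • (β)) + (4 • (γ - α - β)) := (add_pos (nsmul_pos hb (by norm_num : (4:ℕ) ≠ 0)) (nsmul_pos hab' (by norm_num : (4:ℕ) ≠ 0)))
      exact H.trans_eq (by abel)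
    · -- A p=b p'=b q=X q'=Y
      have H : (0:Λ) < (2 • (γ - α + β)) := (nsmul_pos hga (by norm_num : (2:ℕ) ≠ 0))
      exact H.trans_eq (by abel)
    · -- A p=b p'=b q=X q'=Z
      have H : (0:Λ) < (2 • (γ - α + β)) := (nsmul_pos hga (by norm_num : (2:ℕ) ≠ 0))
      exact H.trans_eq (by abel)
    · -- A p=b p'=b q=Y q'=X
      have H : (0:Λ) < (2 • (γ - α + β)) := (nsmul_pos hga (by norm_num : (2:ℕ) ≠ 0))
      exact H.trans_eq (by abel)
    · -- A p=b p'=b q=Y q'=Y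
      have H : (0:Λ) < (4 • (β)) := (nsmul_pos hb (by norm_num : (4:ℕ) ≠ 0))
      exact H.trans_eq (by abel)
    · -- A p=b p'=b q=Y q'=Z
      have H : (0:Λ) < (4 • (β)) := (nsmul_pos hb (by norm_num : (4:ℕ) ≠ 0))
      exact H.trans_eq (by abel)
    · -- A p=b p'=b q=Z q'=X
      have H : (0:Λ) < (2 • (γ - α + β)) := (nsmul_pos hga (by norm_num : (2:ℕ) ≠ 0))
      exact H.trans_eq (by abel)
    · -- A p=b p'=b q=Z q'=Y
      have H : (0:Λ) < (4 • (β)) := (nsmul_pos hb (by norm_num : (4:ℕ) ≠ 0))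
      exact H.trans_eq (by abel)
    · -- A p=b p'=b q=Z q'=Z
      have H : (0:Λ) < (4 • (β)) := (nsmul_pos hb (by norm_num : (4:ℕ) ≠ 0))
      exact H.trans_eq (by abel)
  · have hgle : γ ≤ α + β := hmax ▸ le_max_left γ δ
    have hdle : δ ≤ α + β := hmax ▸ le_max_right γ δ
    rcases max_choice γ δ with hc | hc
    · rw [hc] at hmax
      have hnn : 0 ≤ α + β - δ := sub_nonneg.2 hdle
      rcases hp with hp | hp <;> rcases hp' with hp' | hp' <;>
        rcases hq with hq | hq | hq <;> rcases hq' with hq' | hq' | hq' <;>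
        rw [hp, hp', hq, hq', hmax]
      · -- B1 p=a p'=a q=X q'=X
        have H : (0:Λ) < (2 • (δ + α - β)) := (nsmul_pos hdb (by norm_num : (2:ℕ) ≠ 0))
        exact H.trans_eq (by abel)
      · -- B1 p=a p'=a q=X q'=Y
        have H : (0:Λ) < (4 • (α)) := (nsmul_pos ha (by norm_num : (4:ℕ) ≠ 0))
        exact H.trans_eq (by abel)
      · -- B1 p=a p'=a q=X q'=Z
        have H : (0:Λ) < (2 • (δ + α - β)) := (nsmul_pos hdb (by norm_num : (2:ℕ) ≠ 0))
        exact H.trans_eq (by abel)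
      · -- B1 p=a p'=a q=Y q'=X
        have H : (0:Λ) < (4 • (α)) := (nsmul_pos ha (by norm_num : (4:ℕ) ≠ 0))
        exact H.trans_eq (by abel)
      · -- B1 p=a p'=a q=Y q'=Y
        have H : (0:Λ) < (4 • (α)) + (2 • (α + β - δ)) := (add_pos_of_pos_of_nonneg (nsmul_pos ha (by norm_num : (4:ℕ) ≠ 0)) (nsmul_nonneg hnn 2))
        exact H.trans_eq (by abel)
      · -- B1 p=a p'=a q=Y q'=Z
        have H : (0:Λ) < (4 • (α)) := (nsmul_pos ha (by norm_num : (4:ℕ) ≠ 0))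
        exact H.trans_eq (by abel)
      · -- B1 p=a p'=a q=Z q'=X
        have H : (0:Λ) < (2 • (δ + α - β)) := (nsmul_pos hdb (by norm_num : (2:ℕ) ≠ 0))
        exact H.trans_eq (by abel)
      · -- B1 p=a p'=a q=Z q'=Y
        have H : (0:Λ) < (4 • (α)) := (nsmul_pos ha (by norm_num : (4:ℕ) ≠ 0))
        exact H.trans_eq (by abel)
      · -- B1 p=a p'=a q=Z q'=Z
        have H : (0:Λ) < (2 • (δ + α - β)) := (nsmul_pos hdb (by norm_num : (2:ℕ) ≠ 0))
        exact H.trans_eq (by abel)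
      · -- B1 p=a p'=b q=X q'=X
        have H : (0:Λ) < (δ - α + β) + (δ + α - β) := (add_pos hda hdb)
        exact H.trans_eq (by abel)
      · -- B1 p=a p'=b q=X q'=Y
        have H : (0:Λ) < (2 • (α)) + (2 • (β)) := (add_pos (nsmul_pos ha (by norm_num : (2:ℕ) ≠ 0)) (nsmul_pos hb (by norm_num : (2:ℕ) ≠ 0)))
        exact H.trans_eq (by abel)
      · -- B1 p=a p'=b q=X q'=Z
        have H : (0:Λ) < (δ - α + β) + (δ + α - β) := (add_pos hda hdb)
        exact H.trans_eq (by abel)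
      · -- B1 p=a p'=b q=Y q'=X
        have H : (0:Λ) < (2 • (α)) + (2 • (β)) := (add_pos (nsmul_pos ha (by norm_num : (2:ℕ) ≠ 0)) (nsmul_pos hb (by norm_num : (2:ℕ) ≠ 0)))
        exact H.trans_eq (by abel)
      · -- B1 p=a p'=b q=Y q'=Y
        have H : (0:Λ) < (2 • (α)) + (2 • (β)) + (2 • (α + β - δ)) := (add_pos_of_pos_of_nonneg (add_pos (nsmul_pos ha (by norm_num : (2:ℕ) ≠ 0)) (nsmul_pos hb (by norm_num : (2:ℕ) ≠ 0))) (nsmul_nonneg hnn 2))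
        exact H.trans_eq (by abel)
      · -- B1 p=a p'=b q=Y q'=Z
        have H : (0:Λ) < (2 • (α)) + (2 • (β)) := (add_pos (nsmul_pos ha (by norm_num : (2:ℕ) ≠ 0)) (nsmul_pos hb (by norm_num : (2:ℕ) ≠ 0)))
        exact H.trans_eq (by abel)
      · -- B1 p=a p'=b q=Z q'=X
        have H : (0:Λ) < (δ - α + β) + (δ + α - β) := (add_pos hda hdb)
        exact H.trans_eq (by abel)
      · -- B1 p=a p'=b q=Z q'=Y
        have H : (0:Λ) < (2 • (α)) + (2 • (β)) := (add_pos (nsmul_pos ha (by norm_num : (2:ℕ) ≠ 0)) (nsmul_pos hb (by norm_num : (2:ℕ) ≠ 0)))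
        exact H.trans_eq (by abel)
      · -- B1 p=a p'=b q=Z q'=Z
        have H : (0:Λ) < (δ - α + β) + (δ + α - β) := (add_pos hda hdb)
        exact H.trans_eq (by abel)
      · -- B1 p=b p'=a q=X q'=X
        have H : (0:Λ) < (δ - α + β) + (δ + α - β) := (add_pos hda hdb)
        exact H.trans_eq (by abel)
      · -- B1 p=b p'=a q=X q'=Y
        have H : (0:Λ) < (2 • (α)) + (2 • (β)) := (add_pos (nsmul_pos ha (by norm_num : (2:ℕ) ≠ 0)) (nsmul_pos hb (by norm_num : (2:ℕ) ≠ 0)))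
        exact H.trans_eq (by abel)
      · -- B1 p=b p'=a q=X q'=Z
        have H : (0:Λ) < (δ - α + β) + (δ + α - β) := (add_pos hda hdb)
        exact H.trans_eq (by abel)
      · -- B1 p=b p'=a q=Y q'=X
        have H : (0:Λ) < (2 • (α)) + (2 • (β)) := (add_pos (nsmul_pos ha (by norm_num : (2:ℕ) ≠ 0)) (nsmul_pos hb (by norm_num : (2:ℕ) ≠ 0)))
        exact H.trans_eq (by abel)
      · -- B1 p=b p'=a q=Y q'=Y
        have H : (0:Λ) < (2 • (α)) + (2 • (β)) + (2 • (α + β - δ)) := (add_pos_of_pos_of_nonneg (add_pos (nsmul_pos ha (by norm_num : (2:ℕ) ≠ 0)) (nsmul_pos hb (by norm_num : (2:ℕ) ≠ 0))) (nsmul_nonneg hnn 2))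
        exact H.trans_eq (by abel)
      · -- B1 p=b p'=a q=Y q'=Z
        have H : (0:Λ) < (2 • (α)) + (2 • (β)) := (add_pos (nsmul_pos ha (by norm_num : (2:ℕ) ≠ 0)) (nsmul_pos hb (by norm_num : (2:ℕ) ≠ 0)))
        exact H.trans_eq (by abel)
      · -- B1 p=b p'=a q=Z q'=X
        have H : (0:Λ) < (δ - α + β) + (δ + α - β) := (add_pos hda hdb)
        exact H.trans_eq (by abel)
      · -- B1 p=b p'=a q=Z q'=Y
        have H : (0:Λ) < (2 • (α)) + (2 • (β)) := (add_pos (nsmul_pos ha (by norm_num : (2:ℕ) ≠ 0)) (nsmul_pos hb (by norm_num : (2:ℕ) ≠ 0)))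
        exact H.trans_eq (by abel)
      · -- B1 p=b p'=a q=Z q'=Z
        have H : (0:Λ) < (δ - α + β) + (δ + α - β) := (add_pos hda hdb)
        exact H.trans_eq (by abel)
      · -- B1 p=b p'=b q=X q'=X
        have H : (0:Λ) < (2 • (δ - α + β)) := (nsmul_pos hda (by norm_num : (2:ℕ) ≠ 0))
        exact H.trans_eq (by abel)
      · -- B1 p=b p'=b q=X q'=Y
        have H : (0:Λ) < (4 • (β)) := (nsmul_pos hb (by norm_num : (4:ℕ) ≠ 0))
        exact H.trans_eq (by abel)
      · -- B1 p=b p'=b q=X q'=Z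
        have H : (0:Λ) < (2 • (δ - α + β)) := (nsmul_pos hda (by norm_num : (2:ℕ) ≠ 0))
        exact H.trans_eq (by abel)
      · -- B1 p=b p'=b q=Y q'=X
        have H : (0:Λ) < (4 • (β)) := (nsmul_pos hb (by norm_num : (4:ℕ) ≠ 0))
        exact H.trans_eq (by abel)
      · -- B1 p=b p'=b q=Y q'=Y
        have H : (0:Λ) < (4 • (β)) + (2 • (α + β - δ)) := (add_pos_of_pos_of_nonneg (nsmul_pos hb (by norm_num : (4:ℕ) ≠ 0)) (nsmul_nonneg hnn 2))
        exact H.trans_eq (by abel)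
      · -- B1 p=b p'=b q=Y q'=Z
        have H : (0:Λ) < (4 • (β)) := (nsmul_pos hb (by norm_num : (4:ℕ) ≠ 0))
        exact H.trans_eq (by abel)
      · -- B1 p=b p'=b q=Z q'=X
        have H : (0:Λ) < (2 • (δ - α + β)) := (nsmul_pos hda (by norm_num : (2:ℕ) ≠ 0))
        exact H.trans_eq (by abel)
      · -- B1 p=b p'=b q=Z q'=Y
        have H : (0:Λ) < (4 • (β)) := (nsmul_pos hb (by norm_num : (4:ℕ) ≠ 0))
        exact H.trans_eq (by abel)
      · -- B1 p=b p'=b q=Z q'=Z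
        have H : (0:Λ) < (2 • (δ - α + β)) := (nsmul_pos hda (by norm_num : (2:ℕ) ≠ 0))
        exact H.trans_eq (by abel)
    · rw [hc] at hmax
      have hnn : 0 ≤ α + β - γ := sub_nonneg.2 hgle
      rcases hp with hp | hp <;> rcases hp' with hp' | hp' <;>
        rcases hq with hq | hq | hq <;> rcases hq' with hq' | hq' | hq' <;>
        rw [hp, hp', hq, hq', hmax]
      · -- B2 p=a p'=a q=X q'=X
        have H : (0:Λ) < (2 • (γ + α - β)) := (nsmul_pos hgb (by norm_num : (2:ℕ) ≠ 0))
        exact H.trans_eq (by abel)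
      · -- B2 p=a p'=a q=X q'=Y
        have H : (0:Λ) < (2 • (γ + α - β)) := (nsmul_pos hgb (by norm_num : (2:ℕ) ≠ 0))
        exact H.trans_eq (by abel)
      · -- B2 p=a p'=a q=X q'=Z
        have H : (0:Λ) < (4 • (α)) := (nsmul_pos ha (by norm_num : (4:ℕ) ≠ 0))
        exact H.trans_eq (by abel)
      · -- B2 p=a p'=a q=Y q'=X
        have H : (0:Λ) < (2 • (γ + α - β)) := (nsmul_pos hgb (by norm_num : (2:ℕ) ≠ 0))
        exact H.trans_eq (by abel)
      · -- B2 p=a p'=a q=Y q'=Y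
        have H : (0:Λ) < (2 • (γ + α - β)) := (nsmul_pos hgb (by norm_num : (2:ℕ) ≠ 0))
        exact H.trans_eq (by abel)
      · -- B2 p=a p'=a q=Y q'=Z
        have H : (0:Λ) < (4 • (α)) := (nsmul_pos ha (by norm_num : (4:ℕ) ≠ 0))
        exact H.trans_eq (by abel)
      · -- B2 p=a p'=a q=Z q'=X
        have H : (0:Λ) < (4 • (α)) := (nsmul_pos ha (by norm_num : (4:ℕ) ≠ 0))
        exact H.trans_eq (by abel)
      · -- B2 p=a p'=a q=Z q'=Y
        have H : (0:Λ) < (4 • (α)) := (nsmul_pos ha (by norm_num : (4:ℕ) ≠ 0))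
        exact H.trans_eq (by abel)
      · -- B2 p=a p'=a q=Z q'=Z
        have H : (0:Λ) < (4 • (α)) + (2 • (α + β - γ)) := (add_pos_of_pos_of_nonneg (nsmul_pos ha (by norm_num : (4:ℕ) ≠ 0)) (nsmul_nonneg hnn 2))
        exact H.trans_eq (by abel)
      · -- B2 p=a p'=b q=X q'=X
        have H : (0:Λ) < (γ - α + β) + (γ + α - β) := (add_pos hga hgb)
        exact H.trans_eq (by abel)
      · -- B2 p=a p'=b q=X q'=Y
        have H : (0:Λ) < (γ - α + β) + (γ + α - β) := (add_pos hga hgb)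
        exact H.trans_eq (by abel)
      · -- B2 p=a p'=b q=X q'=Z
        have H : (0:Λ) < (2 • (α)) + (2 • (β)) := (add_pos (nsmul_pos ha (by norm_num : (2:ℕ) ≠ 0)) (nsmul_pos hb (by norm_num : (2:ℕ) ≠ 0)))
        exact H.trans_eq (by abel)
      · -- B2 p=a p'=b q=Y q'=X
        have H : (0:Λ) < (γ - α + β) + (γ + α - β) := (add_pos hga hgb)
        exact H.trans_eq (by abel)
      · -- B2 p=a p'=b q=Y q'=Y
        have H : (0:Λ) < (γ - α + β) + (γ + α - β) := (add_pos hga hgb)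
        exact H.trans_eq (by abel)
      · -- B2 p=a p'=b q=Y q'=Z
        have H : (0:Λ) < (2 • (α)) + (2 • (β)) := (add_pos (nsmul_pos ha (by norm_num : (2:ℕ) ≠ 0)) (nsmul_pos hb (by norm_num : (2:ℕ) ≠ 0)))
        exact H.trans_eq (by abel)
      · -- B2 p=a p'=b q=Z q'=X
        have H : (0:Λ) < (2 • (α)) + (2 • (β)) := (add_pos (nsmul_pos ha (by norm_num : (2:ℕ) ≠ 0)) (nsmul_pos hb (by norm_num : (2:ℕ) ≠ 0)))
        exact H.trans_eq (by abel)
      · -- B2 p=a p'=b q=Z q'=Y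
        have H : (0:Λ) < (2 • (α)) + (2 • (β)) := (add_pos (nsmul_pos ha (by norm_num : (2:ℕ) ≠ 0)) (nsmul_pos hb (by norm_num : (2:ℕ) ≠ 0)))
        exact H.trans_eq (by abel)
      · -- B2 p=a p'=b q=Z q'=Z
        have H : (0:Λ) < (2 • (α)) + (2 • (β)) + (2 • (α + β - γ)) := (add_pos_of_pos_of_nonneg (add_pos (nsmul_pos ha (by norm_num : (2:ℕ) ≠ 0)) (nsmul_pos hb (by norm_num : (2:ℕ) ≠ 0))) (nsmul_nonneg hnn 2))
        exact H.trans_eq (by abel)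
      · -- B2 p=b p'=a q=X q'=X
        have H : (0:Λ) < (γ - α + β) + (γ + α - β) := (add_pos hga hgb)
        exact H.trans_eq (by abel)
      · -- B2 p=b p'=a q=X q'=Y
        have H : (0:Λ) < (γ - α + β) + (γ + α - β) := (add_pos hga hgb)
        exact H.trans_eq (by abel)
      · -- B2 p=b p'=a q=X q'=Z
        have H : (0:Λ) < (2 • (α)) + (2 • (β)) := (add_pos (nsmul_pos ha (by norm_num : (2:ℕ) ≠ 0)) (nsmul_pos hb (by norm_num : (2:ℕ) ≠ 0)))
        exact H.trans_eq (by abel)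
      · -- B2 p=b p'=a q=Y q'=X
        have H : (0:Λ) < (γ - α + β) + (γ + α - β) := (add_pos hga hgb)
        exact H.trans_eq (by abel)
      · -- B2 p=b p'=a q=Y q'=Y
        have H : (0:Λ) < (γ - α + β) + (γ + α - β) := (add_pos hga hgb)
        exact H.trans_eq (by abel)
      · -- B2 p=b p'=a q=Y q'=Z
        have H : (0:Λ) < (2 • (α)) + (2 • (β)) := (add_pos (nsmul_pos ha (by norm_num : (2:ℕ) ≠ 0)) (nsmul_pos hb (by norm_num : (2:ℕ) ≠ 0)))
        exact H.trans_eq (by abel)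
      · -- B2 p=b p'=a q=Z q'=X
        have H : (0:Λ) < (2 • (α)) + (2 • (β)) := (add_pos (nsmul_pos ha (by norm_num : (2:ℕ) ≠ 0)) (nsmul_pos hb (by norm_num : (2:ℕ) ≠ 0)))
        exact H.trans_eq (by abel)
      · -- B2 p=b p'=a q=Z q'=Y
        have H : (0:Λ) < (2 • (α)) + (2 • (β)) := (add_pos (nsmul_pos ha (by norm_num : (2:ℕ) ≠ 0)) (nsmul_pos hb (by norm_num : (2:ℕ) ≠ 0)))
        exact H.trans_eq (by abel)
      · -- B2 p=b p'=a q=Z q'=Z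
        have H : (0:Λ) < (2 • (α)) + (2 • (β)) + (2 • (α + β - γ)) := (add_pos_of_pos_of_nonneg (add_pos (nsmul_pos ha (by norm_num : (2:ℕ) ≠ 0)) (nsmul_pos hb (by norm_num : (2:ℕ) ≠ 0))) (nsmul_nonneg hnn 2))
        exact H.trans_eq (by abel)
      · -- B2 p=b p'=b q=X q'=X
        have H : (0:Λ) < (2 • (γ - α + β)) := (nsmul_pos hga (by norm_num : (2:ℕ) ≠ 0))
        exact H.trans_eq (by abel)
      · -- B2 p=b p'=b q=X q'=Y
        have H : (0:Λ) < (2 • (γ - α + β)) := (nsmul_pos hga (by norm_num : (2:ℕ) ≠ 0))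
        exact H.trans_eq (by abel)
      · -- B2 p=b p'=b q=X q'=Z
        have H : (0:Λ) < (4 • (β)) := (nsmul_pos hb (by norm_num : (4:ℕ) ≠ 0))
        exact H.trans_eq (by abel)
      · -- B2 p=b p'=b q=Y q'=X
        have H : (0:Λ) < (2 • (γ - α + β)) := (nsmul_pos hga (by norm_num : (2:ℕ) ≠ 0))
        exact H.trans_eq (by abel)
      · -- B2 p=b p'=b q=Y q'=Y
        have H : (0:Λ) < (2 • (γ - α + β)) := (nsmul_pos hga (by norm_num : (2:ℕ) ≠ 0))
        exact H.trans_eq (by abel)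
      · -- B2 p=b p'=b q=Y q'=Z
        have H : (0:Λ) < (4 • (β)) := (nsmul_pos hb (by norm_num : (4:ℕ) ≠ 0))
        exact H.trans_eq (by abel)
      · -- B2 p=b p'=b q=Z q'=X
        have H : (0:Λ) < (4 • (β)) := (nsmul_pos hb (by norm_num : (4:ℕ) ≠ 0))
        exact H.trans_eq (by abel)
      · -- B2 p=b p'=b q=Z q'=Y
        have H : (0:Λ) < (4 • (β)) := (nsmul_pos hb (by norm_num : (4:ℕ) ≠ 0))
        exact H.trans_eq (by abel)
      · -- B2 p=b p'=b q=Z q'=Z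
        have H : (0:Λ) < (4 • (β)) + (2 • (α + β - γ)) := (add_pos_of_pos_of_nonneg (nsmul_pos hb (by norm_num : (4:ℕ) ≠ 0)) (nsmul_nonneg hnn 2))
        exact H.trans_eq (by abel)

end S19

/-- the Claim in the proof of Proposition `prop:existence`: under
(C1)–(C3), if `g'`, `h'`, `W₊ = g'wh'w⁻¹`, `W₋ = g'wh'⁻¹w⁻¹` are all cyclically
reduced (with `g', h', w` nonempty), then `φ(W₊) = φ(W₋) > φ(g') + φ(h')` and
`φ(W₊) - φ(g') - φ(h') ∈ 4Λ`. -/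
theorem statement19 {Λ : Type*} [AddCommGroup Λ] [LinearOrder Λ] [IsOrderedAddMonoid Λ] [Nontrivial Λ]
    (α β γ δ : Λ)
    (hC1a : ∃ c : Λ, γ - α - β = c + c) (hC1b : ∃ c : Λ, δ - α - β = c + c)
    (hC2 : (γ = δ ∧ α + β < γ) ∨ max γ δ = α + β)
    (hC3 : 0 < α ∧ 0 < β ∧ |α - β| < min γ δ)
    (g' h' w : List Letter) (hg' : g' ≠ []) (hh' : h' ≠ []) (hw : w ≠ [])
    (hg'cr : CyclicallyReduced g') (hh'cr : CyclicallyReduced h')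
    (hWp : CyclicallyReduced (g' ++ w ++ h' ++ wordInv w))
    (hWm : CyclicallyReduced (g' ++ w ++ wordInv h' ++ wordInv w)) :
    phi (fTable α β γ δ) (g' ++ w ++ h' ++ wordInv w)
        = phi (fTable α β γ δ) (g' ++ w ++ wordInv h' ++ wordInv w) ∧
    phi (fTable α β γ δ) g' + phi (fTable α β γ δ) h'
        < phi (fTable α β γ δ) (g' ++ w ++ h' ++ wordInv w) ∧
    ∃ c : Λ, phi (fTable α β γ δ) (g' ++ w ++ h' ++ wordInv w)
        - phi (fTable α β γ δ) g' - phi (fTable α β γ δ) h' = c + c + c + c := by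
  obtain ⟨cγ, hC1a'⟩ := hC1a
  obtain ⟨cδ, hC1b'⟩ := hC1b
  have hγ' : γ = α + β + (cγ + cγ) := by rw [← hC1a']; abel
  have hδ' : δ = α + β + (cδ + cδ) := by rw [← hC1b']; abel
  obtain ⟨ha, hb, habs⟩ := hC3
  have habs' := lt_min_iff.1 habs
  have hga : 0 < γ - α + β := by
    have h1 : α - β < γ := lt_of_le_of_lt (le_abs_self _) habs'.1
    exact (sub_pos.2 h1).trans_eq (by abel)
  have hba : β - α ≤ |α - β| := by
    rw [← neg_sub α β]; exact neg_le_abs _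
  have hgb : 0 < γ + α - β := by
    have h1 : β - α < γ := lt_of_le_of_lt hba habs'.1
    exact (sub_pos.2 h1).trans_eq (by abel)
  have hda : 0 < δ - α + β := by
    have h1 : α - β < δ := lt_of_le_of_lt (le_abs_self _) habs'.2
    exact (sub_pos.2 h1).trans_eq (by abel)
  have hdb : 0 < δ + α - β := by
    have h1 : β - α < δ := lt_of_le_of_lt hba habs'.2
    exact (sub_pos.2 h1).trans_eq (by abel)
  have hgpos : 0 < γ := S19.pos_of_add_self ((add_pos hga hgb).trans_eq (by abel))
  have hdpos : 0 < δ := S19.pos_of_add_self ((add_pos hda hdb).trans_eq (by abel))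
  have hfinv : ∀ x y, fTable α β γ δ x y = fTable α β γ δ y.inv x.inv :=
    S19.fTable_inv α β γ δ
  have fpos : ∀ x y, y ≠ x.inv → 0 < fTable α β γ δ x y :=
    S19.fTable_pos ha hb hgpos hdpos
  -- nonemptiness
  have hwi : wordInv w ≠ [] := S19.wordInv_ne_nil hw
  have hwih : wordInv h' ≠ [] := S19.wordInv_ne_nil hh'
  have hL1 : g' ++ w ≠ [] := by simp [hg']
  have hL2 : g' ++ w ++ h' ≠ [] := by simp [hg']
  have hWpne : g' ++ w ++ h' ++ wordInv w ≠ [] := by simp [hg']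
  have hL2m : g' ++ w ++ wordInv h' ≠ [] := by simp [hg']
  have hWmne : g' ++ w ++ wordInv h' ++ wordInv w ≠ [] := by simp [hg']
  -- heads and lasts
  have hH1 : (g' ++ w).head hL1 = g'.head hg' := List.head_append_of_ne_nil hg'
  have hGL1 : (g' ++ w).getLast hL1 = w.getLast hw := List.getLast_append_of_ne_nil _ hw
  have hH2 : (g' ++ w ++ h').head hL2 = g'.head hg' := by
    rw [List.head_append_of_ne_nil hL1, hH1]
  have hGL2 : (g' ++ w ++ h').getLast hL2 = h'.getLast hh' := List.getLast_append_of_ne_nil _ hh'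
  have hHWp : (g' ++ w ++ h' ++ wordInv w).head hWpne = g'.head hg' := by
    rw [List.head_append_of_ne_nil hL2, hH2]
  have hLWp : (g' ++ w ++ h' ++ wordInv w).getLast hWpne = (w.head hw).inv := by
    rw [List.getLast_append_of_ne_nil _ hwi, S19.getLast_wordInv w hw]
  have hH2m : (g' ++ w ++ wordInv h').head hL2m = g'.head hg' := by
    rw [List.head_append_of_ne_nil hL1, hH1]
  have hGL2m : (g' ++ w ++ wordInv h').getLast hL2m = (h'.head hh').inv := by
    rw [List.getLast_append_of_ne_nil _ hwih, S19.getLast_wordInv h' hh']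
  have hHWm : (g' ++ w ++ wordInv h' ++ wordInv w).head hWmne = g'.head hg' := by
    rw [List.head_append_of_ne_nil hL2m, hH2m]
  have hLWm : (g' ++ w ++ wordInv h' ++ wordInv w).getLast hWmne = (w.head hw).inv := by
    rw [List.getLast_append_of_ne_nil _ hwi, S19.getLast_wordInv w hw]
  -- expansions
  have e1 : phi (fTable α β γ δ) (g' ++ w ++ h' ++ wordInv w)
      = pairSum (fTable α β γ δ) g' + pairSum (fTable α β γ δ) h'
        + (pairSum (fTable α β γ δ) w + pairSum (fTable α β γ δ) w)
        + (fTable α β γ δ (g'.getLast hg') (w.head hw)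
            + fTable α β γ δ (w.head hw).inv (g'.head hg')
            - fTable α β γ δ (g'.getLast hg') (g'.head hg'))
        + (fTable α β γ δ (h'.getLast hh') (w.getLast hw).inv
            + fTable α β γ δ (w.getLast hw) (h'.head hh')
            - fTable α β γ δ (h'.getLast hh') (h'.head hh'))
        + fTable α β γ δ (g'.getLast hg') (g'.head hg')
        + fTable α β γ δ (h'.getLast hh') (h'.head hh') := by
    rw [S19.phi_eq _ _ hWpne, S19.pairSum_append _ _ _ hL2 hwi,
      S19.pairSum_append _ _ _ hL1 hh', S19.pairSum_append _ g' w hg' hw,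
      S19.pairSum_wordInv _ hfinv w, hGL1, hGL2, S19.head_wordInv w hw, hLWp, hHWp]
    abel
  have e2 : phi (fTable α β γ δ) (g' ++ w ++ wordInv h' ++ wordInv w)
      = pairSum (fTable α β γ δ) g' + pairSum (fTable α β γ δ) h'
        + (pairSum (fTable α β γ δ) w + pairSum (fTable α β γ δ) w)
        + fTable α β γ δ (g'.getLast hg') (w.head hw)
        + fTable α β γ δ (w.head hw).inv (g'.head hg')
        + fTable α β γ δ (w.getLast hw) (h'.getLast hh').inv
        + fTable α β γ δ (h'.head hh').inv (w.getLast hw).inv := by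
    rw [S19.phi_eq _ _ hWmne, S19.pairSum_append _ _ _ hL2m hwi,
      S19.pairSum_append _ _ _ hL1 hwih, S19.pairSum_append _ g' w hg' hw,
      S19.pairSum_wordInv _ hfinv w, S19.pairSum_wordInv _ hfinv h',
      hGL1, hGL2m, S19.head_wordInv w hw, S19.head_wordInv h' hh', hLWm, hHWm]
    abel
  -- chain conditions
  have hc1 := List.isChain_append.mp hWp.1
  have hc2 := List.isChain_append.mp hc1.1
  have hc3 := List.isChain_append.mp hc2.1
  have hcw : w.Chain' (fun u v => v ≠ u.inv) := hc3.2.1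
  have j1 : w.head hw ≠ (g'.getLast hg').inv := S19.chain'_junction hc2.1 hg' hw
  have j2 : h'.head hh' ≠ (w.getLast hw).inv := by
    have := S19.chain'_junction hc1.1 hL1 hh'
    rwa [hGL1] at this
  have j3 : (w.getLast hw).inv ≠ (h'.getLast hh').inv := by
    have := S19.chain'_junction hWp.1 hL2 hwi
    rwa [hGL2, S19.head_wordInv w hw] at this
  have j4 : w.head hw ≠ g'.head hg' := by
    intro hEq
    have := hWp.2 hWpne
    rw [hLWp, hHWp, hEq] at this
    exact this rfl
  -- corners
  obtain ⟨q, hqopt, hcor1⟩ := S19.corner α β γ δ (g'.getLast hg') (g'.head hg')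
    (w.head hw) j1 j4 (hg'cr.2 hg')
  obtain ⟨q', hq'opt, hcor2⟩ := S19.corner α β γ δ (h'.getLast hh') (h'.head hh')
    ((w.getLast hw).inv) j3 (Ne.symm j2) (hh'cr.2 hh')
  rw [S19.inv_inv, S19.chiL_inv] at hcor2
  -- pairSum facts
  have hPw : 0 ≤ pairSum (fTable α β γ δ) w := S19.pairSum_nonneg fpos w hcw
  obtain ⟨c0, hc0⟩ := S19.pairSum_half (fTable α β γ δ) (S19.chiL α β)
    (S19.fTable_decomp cγ cδ hγ' hδ') w hw
  obtain ⟨e, he⟩ := S19.q_sum hγ' hδ' hqopt hq'opt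
  have hppos : 0 < S19.chiL α β (w.head hw) + S19.chiL α β (w.head hw) + q
      + (S19.chiL α β (w.getLast hw) + S19.chiL α β (w.getLast hw) + q') :=
    S19.pospair ha hb hga hgb hda hdb hC2 (S19.chiL_or α β (w.head hw))
      (S19.chiL_or α β (w.getLast hw)) hqopt hq'opt
  refine ⟨?_, ?_, ?_⟩
  · -- equality
    have c1 : fTable α β γ δ (w.getLast hw) (h'.head hh')
        = fTable α β γ δ (h'.head hh').inv (w.getLast hw).inv := hfinv _ _
    have c2 : fTable α β γ δ (h'.getLast hh') (w.getLast hw).inv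
        = fTable α β γ δ (w.getLast hw) (h'.getLast hh').inv := by
      rw [hfinv (w.getLast hw) ((h'.getLast hh').inv), S19.inv_inv]
    rw [e1, e2, c1, c2]
    abel
  · -- inequality
    rw [S19.phi_eq _ g' hg', S19.phi_eq _ h' hh', e1, ← sub_pos]
    have key : 0 < (fTable α β γ δ (g'.getLast hg') (w.head hw)
            + fTable α β γ δ (w.head hw).inv (g'.head hg')
            - fTable α β γ δ (g'.getLast hg') (g'.head hg'))
        + (fTable α β γ δ (h'.getLast hh') (w.getLast hw).inv
            + fTable α β γ δ (w.getLast hw) (h'.head hh')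
            - fTable α β γ δ (h'.getLast hh') (h'.head hh'))
        + (pairSum (fTable α β γ δ) w + pairSum (fTable α β γ δ) w) := by
      rw [hcor1, hcor2]
      exact add_pos_of_pos_of_nonneg hppos (add_nonneg hPw hPw)
    exact key.trans_eq (by abel)
  · -- 4Λ
    refine ⟨c0 + e, ?_⟩
    rw [e1, S19.phi_eq _ g' hg', S19.phi_eq _ h' hh', hcor1, hcor2]
    have hc0' : pairSum (fTable α β γ δ) w
        = c0 + c0 - S19.chiL α β (w.head hw) - S19.chiL α β (w.getLast hw) := by
      rw [← hc0]; abel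
    have he' : q' = e + e + e + e - q := by rw [← he]; abel
    rw [hc0', he']
    abel
end
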